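/- arXiv:math/9901049 — 5 statements merged into one kernel-verified Lean document; each statement's English description precedes it below -/
import Mathlib

section
/- Let (W,S) be a Coxeter system with S finite, and let G be a finite subgroup of W. Then there exist w ∈ W and a subset A ⊆ S such that W_A is finite and G ⊆ wW_Aw^{-1}; that is, every finite subgroup of W is contained in a finite parabolic subgroup of (W,S). -/
namespace TitsFinSub
open CoxeterSystem Real
open scoped Classical

set_option linter.unusedSectionVars false

variable {B : Type*} [Fintype B]

/-- entries of the bilinear form -/
noncomputable def ka (M : CoxeterMatrix B) (i j : B) : ℝ := - Real.cos (Real.pi / (M i j))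

lemma ka_diag (M : CoxeterMatrix B) (i : B) : ka M i i = 1 := by
  simp [ka, M.diagonal i]

lemma ka_symm (M : CoxeterMatrix B) (i j : B) : ka M i j = ka M j i := by
  rw [ka, ka, M.symmetric i j]

/-- the simple root -/
noncomputable def al (i : B) : B → ℝ := fun b => if b = i then 1 else 0

lemma al_apply_self (i : B) : al i i = 1 := by simp [al]

lemma al_nonneg (i : B) (b : B) : 0 ≤ al i b := by
  unfold al; split <;> norm_num

variable (M : CoxeterMatrix B)

/-- B(α_i, v) -/
noncomputable def bv (i : B) (v : B → ℝ) : ℝ := ∑ j, ka M i j * v j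

lemma bv_add (i : B) (u v : B → ℝ) : bv M i (u + v) = bv M i u + bv M i v := by
  simp [bv, mul_add, Finset.sum_add_distrib]

lemma bv_smul (i : B) (c : ℝ) (v : B → ℝ) : bv M i (c • v) = c * bv M i v := by
  simp [bv, Finset.mul_sum]; congr 1; ext j; ring

lemma bv_sub (i : B) (u v : B → ℝ) : bv M i (u - v) = bv M i u - bv M i v := by
  simp [bv, mul_sub, Finset.sum_sub_distrib]

lemma bv_al (i j : B) : bv M i (al j) = ka M i j := by
  simp [bv, al, mul_ite]

/-- the reflection σ_i as a linear map -/
noncomputable def sig (i : B) : (B → ℝ) →ₗ[ℝ] (B → ℝ) where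
  toFun v := v - (2 * bv M i v) • al i
  map_add' u v := by
    rw [bv_add]; ext b; simp; ring
  map_smul' c v := by
    rw [bv_smul]; ext b; simp; ring

lemma sig_apply (i : B) (v : B → ℝ) : sig M i v = v - (2 * bv M i v) • al i := rfl

lemma bv_sig (i : B) (v : B → ℝ) : bv M i (sig M i v) = - bv M i v := by
  rw [sig_apply, bv_sub, bv_smul, bv_al, ka_diag]; ring

lemma sig_sig (i : B) (v : B → ℝ) : sig M i (sig M i v) = v := by
  rw [sig_apply (v := sig M i v), bv_sig, sig_apply]
  ext b; simp

lemma sig_al_self (i : B) : sig M i (al i) = - al i := by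
  rw [sig_apply, bv_al, ka_diag]; ext b; simp; ring

lemma sig_al (i j : B) : sig M i (al j) = al j - (2 * ka M i j) • al i := by
  rw [sig_apply, bv_al]

lemma sig_fix (i : B) (v : B → ℝ) (h : bv M i v = 0) : sig M i v = v := by
  rw [sig_apply, h]; simp

/-- the bilinear form -/
noncomputable def Bf (u v : B → ℝ) : ℝ := ∑ i, u i * bv M i v

lemma Bf_symm (u v : B → ℝ) : Bf M u v = Bf M v u := by
  unfold Bf bv
  simp_rw [Finset.mul_sum]
  rw [Finset.sum_comm]
  congr 1; ext i; congr 1; ext j; rw [ka_symm]; ring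

lemma Bf_al_left (i : B) (v : B → ℝ) : Bf M (al i) v = bv M i v := by
  simp [Bf, al, ite_mul]

lemma Bf_al_right (i : B) (v : B → ℝ) : Bf M v (al i) = bv M i v := by
  rw [Bf_symm, Bf_al_left]

lemma Bf_sub_left (u u' v : B → ℝ) : Bf M (u - u') v = Bf M u v - Bf M u' v := by
  simp [Bf, sub_mul, Finset.sum_sub_distrib]

lemma Bf_smul_left (c : ℝ) (u v : B → ℝ) : Bf M (c • u) v = c * Bf M u v := by
  simp [Bf, Finset.mul_sum]; congr 1; ext i; ring

lemma Bf_sub_right (u v v' : B → ℝ) : Bf M u (v - v') = Bf M u v - Bf M u v' := by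
  rw [Bf_symm, Bf_sub_left, Bf_symm M v u, Bf_symm M v' u]

lemma Bf_smul_right (c : ℝ) (u v : B → ℝ) : Bf M u (c • v) = c * Bf M u v := by
  rw [Bf_symm, Bf_smul_left, Bf_symm]

lemma Bf_sig (i : B) (u v : B → ℝ) : Bf M (sig M i u) (sig M i v) = Bf M u v := by
  rw [sig_apply, sig_apply]
  simp only [Bf_sub_left, Bf_sub_right, Bf_smul_left, Bf_smul_right, Bf_al_left, Bf_al_right,
    bv_sub, bv_smul, bv_al, ka_diag]
  ring

end TitsFinSub

namespace TitsFinSub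
open CoxeterSystem Real
open scoped Classical

set_option linter.unusedSectionVars false
set_option maxHeartbeats 1000000

variable {B : Type*} [Fintype B] (M : CoxeterMatrix B)

/-- abbreviation for the unit group of endomorphisms -/
abbrev UE (B : Type*) [Fintype B] := ((B → ℝ) →ₗ[ℝ] (B → ℝ))ˣ

/-- application of a unit endomorphism -/
def uap (u : UE B) (v : B → ℝ) : B → ℝ := (u : (B → ℝ) →ₗ[ℝ] (B → ℝ)) v

lemma uap_mul (u u' : UE B) (v : B → ℝ) : uap (u * u') v = uap u (uap u' v) := by
  unfold uap; rw [Units.val_mul, Module.End.mul_apply]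

lemma uap_one (v : B → ℝ) : uap (1 : UE B) v = v := by
  unfold uap; rw [Units.val_one, Module.End.one_apply]

lemma uap_add (u : UE B) (v v' : B → ℝ) : uap u (v + v') = uap u v + uap u v' := by
  unfold uap; rw [map_add]

lemma uap_smul (u : UE B) (c : ℝ) (v : B → ℝ) : uap u (c • v) = c • uap u v := by
  unfold uap; rw [map_smul]

/-- σ_i as a unit of the endomorphism monoid -/
noncomputable def su (i : B) : UE B where
  val := sig M i
  inv := sig M i
  val_inv := LinearMap.ext fun v => by rw [Module.End.mul_apply, sig_sig, Module.End.one_apply]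
  inv_val := LinearMap.ext fun v => by rw [Module.End.mul_apply, sig_sig, Module.End.one_apply]

lemma uap_su (i : B) (v : B → ℝ) : uap (su M i) v = sig M i v := rfl

section Dihedral

variable {M}
variable {i j : B} {c : ℝ} (hcij : ka M i j = -c) {p : ℕ → ℝ}
  (hp0 : p 0 = 0) (hp1 : p 1 = 1)
  (hrec : ∀ n : ℕ, p (n + 2) = 2 * c * p (n + 1) - p n)

include hcij

lemma bv_plane_i (x y : ℝ) : bv M i (x • al i + y • al j) = x - c * y := by
  rw [bv_add, bv_smul, bv_smul, bv_al, bv_al, ka_diag, hcij]; ring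

lemma bv_plane_j (x y : ℝ) : bv M j (x • al i + y • al j) = y - c * x := by
  rw [bv_add, bv_smul, bv_smul, bv_al, bv_al, ka_diag, ka_symm, hcij]; ring

lemma sig_plane_i (x y : ℝ) :
    sig M i (x • al i + y • al j) = (2 * c * y - x) • al i + y • al j := by
  rw [sig_apply, bv_plane_i hcij]
  ext b; simp; ring

lemma sig_plane_j (x y : ℝ) :
    sig M j (x • al i + y • al j) = x • al i + (2 * c * x - y) • al j := by
  rw [sig_apply, bv_plane_j hcij]
  ext b; simp; ring

lemma al_i_plane : al i = (1:ℝ) • al i + (0:ℝ) • al j := by ext b; simp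

lemma al_j_plane : al j = (0:ℝ) • al i + (1:ℝ) • al j := by ext b; simp

include hp0 hp1 hrec

/-- action of alternating words on the simple root αᵢ -/
lemma altWord_act : ∀ k : ℕ,
    uap (((alternatingWord i j k).map (su M)).prod) (al i)
      = (if Even k then p (k+1) else p k) • al i + (if Even k then p k else p (k+1)) • al j := by
  intro k
  induction k with
  | zero =>
      rw [show alternatingWord i j 0 = [] from rfl, List.map_nil, List.prod_nil, uap_one,
        if_pos Even.zero, if_pos Even.zero, hp0, hp1]
      exact al_i_plane hcij
  | succ k ih =>
      rw [alternatingWord_succ', List.map_cons, List.prod_cons, uap_mul, ih]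
      rcases Nat.even_or_odd k with hk | hk
      · rw [if_pos hk, if_pos hk, if_neg (Nat.not_even_iff_odd.2 (Even.add_one hk)),
          if_neg (Nat.not_even_iff_odd.2 (Even.add_one hk)), if_pos hk, uap_su,
          sig_plane_j hcij, show 2 * c * p (k+1) - p k = p (k + 2) from (hrec k).symm]
      · rw [if_neg (Nat.not_even_iff_odd.2 hk), if_neg (Nat.not_even_iff_odd.2 hk),
          if_pos (Odd.add_one hk), if_pos (Odd.add_one hk),
          if_neg (Nat.not_even_iff_odd.2 hk), uap_su, sig_plane_i hcij,
          show 2 * c * p (k+1) - p k = p (k + 2) from (hrec k).symm]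

/-- action of (σᵢσⱼ)ⁿ on αᵢ -/
lemma pow_act_i : ∀ n : ℕ,
    uap ((su M i * su M j) ^ n) (al i) = p (2*n+1) • al i + p (2*n) • al j := by
  intro n
  induction n with
  | zero =>
      rw [pow_zero, uap_one, mul_zero, zero_add, hp0, hp1]
      exact al_i_plane hcij
  | succ n ih =>
      rw [pow_succ', uap_mul, uap_mul, ih, uap_su, uap_su, sig_plane_j hcij, sig_plane_i hcij]
      have h1 : 2 * c * p (2*n+1) - p (2*n) = p (2*n+2) := (hrec (2*n)).symm
      have h2 : 2 * c * p (2*n+2) - p (2*n+1) = p (2*n+3) := (hrec (2*n+1)).symm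
      rw [h1, h2, show 2*(n+1)+1 = 2*n+3 by ring, show 2*(n+1) = 2*n+2 by ring]

/-- action of (σᵢσⱼ)ⁿ⁺¹ on αⱼ -/
lemma pow_act_j : ∀ n : ℕ,
    uap ((su M i * su M j) ^ (n+1)) (al j)
      = (- p (2*n+2)) • al i + (- p (2*n+1)) • al j := by
  intro n
  induction n with
  | zero =>
      rw [pow_one, uap_mul, uap_su, uap_su, al_j_plane hcij, sig_plane_j hcij, sig_plane_i hcij]
      have h2 : p 2 = 2 * c := by rw [show (2:ℕ) = 0 + 2 from rfl, hrec 0, hp0, hp1]; ring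
      norm_num [hp1, h2]
  | succ n ih =>
      rw [pow_succ', uap_mul, uap_mul, ih, uap_su, uap_su, sig_plane_j hcij, sig_plane_i hcij]
      have h1 : 2 * c * (-p (2*n+2)) - (-p (2*n+1)) = -p (2*n+3) := by
        have := hrec (2*n+1)
        have e : 2*n+1+2 = 2*n+3 := by ring
        rw [e] at this; linarith
      have h2 : 2 * c * (-p (2*n+3)) - (-p (2*n+2)) = -p (2*n+4) := by
        have := hrec (2*n+2)
        have e : 2*n+2+2 = 2*n+4 := by ring
        have e2 : 2*n+2+1 = 2*n+3 := by ring
        rw [e, e2] at this; linarith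
      rw [h1, h2, show 2*(n+1)+2 = 2*n+4 by ring, show 2*(n+1)+1 = 2*n+3 by ring]

end Dihedral

section Plane

variable {M}
variable {i j : B} {c : ℝ} (hcij : ka M i j = -c) (hc2 : 1 - c^2 ≠ 0)

include hcij hc2

/-- any vector decomposes as a plane part plus a B-orthogonal part -/
lemma plane_decomp (v : B → ℝ) :
    ∃ (x y : ℝ) (r : B → ℝ), v = x • al i + y • al j + r ∧ bv M i r = 0 ∧ bv M j r = 0 := by
  set a := bv M i v with ha
  set b := bv M j v with hb
  set xx : ℝ := (a + c*b)/(1 - c^2) with hxx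
  set yy : ℝ := (b + c*a)/(1 - c^2) with hyy
  refine ⟨xx, yy, v - xx • al i - yy • al j, by abel, ?_, ?_⟩
  · rw [bv_sub, bv_sub, bv_smul, bv_smul, bv_al, bv_al, ka_diag, hcij, ← ha, hxx, hyy]
    field_simp; ring
  · rw [bv_sub, bv_sub, bv_smul, bv_smul, bv_al, bv_al, ka_diag, ka_symm, hcij, ← hb, hxx, hyy]
    field_simp; ring

end Plane

end TitsFinSub

namespace TitsFinSub
open CoxeterSystem Real
open scoped Classical

set_option linter.unusedSectionVars false
set_option maxHeartbeats 1000000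

variable {B : Type*} [Fintype B] (M : CoxeterMatrix B)

section Trig

variable {m : ℕ} (hm : 2 ≤ m)

/-- the sine-quotient sequence -/
noncomputable def pc (m : ℕ) (n : ℕ) : ℝ :=
  Real.sin (n * (Real.pi / m)) / Real.sin (Real.pi / m)

include hm

lemma theta_pos : 0 < Real.pi / m := by
  apply div_pos Real.pi_pos
  exact_mod_cast Nat.lt_of_lt_of_le (by norm_num) hm

lemma theta_lt_pi : Real.pi / m < Real.pi := by
  rw [div_lt_iff₀ (by exact_mod_cast Nat.lt_of_lt_of_le (by norm_num) hm)]
  nth_rw 1 [← mul_one Real.pi]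
  apply mul_lt_mul_of_pos_left _ Real.pi_pos
  exact_mod_cast Nat.lt_of_lt_of_le (by norm_num) hm

lemma sin_theta_pos : 0 < Real.sin (Real.pi / m) :=
  Real.sin_pos_of_pos_of_lt_pi (theta_pos hm) (theta_lt_pi hm)

lemma pc_zero : pc m 0 = 0 := by simp [pc]

lemma pc_one : pc m 1 = 1 := by
  rw [pc, Nat.cast_one, one_mul, div_self (ne_of_gt (sin_theta_pos hm))]

lemma pc_rec (n : ℕ) :
    pc m (n + 2) = 2 * Real.cos (Real.pi / m) * pc m (n + 1) - pc m n := by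
  unfold pc
  set θ := Real.pi / m
  have h1 : ((n : ℝ) + 2) * θ = ((n:ℝ)+1) * θ + θ := by ring
  have h2 : (n : ℝ) * θ = ((n:ℝ)+1) * θ - θ := by ring
  push_cast
  rw [h1, h2, Real.sin_add, Real.sin_sub]
  ring

lemma pc_nonneg {n : ℕ} (hn : n ≤ m) : 0 ≤ pc m n := by
  apply div_nonneg _ (le_of_lt (sin_theta_pos hm))
  apply Real.sin_nonneg_of_nonneg_of_le_pi
  · positivity
  · have hm0 : (m:ℝ) ≠ 0 := by
      have : 0 < m := by omega
      exact_mod_cast this.ne'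
    have h1 : (n:ℝ) * (Real.pi / m) ≤ (m:ℝ) * (Real.pi / m) :=
      mul_le_mul_of_nonneg_right (by exact_mod_cast hn) (le_of_lt (theta_pos hm))
    have h2 : (m:ℝ) * (Real.pi / m) = Real.pi := by field_simp
    linarith

lemma pc_two_m : pc m (2 * m) = 0 := by
  have hm0 : (m:ℝ) ≠ 0 := by positivity
  unfold pc
  have : ((2 * m : ℕ) : ℝ) * (Real.pi / m) = 2 * Real.pi := by
    push_cast; field_simp
  rw [this, Real.sin_two_pi, zero_div]

lemma pc_two_m_add_one : pc m (2 * m + 1) = 1 := by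
  have hm0 : (m:ℝ) ≠ 0 := by positivity
  unfold pc
  have : ((2 * m + 1 : ℕ) : ℝ) * (Real.pi / m) = 2 * Real.pi + Real.pi / m := by
    push_cast; field_simp
  rw [this, Real.sin_add, Real.sin_two_pi, Real.cos_two_pi]
  rw [zero_mul, one_mul, zero_add, div_self (ne_of_gt (sin_theta_pos hm))]

lemma pc_two_m_sub_one : pc m (2 * m - 1) = -1 := by
  have hm0 : (m:ℝ) ≠ 0 := by positivity
  unfold pc
  have hcast : ((2 * m - 1 : ℕ) : ℝ) = 2 * (m:ℝ) - 1 := by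
    have : 1 ≤ 2 * m := by omega
    push_cast [this]; ring
  have : ((2 * m - 1 : ℕ) : ℝ) * (Real.pi / m) = 2 * Real.pi - Real.pi / m := by
    rw [hcast]; field_simp
  rw [this, Real.sin_sub, Real.sin_two_pi, Real.cos_two_pi]
  rw [div_eq_iff (ne_of_gt (sin_theta_pos hm))]; ring

end Trig

lemma ka_eq_neg_cos (i j : B) : ka M i j = - Real.cos (Real.pi / (M i j)) := rfl

/-- σᵢσⱼ fixes orthogonal vectors -/
lemma pow_fix {i j : B} {r : B → ℝ} (hi : bv M i r = 0) (hj : bv M j r = 0) (n : ℕ) :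
    uap ((su M i * su M j) ^ n) r = r := by
  induction n with
  | zero => rw [pow_zero, uap_one]
  | succ n ih =>
      rw [pow_succ', uap_mul, uap_mul, ih, uap_su, uap_su, sig_fix M j r hj, sig_fix M i r hi]

/-- the braid relation in the geometric representation -/
lemma braid_rel (i j : B) : (su M i * su M j) ^ (M i j) = 1 := by
  rcases eq_or_ne i j with rfl | hij
  · rw [M.diagonal i, pow_one]
    apply Units.ext
    rw [Units.val_mul, Units.val_one]
    exact LinearMap.ext fun v => sig_sig M i v
  rcases eq_or_ne (M i j) 0 with h0 | h0
  · rw [h0, pow_zero]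
  have hm : 2 ≤ M i j := by
    rcases Nat.lt_or_ge (M i j) 2 with h | h
    · interval_cases h' : (M i j) <;> simp_all [M.off_diagonal i j hij]
    · exact h
  set m := M i j with hmm
  set c := Real.cos (Real.pi / m) with hc
  have hcij : ka M i j = -c := rfl
  have hsin := sin_theta_pos (m := m) hm
  have hc2 : 1 - c^2 ≠ 0 := by
    have : 1 - c^2 = Real.sin (Real.pi / m) ^ 2 := by
      rw [Real.sin_sq]
    rw [this]
    positivity
  apply Units.ext
  rw [Units.val_one]
  refine LinearMap.ext fun v => ?_
  rw [Module.End.one_apply]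
  show uap ((su M i * su M j) ^ m) v = v
  obtain ⟨x, y, r, hv, hri, hrj⟩ := plane_decomp hcij hc2 v
  rw [hv, uap_add, uap_add, uap_smul, uap_smul, pow_fix M hri hrj]
  have e1 := pow_act_i hcij (pc_zero hm) (pc_one hm) (pc_rec hm) m
  have e2 := pow_act_j hcij (pc_zero hm) (pc_one hm) (pc_rec hm) (m - 1)
  rw [show m - 1 + 1 = m by omega] at e2
  rw [show 2 * (m-1) + 2 = 2 * m by omega, show 2 * (m-1) + 1 = 2*m - 1 by omega] at e2
  rw [e1, e2, pc_two_m hm, pc_two_m_add_one hm, pc_two_m_sub_one hm]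
  norm_num

lemma liftable : M.IsLiftable (su M) := fun i j => braid_rel M i j

variable {W : Type*} [Group W] {M} (cs : CoxeterSystem M W)

/-- the geometric representation -/
noncomputable def rho : W →* UE B := cs.lift ⟨su M, liftable M⟩

lemma rho_simple (i : B) : rho cs (cs.simple i) = su M i :=
  cs.lift_apply_simple (liftable M) i

lemma rho_wordProd (ω : List B) : rho cs (cs.wordProd ω) = (ω.map (su M)).prod := by
  unfold wordProd
  rw [MonoidHom.map_list_prod, List.map_map]
  congr 1
  ext i
  simp [rho_simple]

end TitsFinSub

namespace TitsFinSub
open CoxeterSystem Real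
open scoped Classical

set_option linter.unusedSectionVars false
set_option maxHeartbeats 1000000

variable {B : Type*} [Fintype B] {W : Type*} [Group W] {M : CoxeterMatrix B}
  (cs : CoxeterSystem M W)

/-- coordinatewise nonnegative -/
def rpos (v : B → ℝ) : Prop := ∀ b, 0 ≤ v b

/-- coordinatewise nonpositive -/
def rneg (v : B → ℝ) : Prop := ∀ b, v b ≤ 0

lemma uap_inv_uap (u : UE B) (v : B → ℝ) : uap u⁻¹ (uap u v) = v := by
  rw [← uap_mul, inv_mul_cancel, uap_one]

lemma uap_neg (u : UE B) (v : B → ℝ) : uap u (-v) = - uap u v := by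
  unfold uap; rw [map_neg]

/-- the descending walk into a rank-2 coset -/
lemma walk : ∀ (n : ℕ) (w : W) (i j : B), cs.length w ≤ n → i ≠ j →
    ¬cs.IsRightDescent w i → cs.IsRightDescent w j →
    ∃ (u : W) (k : ℕ), 1 ≤ k ∧ ¬cs.IsRightDescent u i ∧ ¬cs.IsRightDescent u j ∧
      w = u * cs.wordProd (alternatingWord i j k) ∧ cs.length w = cs.length u + k := by
  intro n
  induction n with
  | zero =>
      intro w i j hlen _ _ hj
      have : w = 1 := cs.length_eq_zero_iff.mp (Nat.le_zero.mp hlen)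
      exact absurd hj (this ▸ cs.not_isRightDescent_one j)
  | succ n ih =>
      intro w i j hlen hij hi hj
      set w' := w * cs.simple j with hw'
      have hlw' : cs.length w' + 1 = cs.length w := cs.isRightDescent_iff.mp hj
      have hww' : w = w' * cs.simple j := by
        rw [hw', mul_assoc, cs.simple_mul_simple_self, mul_one]
      have hj' : ¬cs.IsRightDescent w' j := by
        intro hcon
        rw [CoxeterSystem.IsRightDescent, ← hww'] at hcon
        omega
      by_cases hi' : cs.IsRightDescent w' i
      · -- continue the walk with roles swapped
        obtain ⟨u, k, hk1, huj, hui, hw'e, hw'l⟩ :=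
          ih w' j i (by omega) hij.symm hj' hi'
        refine ⟨u, k + 1, by omega, hui, huj, ?_, ?_⟩
        · rw [hww', hw'e, alternatingWord_succ, cs.wordProd_concat, mul_assoc]
        · omega
      · -- stop
        refine ⟨w', 1, le_refl 1, hi', hj', ?_, by omega⟩
        have : alternatingWord i j 1 = [j] := rfl
        rw [this, cs.wordProd_singleton, ← hww']

/-- bound on the walk length -/
lemma walk_le (i j : B) (u w : W) (k : ℕ)
    (hw : w = u * cs.wordProd (alternatingWord i j k))
    (hl : cs.length w = cs.length u + k) (hM : M i j ≠ 0) : k ≤ M i j := by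
  by_contra hk
  push_neg at hk
  have hnr : ¬cs.IsReduced (alternatingWord i j k) :=
    cs.not_isReduced_alternatingWord i j hM hk
  have hlt : cs.length (cs.wordProd (alternatingWord i j k)) < k := by
    have h1 := cs.length_wordProd_le (alternatingWord i j k)
    rw [length_alternatingWord] at h1
    rcases Nat.lt_or_ge (cs.length (cs.wordProd (alternatingWord i j k))) k with h | h
    · exact h
    · exact absurd (by unfold CoxeterSystem.IsReduced; rw [length_alternatingWord]; omega) hnr
  have := cs.length_mul_le u (cs.wordProd (alternatingWord i j k))
  rw [← hw] at this
  omega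

lemma walk_lt (i j : B) (u w : W) (k : ℕ)
    (hw : w = u * cs.wordProd (alternatingWord i j k))
    (hl : cs.length w = cs.length u + k) (hM : M i j ≠ 0)
    (hi : ¬cs.IsRightDescent w i) (hk1 : 1 ≤ k) : k ≤ M i j - 1 := by
  have hkM := walk_le cs i j u w k hw hl hM
  rcases Nat.lt_or_ge k (M i j) with h | h
  · omega
  have hkeq : k = M i j := by omega
  exfalso
  -- use the braid relation to exhibit i as a right descent
  have hbraid : cs.wordProd (alternatingWord i j k) =
      cs.wordProd (alternatingWord i j (M i j - 1)) * cs.simple i := by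
    rw [hkeq, show alternatingWord i j (M i j) = braidWord M i j from rfl,
      cs.wordProd_braidWord_eq, show braidWord M j i = alternatingWord j i (M j i) from rfl,
      M.symmetric j i, show M i j = (M i j - 1) + 1 by omega, alternatingWord_succ,
      cs.wordProd_concat]
    simp
  have hws : w * cs.simple i = u * cs.wordProd (alternatingWord i j (M i j - 1)) := by
    rw [hw, hbraid, mul_assoc, mul_assoc, cs.simple_mul_simple_self, mul_one]
  have hlen : cs.length (w * cs.simple i) ≤ cs.length u + (M i j - 1) := by
    rw [hws]
    calc cs.length (u * cs.wordProd (alternatingWord i j (M i j - 1)))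
        ≤ cs.length u + cs.length (cs.wordProd (alternatingWord i j (M i j - 1))) :=
          cs.length_mul_le _ _
      _ ≤ cs.length u + (M i j - 1) := by
          have := cs.length_wordProd_le (alternatingWord i j (M i j - 1))
          rw [length_alternatingWord] at this
          omega
  exact hi (by unfold CoxeterSystem.IsRightDescent; omega)

/-- THE POSITIVITY THEOREM: if `i` is not a right descent of `w` then `w αᵢ ≥ 0`. -/
theorem rpos_of_not_descent : ∀ (n : ℕ) (w : W) (i : B), cs.length w ≤ n →
    ¬cs.IsRightDescent w i → rpos (uap (rho cs w) (al i)) := by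
  intro n
  induction n with
  | zero =>
      intro w i hlen _
      have : w = 1 := cs.length_eq_zero_iff.mp (Nat.le_zero.mp hlen)
      rw [this, map_one, uap_one]
      exact al_nonneg i
  | succ n ih =>
      intro w i hlen hi
      rcases eq_or_ne w 1 with rfl | hw1
      · rw [map_one, uap_one]; exact al_nonneg i
      obtain ⟨j, hj⟩ := cs.exists_rightDescent_of_ne_one hw1
      have hij : i ≠ j := fun h => hi (h ▸ hj)
      obtain ⟨u, k, hk1, hui, huj, hwe, hwl⟩ :=
        walk cs (cs.length w) w i j (le_refl _) hij hi hj
      have hulen : cs.length u ≤ n := by omega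
      have hposi := ih u i hulen hui
      have hposj := ih u j hulen huj
      -- coefficients
      have key : ∃ pa pb : ℝ, 0 ≤ pa ∧ 0 ≤ pb ∧
          uap (rho cs (cs.wordProd (alternatingWord i j k))) (al i) = pa • al i + pb • al j := by
        rcases eq_or_ne (M i j) 0 with h0 | h0
        · -- infinite case : coefficients are integers
          have hcij : ka M i j = -1 := by
            rw [ka_eq_neg_cos, h0]
            norm_num
          have haw := altWord_act (p := fun n => (n:ℝ)) hcij (by norm_num) (by norm_num)
            (by intro n; push_cast; ring) k
          rw [rho_wordProd, haw]
          rcases Nat.even_or_odd k with hk | hk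
          · rw [if_pos hk, if_pos hk]
            exact ⟨_, _, by positivity, by positivity, rfl⟩
          · rw [if_neg (Nat.not_even_iff_odd.2 hk), if_neg (Nat.not_even_iff_odd.2 hk)]
            exact ⟨_, _, by positivity, by positivity, rfl⟩
        · -- finite case: sine quotients
          have hm2 : 2 ≤ M i j := by
            rcases Nat.lt_or_ge (M i j) 2 with h | h
            · interval_cases h' : (M i j) <;> simp_all [M.off_diagonal i j hij]
            · exact h
          have hkM : k ≤ M i j - 1 := walk_lt cs i j u w k hwe hwl h0 hi hk1
          have hcij : ka M i j = -Real.cos (Real.pi / (M i j)) := rfl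
          have haw := altWord_act (p := pc (M i j)) hcij (pc_zero hm2) (pc_one hm2)
            (pc_rec hm2) k
          rw [rho_wordProd, haw]
          have hb1 : k ≤ M i j := by omega
          have hb2 : k + 1 ≤ M i j := by omega
          rcases Nat.even_or_odd k with hk | hk
          · rw [if_pos hk, if_pos hk]
            exact ⟨_, _, pc_nonneg hm2 hb2, pc_nonneg hm2 hb1, rfl⟩
          · rw [if_neg (Nat.not_even_iff_odd.2 hk), if_neg (Nat.not_even_iff_odd.2 hk)]
            exact ⟨_, _, pc_nonneg hm2 hb1, pc_nonneg hm2 hb2, rfl⟩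
      obtain ⟨pa, pb, hpa, hpb, hact⟩ := key
      rw [hwe, map_mul, uap_mul, hact, uap_add, uap_smul, uap_smul]
      intro b
      have := hposi b
      have := hposj b
      simp only [Pi.add_apply, Pi.smul_apply, smul_eq_mul]
      nlinarith

/-- if `i` is a right descent of `w` then `w αᵢ ≤ 0`. -/
theorem rneg_of_descent (w : W) (i : B) (h : cs.IsRightDescent w i) :
    rneg (uap (rho cs w) (al i)) := by
  have h' : ¬cs.IsRightDescent (w * cs.simple i) i :=
    cs.isRightDescent_iff_not_isRightDescent_mul.mp h
  have hpos := rpos_of_not_descent cs (cs.length (w * cs.simple i)) (w * cs.simple i) i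
    (le_refl _) h'
  have : uap (rho cs w) (al i) = - uap (rho cs (w * cs.simple i)) (al i) := by
    rw [map_mul, uap_mul, rho_simple, uap_su, sig_al_self, uap_neg, neg_neg]
  rw [this]
  intro b
  simp only [Pi.neg_apply, neg_nonpos]
  exact hpos b

lemma root_ne_zero (w : W) (i : B) : uap (rho cs w) (al i) ≠ 0 := by
  intro h
  have : al i = (0 : B → ℝ) := by
    have h2 := congrArg (uap ((rho cs w)⁻¹)) h
    rw [uap_inv_uap] at h2
    rw [h2]
    unfold uap; rw [map_zero]
  have := congrFun this i
  rw [al_apply_self] at this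
  norm_num at this

/-- the dichotomy: i not descent iff `w αᵢ ≥ 0` -/
theorem not_descent_iff_rpos (w : W) (i : B) :
    ¬cs.IsRightDescent w i ↔ rpos (uap (rho cs w) (al i)) := by
  constructor
  · exact rpos_of_not_descent cs (cs.length w) w i (le_refl _)
  · intro hp
    by_contra hd
    have hneg := rneg_of_descent cs w i hd
    have : uap (rho cs w) (al i) = 0 := by
      ext b; exact le_antisymm (hneg b) (hp b)
    exact root_ne_zero cs w i this

end TitsFinSub

namespace TitsFinSub
open CoxeterSystem Real
open scoped Classical

set_option linter.unusedSectionVars false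
set_option maxHeartbeats 1000000

variable {B : Type*} [Fintype B] {W : Type*} [Group W] {M : CoxeterMatrix B}
  (cs : CoxeterSystem M W)

/-- the set of roots -/
def Root : Set (B → ℝ) := {v | ∃ (w : W) (i : B), v = uap (rho cs w) (al i)}

/-- the set of positive roots -/
def PosRoot : Set (B → ℝ) := {v | v ∈ Root cs ∧ rpos v}

lemma al_mem_posRoot (i : B) : al i ∈ PosRoot cs :=
  ⟨⟨1, i, by rw [map_one, uap_one]⟩, al_nonneg i⟩

lemma root_nonzero {v : B → ℝ} (hv : v ∈ Root cs) : v ≠ 0 := by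
  obtain ⟨w, i, rfl⟩ := hv
  exact root_ne_zero cs w i

lemma root_map {v : B → ℝ} (hv : v ∈ Root cs) (w : W) : uap (rho cs w) v ∈ Root cs := by
  obtain ⟨w', i, rfl⟩ := hv
  exact ⟨w * w', i, by rw [map_mul, uap_mul]⟩

lemma root_neg {v : B → ℝ} (hv : v ∈ Root cs) : -v ∈ Root cs := by
  obtain ⟨w, i, rfl⟩ := hv
  refine ⟨w * cs.simple i, i, ?_⟩
  rw [map_mul, uap_mul, rho_simple, uap_su, sig_al_self, uap_neg]

lemma root_dichotomy {v : B → ℝ} (hv : v ∈ Root cs) : rpos v ∨ rneg v := by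
  obtain ⟨w, i, rfl⟩ := hv
  by_cases h : cs.IsRightDescent w i
  · exact Or.inr (rneg_of_descent cs w i h)
  · exact Or.inl (rpos_of_not_descent cs (cs.length w) w i (le_refl _) h)

lemma rneg_iff_rpos_neg {v : B → ℝ} : rneg v ↔ rpos (-v) := by
  constructor <;> intro h b <;> have := h b <;> simp at this ⊢ <;> linarith

/-- B-invariance of the representation -/
lemma Bf_rho (w : W) : ∀ u v : B → ℝ, Bf M (uap (rho cs w) u) (uap (rho cs w) v) = Bf M u v := by
  induction w using cs.simple_induction with
  | simple i => intro u v; rw [rho_simple]; exact Bf_sig M i u v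
  | one => intro u v; rw [map_one, uap_one, uap_one]
  | mul w₁ w₂ h₁ h₂ => intro u v; rw [map_mul, uap_mul, uap_mul, h₁ _ _, h₂ _ _]

lemma root_norm {v : B → ℝ} (hv : v ∈ Root cs) : Bf M v v = 1 := by
  obtain ⟨w, i, rfl⟩ := hv
  rw [Bf_rho, Bf_al_left, bv_al, ka_diag]

/-- a positive root made negative by a simple reflection must be the simple root -/
lemma perm_lemma {γ : B → ℝ} (hγ : γ ∈ PosRoot cs) (i : B) (h : rneg (sig M i γ)) :
    γ = al i := by
  obtain ⟨hroot, hpos⟩ := hγ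
  have hcoord : ∀ b, b ≠ i → γ b = 0 := by
    intro b hb
    have h1 := h b
    have h2 := hpos b
    rw [sig_apply] at h1
    simp only [Pi.sub_apply, Pi.smul_apply, smul_eq_mul] at h1
    have : al i b = 0 := by unfold al; simp [hb]
    rw [this, mul_zero, sub_zero] at h1
    linarith
  have hγe : γ = γ i • al i := by
    ext b
    rcases eq_or_ne b i with rfl | hb
    · simp [al]
    · rw [hcoord b hb]; simp [al, hb]
  have hnorm := root_norm cs hroot
  rw [hγe, Bf_smul_left, Bf_smul_right, Bf_al_left, bv_al, ka_diag] at hnorm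
  have : γ i = 1 ∨ γ i = -1 := by
    have : (γ i - 1) * (γ i + 1) = 0 := by nlinarith
    rcases mul_eq_zero.mp this with h | h
    · left; linarith
    · right; linarith
  rcases this with h1 | h1
  · rw [hγe, h1, one_smul]
  · exfalso
    have := hpos i
    rw [hγe] at this
    simp only [Pi.smul_apply, smul_eq_mul, al_apply_self, mul_one] at this
    rw [h1] at this
    norm_num at this

lemma perm_posroot {γ : B → ℝ} (hγ : γ ∈ PosRoot cs) (i : B) (hne : γ ≠ al i) :
    sig M i γ ∈ PosRoot cs := by
  have hroot : sig M i γ ∈ Root cs := by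
    have := root_map cs hγ.1 (cs.simple i)
    rwa [rho_simple, uap_su] at this
  rcases root_dichotomy cs hroot with h | h
  · exact ⟨hroot, h⟩
  · exact absurd (perm_lemma cs hγ i h) hne

/-- the set of positive roots flipped by `w` -/
def FlipSet (w : W) : Set (B → ℝ) := {v | v ∈ PosRoot cs ∧ rneg (uap (rho cs w) v)}

lemma flipSet_finite : ∀ (n : ℕ) (w : W), cs.length w ≤ n → (FlipSet cs w).Finite := by
  intro n
  induction n with
  | zero =>
      intro w hlen
      have hw : w = 1 := cs.length_eq_zero_iff.mp (Nat.le_zero.mp hlen)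
      convert Set.finite_empty
      rw [Set.eq_empty_iff_forall_notMem]
      rintro v ⟨⟨hroot, hpos⟩, hneg⟩
      rw [hw, map_one, uap_one] at hneg
      exact root_nonzero cs hroot (by ext b; exact le_antisymm (hneg b) (hpos b))
  | succ n ih =>
      intro w hlen
      rcases eq_or_ne w 1 with rfl | hw1
      · exact ih 1 (by rw [cs.length_one]; omega)
      obtain ⟨i, hi⟩ := cs.exists_rightDescent_of_ne_one hw1
      set w' := w * cs.simple i with hw'
      have hlw' : cs.length w' + 1 = cs.length w := cs.isRightDescent_iff.mp hi
      have hww' : w = w' * cs.simple i := by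
        rw [hw', mul_assoc, cs.simple_mul_simple_self, mul_one]
      have hsub : FlipSet cs w ⊆ insert (al i) (sig M i '' FlipSet cs w') := by
        rintro v ⟨hv, hneg⟩
        rcases eq_or_ne v (al i) with rfl | hne
        · exact Set.mem_insert _ _
        right
        have hsv : sig M i v ∈ PosRoot cs := perm_posroot cs hv i hne
        have : uap (rho cs w) v = uap (rho cs w') (sig M i v) := by
          rw [hww', map_mul, uap_mul, rho_simple, uap_su]
        refine ⟨sig M i v, ⟨hsv, ?_⟩, sig_sig M i v⟩
        rw [← this]
        exact hneg
      exact Set.Finite.subset (Set.Finite.insert _ ((ih w' (by omega)).image _)) hsub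

/-- dual action on linear functionals -/
noncomputable def dact (w : W) (f : (B → ℝ) →ₗ[ℝ] ℝ) : (B → ℝ) →ₗ[ℝ] ℝ :=
  f ∘ₗ ((rho cs w⁻¹ : UE B) : (B → ℝ) →ₗ[ℝ] (B → ℝ))

lemma dact_apply (w : W) (f : (B → ℝ) →ₗ[ℝ] ℝ) (v : B → ℝ) :
    dact cs w f v = f (uap (rho cs w⁻¹) v) := rfl

lemma dact_mul (a b : W) (f : (B → ℝ) →ₗ[ℝ] ℝ) :
    dact cs (a * b) f = dact cs a (dact cs b f) := by
  refine LinearMap.ext fun v => ?_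
  rw [dact_apply, dact_apply, dact_apply, ← uap_mul, ← map_mul, mul_inv_rev]

lemma dact_one (f : (B → ℝ) →ₗ[ℝ] ℝ) : dact cs 1 f = f := by
  refine LinearMap.ext fun v => ?_
  rw [dact_apply, inv_one, map_one, uap_one]

/-- membership in the closed fundamental chamber -/
def inCh (f : (B → ℝ) →ₗ[ℝ] ℝ) : Prop := ∀ i : B, 0 ≤ f (al i)

lemma decomp_al (v : B → ℝ) : v = ∑ b, v b • al b := by
  ext b'
  rw [Finset.sum_apply]
  simp only [Pi.smul_apply, smul_eq_mul]
  rw [Finset.sum_eq_single b']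
  · simp [al]
  · intro b _ hb; unfold al; simp [Ne.symm hb]
  · intro h; exact absurd (Finset.mem_univ b') h

lemma inCh_nonneg_posroot {f : (B → ℝ) →ₗ[ℝ] ℝ} (hf : inCh f) {v : B → ℝ}
    (hv : v ∈ PosRoot cs) : 0 ≤ f v := by
  have he : f v = ∑ b, v b * f (al b) := by
    conv_lhs => rw [decomp_al v]
    rw [map_sum]
    congr 1; ext b; rw [map_smul]; rfl
  rw [he]
  exact Finset.sum_nonneg fun b _ => mul_nonneg (hv.2 b) (hf b)

end TitsFinSub

namespace TitsFinSub
open CoxeterSystem Real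
open scoped Classical

set_option linter.unusedSectionVars false
set_option maxHeartbeats 1000000

variable {B : Type*} [Fintype B] {W : Type*} [Group W] {M : CoxeterMatrix B}
  (cs : CoxeterSystem M W)

/-- positive roots on which a functional is negative -/
def Nf (f : (B → ℝ) →ₗ[ℝ] ℝ) : Set (B → ℝ) := {v | v ∈ PosRoot cs ∧ f v < 0}

lemma sig_injective (i : B) : Function.Injective (sig M i) := fun a b h => by
  rw [← sig_sig M i a, h, sig_sig]

/-- a functional which is negative on only finitely many positive roots can be moved
into the fundamental chamber -/
theorem toCh : ∀ (n : ℕ) (f : (B → ℝ) →ₗ[ℝ] ℝ), (Nf cs f).Finite → (Nf cs f).ncard ≤ n →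
    ∃ w : W, inCh (dact cs w f) := by
  intro n
  induction n with
  | zero =>
      intro f hfin hcard
      refine ⟨1, ?_⟩
      rw [dact_one]
      intro i
      by_contra h
      push_neg at h
      have hmem : al i ∈ Nf cs f := ⟨al_mem_posRoot cs i, h⟩
      have h0 : (Nf cs f).ncard = 0 := Nat.le_zero.mp hcard
      rw [Set.ncard_eq_zero hfin] at h0
      rw [h0] at hmem
      exact hmem
  | succ n ih =>
      intro f hfin hcard
      by_cases hch : inCh f
      · exact ⟨1, by rw [dact_one]; exact hch⟩
      unfold inCh at hch
      push_neg at hch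
      obtain ⟨i, hi⟩ := hch
      set f' := dact cs (cs.simple i) f with hf'
      have hf'apply : ∀ v, f' v = f (sig M i v) := by
        intro v
        rw [hf', dact_apply, cs.inv_simple, rho_simple, uap_su]
      have hmemi : al i ∈ Nf cs f := ⟨al_mem_posRoot cs i, hi⟩
      have hsub : sig M i '' Nf cs f' ⊆ Nf cs f \ {al i} := by
        rintro - ⟨v, ⟨hvpos, hvf⟩, rfl⟩
        rw [hf'apply] at hvf
        have hvne : v ≠ al i := by
          rintro rfl
          rw [sig_al_self, map_neg] at hvf
          linarith
        have hs : sig M i v ∈ PosRoot cs := perm_posroot cs hvpos i hvne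
        refine ⟨⟨hs, hvf⟩, ?_⟩
        intro hmem
        rw [Set.mem_singleton_iff] at hmem
        have hv2 : v = - al i := by
          have h' : v = sig M i (al i) := by rw [← hmem, sig_sig]
          rwa [sig_al_self] at h'
        have hvi := hvpos.2 i
        rw [hv2] at hvi
        simp only [Pi.neg_apply, al_apply_self] at hvi
        linarith
      have hNf'fin : (Nf cs f').Finite :=
        Set.Finite.of_finite_image (Set.Finite.subset hfin.diff hsub)
          (Set.injOn_of_injective (sig_injective i))
      have hcard' : (Nf cs f').ncard ≤ n := by
        have e1 : (sig M i '' Nf cs f').ncard = (Nf cs f').ncard :=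
          Set.ncard_image_of_injective _ (sig_injective i)
        have e2 : (sig M i '' Nf cs f').ncard ≤ (Nf cs f \ {al i}).ncard :=
          Set.ncard_le_ncard hsub hfin.diff
        have e3 : (Nf cs f \ {al i}).ncard = (Nf cs f).ncard - 1 :=
          Set.ncard_diff_singleton_of_mem hmemi
        have e4 : 1 ≤ (Nf cs f).ncard := by
          rw [Nat.one_le_iff_ne_zero]
          intro h0
          rw [Set.ncard_eq_zero hfin] at h0
          rw [h0] at hmemi
          exact hmemi
        omega
      obtain ⟨w', hw'⟩ := ih f' hNf'fin hcard'
      refine ⟨w' * cs.simple i, ?_⟩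
      rw [dact_mul]
      exact hw'

/-- the standard subgroup generated by a subset of simple reflections -/
def WA (A : Set B) : Subgroup W := Subgroup.closure (cs.simple '' A)

/-- Tits' stabilizer lemma: the stabilizer of a point of the fundamental chamber is
generated by the simple reflections it contains -/
theorem stab_in_WA : ∀ (n : ℕ) (u : W) (f : (B → ℝ) →ₗ[ℝ] ℝ), cs.length u ≤ n → inCh f →
    dact cs u f = f → u ∈ WA cs {i : B | f (al i) = 0} := by
  intro n
  induction n with
  | zero =>
      intro u f hlen _ _
      rw [cs.length_eq_zero_iff.mp (Nat.le_zero.mp hlen)]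
      exact Subgroup.one_mem _
  | succ n ih =>
      intro u f hlen hch hstab
      rcases eq_or_ne u 1 with rfl | hu1
      · exact Subgroup.one_mem _
      obtain ⟨j, hj⟩ := cs.exists_rightDescent_of_ne_one hu1
      have hneg : rneg (uap (rho cs u) (al j)) := rneg_of_descent cs u j hj
      have hroot : uap (rho cs u) (al j) ∈ Root cs := ⟨u, j, rfl⟩
      have hposneg : -(uap (rho cs u) (al j)) ∈ PosRoot cs :=
        ⟨root_neg cs hroot, rneg_iff_rpos_neg.mp hneg⟩
      have h1 : f (uap (rho cs u) (al j)) ≤ 0 := by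
        have := inCh_nonneg_posroot cs hch hposneg
        rw [map_neg] at this
        linarith
      have h2 : f (uap (rho cs u) (al j)) = f (al j) := by
        conv_lhs => rw [← hstab]
        rw [dact_apply, ← uap_mul, ← map_mul, inv_mul_cancel, map_one, uap_one]
      have hfj : f (al j) = 0 := le_antisymm (h2 ▸ h1) (hch j)
      have h3 : dact cs (cs.simple j) f = f := by
        refine LinearMap.ext fun v => ?_
        rw [dact_apply, cs.inv_simple, rho_simple, uap_su, sig_apply, map_sub, map_smul, hfj]
        simp
      have h4 : dact cs (u * cs.simple j) f = f := by
        rw [dact_mul, h3, hstab]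
      have hlen' : cs.length (u * cs.simple j) ≤ n := by
        have := cs.isRightDescent_iff.mp hj
        omega
      have h5 := ih (u * cs.simple j) f hlen' hch h4
      have h6 : cs.simple j ∈ WA cs {i : B | f (al i) = 0} :=
        Subgroup.subset_closure ⟨j, hfj, rfl⟩
      have : u = (u * cs.simple j) * cs.simple j := by
        rw [mul_assoc, cs.simple_mul_simple_self, mul_one]
      rw [this]
      exact Subgroup.mul_mem _ h5 h6

end TitsFinSub

namespace TitsFinSub
open CoxeterSystem Real
open scoped Classical

set_option linter.unusedSectionVars false
set_option maxHeartbeats 1000000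

variable {B : Type*} [Fintype B] {W : Type*} [Group W] {M : CoxeterMatrix B}
  (cs : CoxeterSystem M W)

/-- supported in A -/
def suppA (A : Set B) (v : B → ℝ) : Prop := ∀ b ∉ A, v b = 0

lemma suppA_diff (A : Set B) (u : W) (hu : u ∈ WA cs A) :
    ∀ v : B → ℝ, suppA A (uap (rho cs u) v - v) := by
  refine Subgroup.closure_induction ?_ ?_ ?_ ?_ hu
  · rintro - ⟨a, haA, rfl⟩ v b hb
    rw [rho_simple, uap_su, sig_apply]
    have : al a b = 0 := by
      unfold al
      have : b ≠ a := fun h => hb (h ▸ haA)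
      simp [this]
    simp [this]
  · intro v b hb
    rw [map_one, uap_one]
    simp
  · intro x y _ _ hx hy v b hb
    have h1 := hx (uap (rho cs y) v) b hb
    have h2 := hy v b hb
    rw [map_mul, uap_mul]
    simp only [Pi.sub_apply] at h1 h2 ⊢
    linarith
  · intro x _ hx v b hb
    have h1 := hx (uap (rho cs x⁻¹) v) b hb
    rw [← uap_mul, ← map_mul, mul_inv_cancel, map_one, uap_one] at h1
    simp only [Pi.sub_apply] at h1 ⊢
    linarith

/-- roots supported in A -/
def RA (A : Set B) : Set (B → ℝ) := {v | v ∈ Root cs ∧ suppA A v}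

lemma RA_invariant (A : Set B) (u : W) (hu : u ∈ WA cs A) {v : B → ℝ} (hv : v ∈ RA cs A) :
    uap (rho cs u) v ∈ RA cs A := by
  refine ⟨root_map cs hv.1 u, ?_⟩
  intro b hb
  have h1 := suppA_diff cs A u hu v b hb
  have h2 := hv.2 b hb
  simp only [Pi.sub_apply] at h1
  linarith

/-- an element of W_A acting trivially on all roots supported in A is trivial -/
lemma WA_faithful (A : Set B) (u : W) (hu : u ∈ WA cs A)
    (h : ∀ v ∈ RA cs A, uap (rho cs u) v = v) : u = 1 := by
  by_contra hu1
  obtain ⟨j, hj⟩ := cs.exists_rightDescent_of_ne_one hu1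
  have hneg : rneg (uap (rho cs u) (al j)) := rneg_of_descent cs u j hj
  by_cases hjA : j ∈ A
  · have halj : al j ∈ RA cs A := by
      refine ⟨(al_mem_posRoot cs j).1, ?_⟩
      intro b hb
      unfold al
      have : b ≠ j := fun hbj => hb (hbj ▸ hjA)
      simp [this]
    have := h (al j) halj
    have hc := hneg j
    rw [this, al_apply_self] at hc
    linarith
  · have h1 := suppA_diff cs A u hu (al j) j hjA
    simp only [Pi.sub_apply, al_apply_self] at h1
    have hc := hneg j
    linarith

/-- if the roots supported in A form a finite set, W_A is finite -/
lemma WA_finite_of_RA_finite (A : Set B) (hRA : (RA cs A).Finite) :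
    ((WA cs A : Subgroup W) : Set W).Finite := by
  haveI : Finite ↥(RA cs A) := hRA.to_subtype
  have hinj : Function.Injective
      (fun (u : ↥(WA cs A)) => (fun (r : ↥(RA cs A)) =>
        (⟨uap (rho cs u) r, RA_invariant cs A u u.2 r.2⟩ : ↥(RA cs A)))) := by
    intro u u' he
    have heq : ∀ v ∈ RA cs A, uap (rho cs (u : W)) v = uap (rho cs (u' : W)) v := by
      intro v hv
      have := congrFun he ⟨v, hv⟩
      exact congrArg Subtype.val this
    have hmem : (u' : W)⁻¹ * (u : W) ∈ WA cs A :=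
      Subgroup.mul_mem _ (Subgroup.inv_mem _ u'.2) u.2
    have : (u' : W)⁻¹ * (u : W) = 1 := by
      apply WA_faithful cs A _ hmem
      intro v hv
      rw [map_mul, uap_mul, heq v hv, ← uap_mul, ← map_mul, inv_mul_cancel, map_one, uap_one]
    exact Subtype.ext (inv_mul_eq_one.mp this).symm
  haveI : Finite ↥(WA cs A) := Finite.of_injective _ hinj
  exact Set.finite_coe_iff.mp this

/-- the coordinate-sum functional -/
noncomputable def xf : (B → ℝ) →ₗ[ℝ] ℝ where
  toFun v := ∑ b, v b
  map_add' u v := by simp [Finset.sum_add_distrib]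
  map_smul' c v := by simp [Finset.mul_sum]

lemma xf_pos {v : B → ℝ} (hv : v ∈ PosRoot cs) : 0 < xf v := by
  apply Finset.sum_pos'
  · intro b _; exact hv.2 b
  · have hne := root_nonzero cs hv.1
    have : ∃ b, v b ≠ 0 := by
      by_contra hc
      push_neg at hc
      exact hne (funext hc)
    obtain ⟨b, hb⟩ := this
    exact ⟨b, Finset.mem_univ b, lt_of_le_of_ne (hv.2 b) (Ne.symm hb)⟩

lemma xf_neg {v : B → ℝ} (hroot : v ∈ Root cs) (hneg : rneg v) : xf v < 0 := by
  have : 0 < xf (-v) := xf_pos cs ⟨root_neg cs hroot, rneg_iff_rpos_neg.mp hneg⟩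
  rw [map_neg] at this
  linarith

/-- MAIN THEOREM, coxeter-system level -/
theorem main_cs (G : Subgroup W) (hG : (G : Set W).Finite) :
    ∃ (w : W) (A : Set B), ((WA cs A : Subgroup W) : Set W).Finite ∧
      ∀ g ∈ G, w * g * w⁻¹ ∈ WA cs A := by
  classical
  set Gfin : Finset W := hG.toFinset with hGfin
  have hmemG : ∀ g : W, g ∈ Gfin ↔ g ∈ G := by
    intro g; rw [hGfin, Set.Finite.mem_toFinset]; rfl
  have h1G : (1 : W) ∈ Gfin := (hmemG 1).mpr G.one_mem
  -- the averaged functional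
  set y : (B → ℝ) →ₗ[ℝ] ℝ := ∑ g ∈ Gfin, dact cs g (xf) with hy
  have hyapply : ∀ v, y v = ∑ g ∈ Gfin, xf (uap (rho cs g⁻¹) v) := by
    intro v
    rw [hy, LinearMap.sum_apply]
    congr 1
  -- invariance of y
  have hyinv : ∀ g ∈ G, dact cs g y = y := by
    intro g hg
    rw [hy]
    have hstep : dact cs g (∑ g' ∈ Gfin, dact cs g' xf) = ∑ g' ∈ Gfin, dact cs (g * g') xf := by
      refine LinearMap.ext fun v => ?_
      rw [dact_apply, ← hy, hyapply, LinearMap.sum_apply]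
      apply Finset.sum_congr rfl
      intro g' _
      rw [dact_apply, ← uap_mul, ← map_mul, ← mul_inv_rev]
    rw [hstep]
    apply Finset.sum_nbij' (fun g' => g * g') (fun h => g⁻¹ * h)
    · intro a ha
      rw [hmemG] at ha ⊢
      exact G.mul_mem hg ha
    · intro a ha
      rw [hmemG] at ha ⊢
      exact G.mul_mem (G.inv_mem hg) ha
    · intro a _
      group
    · intro a _
      group
    · intro a _
      rfl
  -- negativity set of y is finite
  have hyNf : (Nf cs y).Finite := by
    have hsub : Nf cs y ⊆ ⋃ g ∈ Gfin, FlipSet cs g⁻¹ := by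
      rintro v ⟨hvpos, hvy⟩
      rw [hyapply] at hvy
      have : ∃ g ∈ Gfin, xf (uap (rho cs g⁻¹) v) < 0 := by
        by_contra hc
        push_neg at hc
        have : 0 ≤ ∑ g ∈ Gfin, xf (uap (rho cs g⁻¹) v) :=
          Finset.sum_nonneg fun g hg => hc g hg
        linarith
      obtain ⟨g, hgmem, hneg⟩ := this
      have hroot : uap (rho cs g⁻¹) v ∈ Root cs := root_map cs hvpos.1 g⁻¹
      have hrn : rneg (uap (rho cs g⁻¹) v) := by
        rcases root_dichotomy cs hroot with h | h
        · exfalso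
          have := xf_pos cs ⟨hroot, h⟩
          linarith
        · exact h
      exact Set.mem_biUnion hgmem ⟨hvpos, hrn⟩
    apply Set.Finite.subset _ hsub
    apply Set.Finite.biUnion (Gfin.finite_toSet)
    intro g _
    exact flipSet_finite cs (cs.length g⁻¹) g⁻¹ (le_refl _)
  -- move into the chamber
  obtain ⟨w, hw⟩ := toCh cs (Nf cs y).ncard y hyNf (le_refl _)
  set z := dact cs w y with hz
  set A : Set B := {i : B | z (al i) = 0} with hA
  refine ⟨w, A, ?_, ?_⟩
  · -- finiteness of W_A
    apply WA_finite_of_RA_finite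
    -- roots supported in A vanish under z
    have hzv : ∀ v : B → ℝ, suppA A v → z v = 0 := by
      intro v hv
      have he : z v = ∑ b, v b * z (al b) := by
        conv_lhs => rw [decomp_al v]
        rw [map_sum]
        congr 1; ext b; rw [map_smul]; rfl
      rw [he]
      apply Finset.sum_eq_zero
      intro b _
      by_cases hbA : b ∈ A
      · rw [hA] at hbA
        rw [hbA]; ring
      · rw [hv b hbA]; ring
    -- the set of positive roots killed by z is finite
    set F : Set (B → ℝ) := ⋃ g ∈ Gfin, FlipSet cs g⁻¹ with hF
    have hFfin : F.Finite := by
      apply Set.Finite.biUnion (Gfin.finite_toSet)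
      intro g _
      exact flipSet_finite cs (cs.length g⁻¹) g⁻¹ (le_refl _)
    have hZfin : ({v | v ∈ PosRoot cs ∧ z v = 0}).Finite := by
      have hsub : {v | v ∈ PosRoot cs ∧ z v = 0} ⊆
          (uap (rho cs w) '' F) ∪ (Neg.neg '' (uap (rho cs w) '' F)) := by
        rintro γ ⟨hγpos, hγz⟩
        have hδroot : uap (rho cs w⁻¹) γ ∈ Root cs := root_map cs hγpos.1 w⁻¹
        have hyδ : y (uap (rho cs w⁻¹) γ) = 0 := by
          rw [hz, dact_apply] at hγz
          exact hγz
        have hterm : ∀ δ, δ ∈ PosRoot cs → y δ = 0 → δ ∈ F := by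
          intro δ hδpos hδy
          rw [hyapply] at hδy
          have : ∃ g ∈ Gfin, xf (uap (rho cs g⁻¹) δ) < 0 := by
            by_contra hc
            push_neg at hc
            have hpos : 0 < ∑ g ∈ Gfin, xf (uap (rho cs g⁻¹) δ) := by
              apply Finset.sum_pos'
              · exact hc
              · refine ⟨1, h1G, ?_⟩
                rw [inv_one, map_one, uap_one]
                exact xf_pos cs hδpos
            linarith
          obtain ⟨g, hgmem, hneg⟩ := this
          have hroot : uap (rho cs g⁻¹) δ ∈ Root cs := root_map cs hδpos.1 g⁻¹
          have hrn : rneg (uap (rho cs g⁻¹) δ) := by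
            rcases root_dichotomy cs hroot with h | h
            · exfalso; have := xf_pos cs ⟨hroot, h⟩; linarith
            · exact h
          exact Set.mem_biUnion hgmem ⟨hδpos, hrn⟩
        rcases root_dichotomy cs hδroot with h | h
        · left
          refine ⟨uap (rho cs w⁻¹) γ, hterm _ ⟨hδroot, h⟩ hyδ, ?_⟩
          rw [← uap_mul, ← map_mul, mul_inv_cancel, map_one, uap_one]
        · right
          have hmem : -(uap (rho cs w⁻¹) γ) ∈ F := by
            apply hterm
            · exact ⟨root_neg cs hδroot, rneg_iff_rpos_neg.mp h⟩
            · rw [map_neg, hyδ]; ring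
          refine ⟨uap (rho cs w) (-(uap (rho cs w⁻¹) γ)), Set.mem_image_of_mem _ hmem, ?_⟩
          rw [uap_neg, ← uap_mul, ← map_mul, mul_inv_cancel, map_one, uap_one, neg_neg]
      apply Set.Finite.subset _ hsub
      exact ((hFfin.image _).union ((hFfin.image _).image _))
    -- now RA A is finite
    have hsub2 : RA cs A ⊆ {v | v ∈ PosRoot cs ∧ z v = 0} ∪
        (Neg.neg '' {v | v ∈ PosRoot cs ∧ z v = 0}) := by
      rintro v ⟨hvroot, hvsupp⟩
      rcases root_dichotomy cs hvroot with h | h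
      · exact Or.inl ⟨⟨hvroot, h⟩, hzv v hvsupp⟩
      · right
        refine ⟨-v, ⟨⟨root_neg cs hvroot, rneg_iff_rpos_neg.mp h⟩, ?_⟩, by rw [neg_neg]⟩
        rw [map_neg, hzv v hvsupp]
        ring
    exact Set.Finite.subset (hZfin.union (hZfin.image _)) hsub2
  · -- conjugation into W_A
    intro g hg
    apply stab_in_WA cs (cs.length (w * g * w⁻¹)) _ z (le_refl _) hw
    rw [hz, ← dact_mul, show w * g * w⁻¹ * w = w * g by group, dact_mul, hyinv g hg]

end TitsFinSub



/-- `S` is a set of Coxeter generators for `W`: there is a Coxeter matrix indexed by `S`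
and a Coxeter system on `W` whose simple reflections are exactly the elements of `S`. -/
def IsCoxeterGeneratingSet {W : Type*} [Group W] (S : Set W) : Prop :=
  ∃ (M : CoxeterMatrix S) (cs : CoxeterSystem M W), ∀ s : S, cs.simple s = (s : W)

/-- `(W, S)` is right-angled: for distinct `s, t ∈ S`, the order `m(s,t)` of `st` in `W`
is `2` or `∞` (`orderOf (s * t) = 0` meaning infinite order). -/
def IsRightAngled {W : Type*} [Group W] (S : Set W) : Prop :=
  ∀ s ∈ S, ∀ t ∈ S, s ≠ t → orderOf (s * t) = 2 ∨ orderOf (s * t) = 0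

/-- The nerve `N(W,S)`: nonempty subsets `A ⊆ S` generating a finite standard subgroup. -/
def nerve {W : Type*} [Group W] (S : Set W) : Set (Set W) :=
  {A | A ⊆ S ∧ A.Nonempty ∧ (Subgroup.closure A : Set W).Finite}

/-- `N*(W,S)`: the maximal elements of the nerve under inclusion. -/
def nerveMax {W : Type*} [Group W] (S : Set W) : Set (Set W) :=
  {A | A ∈ nerve S ∧ ∀ B ∈ nerve S, A ⊆ B → A = B}

/-- The image `q(W_A)` of the standard subgroup `W_A` under the abelianization map
`q : W → W/[W,W]`. -/
def qImage {W : Type*} [Group W] (A : Set W) : Subgroup (Abelianization W) :=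
  (Subgroup.closure A).map Abelianization.of

/-- Every finite subgroup of a Coxeter group is contained in a finite parabolic subgroup:
there are `w ∈ W` and `A ⊆ S` with `W_A` finite and `G ≤ w W_A w⁻¹`. -/
theorem finite_subgroup_le_finite_parabolic
    {W : Type*} [Group W] (S : Set W) (hSfin : S.Finite)
    (hS : IsCoxeterGeneratingSet S)
    (G : Subgroup W) (hG : (G : Set W).Finite) :
    ∃ (w : W) (A : Set W), A ⊆ S ∧ (Subgroup.closure A : Set W).Finite ∧
      G ≤ (Subgroup.closure A).map (MulAut.conj w).toMonoidHom := by
  obtain ⟨M, cs, hsimple⟩ := hS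
  haveI : Fintype ↥S := hSfin.fintype
  obtain ⟨w, A, hfin, hconj⟩ := TitsFinSub.main_cs cs G hG
  have himg : cs.simple '' A = (Subtype.val '' A : Set W) := by
    apply Set.image_congr
    intro a _
    exact hsimple a
  have hWA : (TitsFinSub.WA cs A : Set W) = (Subgroup.closure (Subtype.val '' A) : Set W) := by
    rw [TitsFinSub.WA, himg]
  refine ⟨w⁻¹, Subtype.val '' A, ?_, ?_, ?_⟩
  · rintro - ⟨a, -, rfl⟩
    exact a.2
  · rw [← hWA]
    exact hfin
  · intro g hg
    rw [Subgroup.mem_map]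
    refine ⟨w * g * w⁻¹, ?_, ?_⟩
    · have := hconj g hg
      rw [TitsFinSub.WA, himg] at this
      exact this
    · show (MulAut.conj w⁻¹) (w * g * w⁻¹) = g
      rw [MulAut.conj_apply]
      group
end

section
/- Let (W,S) be a right-angled Coxeter system with S finite. Then every element of W has order 1, 2, or infinite order. -/
namespace RACGAux

open Monoid PushoutI List

section Pushout

variable {ι : Type*} {G : ι → Type*} {H : Type*} [∀ i, Group (G i)] [Group H]
  (φ : ∀ i, H →* G i)

/-- Product of a list of letters in the pushout. -/
def wp (l : List (Σ i, G i)) : PushoutI φ :=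
  (l.map fun a => PushoutI.of (φ := φ) a.1 a.2).prod

@[simp] lemma wp_nil : wp φ ([] : List (Σ i, G i)) = 1 := rfl

lemma wp_cons (a : Σ i, G i) (l : List (Σ i, G i)) :
    wp φ (a :: l) = PushoutI.of (φ := φ) a.1 a.2 * wp φ l := by
  simp [wp]

lemma wp_append (l₁ l₂ : List (Σ i, G i)) :
    wp φ (l₁ ++ l₂) = wp φ l₁ * wp φ l₂ := by
  simp [wp]

lemma wp_singleton (a : Σ i, G i) : wp φ [a] = PushoutI.of (φ := φ) a.1 a.2 := by
  simp [wp]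

/-- A list of letters is nice if no letter lies in the image of the base and adjacent letters
lie in distinct factors. -/
def Nice (l : List (Σ i, G i)) : Prop :=
  (∀ a ∈ l, a.2 ∉ (φ a.1).range) ∧ l.IsChain (fun a b => a.1 ≠ b.1)

lemma nice_nil : Nice φ ([] : List (Σ i, G i)) := ⟨by simp, List.isChain_nil⟩

theorem wp_not_base (hφ : ∀ i, Function.Injective (φ i)) {l : List (Σ i, G i)}
    (hl : Nice φ l) (h0 : l ≠ []) : wp φ l ∉ (PushoutI.base φ).range := by
  intro hmem
  let w : CoprodI.Word G := ⟨l, fun a ha h1 => hl.1 a ha (by rw [h1]; exact one_mem _), hl.2⟩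
  have hred : PushoutI.Reduced φ w := fun a ha => hl.1 a ha
  have hprod : PushoutI.ofCoprodI (φ := φ) w.prod = wp φ l := by
    simp only [CoprodI.Word.prod, wp, map_list_prod, List.map_map]
    congr 1
  have := hred.eq_empty_of_mem_range hφ (by rw [hprod]; exact hmem)
  apply h0
  have : w.toList = ([] : List (Σ i, G i)) := by rw [this]; rfl
  exact this

theorem wp_ne_one (hφ : ∀ i, Function.Injective (φ i)) {l : List (Σ i, G i)}
    (hl : Nice φ l) (h0 : l ≠ []) : wp φ l ≠ 1 := by
  intro h
  exact wp_not_base φ hφ hl h0 (by rw [h]; exact one_mem _)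

theorem orderOf_wp_eq_zero (hφ : ∀ i, Function.Injective (φ i)) {l : List (Σ i, G i)}
    (hl : Nice φ l) (h0 : l ≠ []) (hcyc : (l.getLast h0).1 ≠ (l.head h0).1) :
    orderOf (wp φ l) = 0 := by
  obtain ⟨a, t, rfl⟩ := List.exists_cons_of_ne_nil h0
  have key : ∀ n : ℕ, Nice φ (List.replicate n (a :: t)).flatten ∧
      ((List.replicate n (a :: t)).flatten = [] ∨
        ((List.replicate n (a :: t)).flatten).head? = some a) ∧
      wp φ (List.replicate n (a :: t)).flatten = (wp φ (a :: t)) ^ n := by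
    intro n
    induction n with
    | zero => exact ⟨nice_nil φ, Or.inl rfl, by simp⟩
    | succ n ih =>
      have hrep : (List.replicate (n+1) (a :: t)).flatten
          = (a :: t) ++ (List.replicate n (a :: t)).flatten := by
        rw [List.replicate_succ, List.flatten_cons]
      refine ⟨⟨?_, ?_⟩, ?_, ?_⟩
      · rw [hrep]
        intro x hx
        rcases List.mem_append.mp hx with hx | hx
        · exact hl.1 x hx
        · exact ih.1.1 x hx
      · rw [hrep]
        rw [List.isChain_append]
        refine ⟨hl.2, ih.1.2, ?_⟩
        intro x hx y hy
        rcases ih.2.1 with hnil | hhead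
        · rw [hnil] at hy; simp at hy
        · rw [hhead] at hy
          simp only [Option.mem_def, Option.some.injEq] at hy
          subst hy
          have hx' : (a :: t).getLast (by simp) = x := by
            rwa [List.getLast?_eq_getLast (l := a :: t) (by simp), Option.mem_def, Option.some.injEq] at hx
          subst hx'
          exact hcyc
      · rw [hrep]
        rcases ih.2.1 with hnil | hhead
        · rw [hnil]; simp
        · right
          rw [List.head?_append_of_ne_nil _ (by simp)]
          simp
      · rw [hrep, wp_append, ih.2.2, pow_succ']
  rw [orderOf_eq_zero_iff']
  intro n hn hpow
  obtain ⟨m, rfl⟩ := Nat.exists_eq_succ_of_ne_zero hn.ne'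
  have h1 := (key (m+1)).1
  have h3 := (key (m+1)).2.2
  rw [hpow] at h3
  refine wp_ne_one φ hφ h1 ?_ h3
  rw [List.replicate_succ, List.flatten_cons]
  simp

lemma nice_tail {a : Σ i, G i} {t : List (Σ i, G i)} (h : Nice φ (a :: t)) : Nice φ t :=
  ⟨fun x hx => h.1 x (List.mem_cons_of_mem _ hx), h.2.tail⟩

lemma nice_mod_head (h₀ : H) {a : Σ i, G i} {t : List (Σ i, G i)} (h : Nice φ (a :: t)) :
    Nice φ (⟨a.1, φ a.1 h₀ * a.2⟩ :: t) := by
  constructor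
  · intro x hx
    rcases List.mem_cons.mp hx with rfl | hx
    · rintro ⟨c, hc⟩
      refine h.1 a (List.mem_cons_self) ⟨h₀⁻¹ * c, ?_⟩
      rw [map_mul, map_inv, hc]
      group
    · exact h.1 x (List.mem_cons_of_mem _ hx)
  · rw [List.isChain_cons]
    exact ⟨fun y hy => (List.isChain_cons.mp h.2).1 y hy, h.2.tail⟩

lemma base_mul_wp_cons (h₀ : H) (a : Σ i, G i) (t : List (Σ i, G i)) :
    PushoutI.base φ h₀ * wp φ (a :: t) = wp φ (⟨a.1, φ a.1 h₀ * a.2⟩ :: t) := by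
  rw [wp_cons, wp_cons, ← mul_assoc, ← PushoutI.of_apply_eq_base φ a.1 h₀, ← map_mul]

lemma Lbase (h₀ : H) (l : List (Σ i, G i)) (h : H) (hl : Nice φ l) :
    ∃ l' h', Nice φ l' ∧
      PushoutI.base φ h₀ * (wp φ l * PushoutI.base φ h) = wp φ l' * PushoutI.base φ h' := by
  cases l with
  | nil => exact ⟨[], h₀ * h, nice_nil φ, by simp [map_mul, mul_assoc]⟩
  | cons a t =>
    refine ⟨⟨a.1, φ a.1 h₀ * a.2⟩ :: t, h, nice_mod_head φ h₀ hl, ?_⟩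
    rw [← mul_assoc, base_mul_wp_cons]

lemma Lof (i : ι) (x : G i) (l : List (Σ i, G i)) (h : H) (hl : Nice φ l) :
    ∃ l' h', Nice φ l' ∧
      PushoutI.of (φ := φ) i x * (wp φ l * PushoutI.base φ h) = wp φ l' * PushoutI.base φ h' := by
  by_cases hx : x ∈ (φ i).range
  · obtain ⟨h₀, rfl⟩ := hx
    rw [PushoutI.of_apply_eq_base]
    exact Lbase φ h₀ l h hl
  · cases l with
    | nil =>
      exact ⟨[⟨i, x⟩], h, ⟨by simpa using hx, List.isChain_singleton _⟩, by
        rw [wp_singleton]; simp [mul_assoc]⟩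
    | cons a t =>
      obtain ⟨j, y⟩ := a
      by_cases hij : i = j
      · subst hij
        by_cases hz : x * y ∈ (φ i).range
        · obtain ⟨h₀, hh₀⟩ := hz
          obtain ⟨l', h', hl', heq⟩ := Lbase φ h₀ t h (nice_tail φ hl)
          refine ⟨l', h', hl', ?_⟩
          rw [← heq, wp_cons, ← PushoutI.of_apply_eq_base φ i h₀, hh₀, map_mul]
          simp [mul_assoc]
        · refine ⟨⟨i, x * y⟩ :: t, h, ⟨?_, ?_⟩, ?_⟩
          · intro u hu
            rcases List.mem_cons.mp hu with rfl | hu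
            · exact hz
            · exact hl.1 u (List.mem_cons_of_mem _ hu)
          · rw [List.isChain_cons]
            exact ⟨fun y' hy' => (List.isChain_cons.mp hl.2).1 y' hy', hl.2.tail⟩
          · rw [wp_cons, wp_cons, map_mul]
            simp [mul_assoc]
      · refine ⟨⟨i, x⟩ :: ⟨j, y⟩ :: t, h, ⟨?_, ?_⟩, ?_⟩
        · intro u hu
          rcases List.mem_cons.mp hu with rfl | hu
          · exact hx
          · exact hl.1 u hu
        · rw [List.isChain_cons_cons]
          exact ⟨hij, hl.2⟩
        · rw [wp_cons, wp_cons, wp_cons]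
          simp [mul_assoc]

theorem exists_nice_form (g : PushoutI φ) :
    ∃ l h, Nice φ l ∧ g = wp φ l * PushoutI.base φ h := by
  have key : ∀ (x : PushoutI φ) (l : List (Σ i, G i)) (h : H), Nice φ l →
      ∃ l' h', Nice φ l' ∧ x * (wp φ l * PushoutI.base φ h) = wp φ l' * PushoutI.base φ h' := by
    intro x
    induction x using PushoutI.induction_on with
    | of i g => exact fun l h hl => Lof φ i g l h hl
    | base h₀ => exact fun l h hl => Lbase φ h₀ l h hl
    | mul x y hx hy =>
      intro l h hl
      obtain ⟨l', h', hl', hy'⟩ := hy l h hl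
      obtain ⟨l'', h'', hl'', hx'⟩ := hx l' h' hl'
      exact ⟨l'', h'', hl'', by rw [mul_assoc, hy', hx']⟩
  obtain ⟨l, h, hl, hg⟩ := key g [] 1 (nice_nil φ)
  refine ⟨l, h, hl, ?_⟩
  simpa using hg

/-- Explicit conjugacy. -/
def Cj {Γ : Type*} [Group Γ] (a b : Γ) : Prop := ∃ c, c * a * c⁻¹ = b

lemma Cj.trans {Γ : Type*} [Group Γ] {a b c : Γ} (h₁ : Cj a b) (h₂ : Cj b c) : Cj a c := by
  obtain ⟨u, hu⟩ := h₁
  obtain ⟨v, hv⟩ := h₂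
  exact ⟨v * u, by rw [← hv, ← hu]; group⟩

lemma Cj.orderOf_eq {Γ : Type*} [Group Γ] {a b : Γ} (h : Cj a b) :
    orderOf a = orderOf b := by
  obtain ⟨c, rfl⟩ := h
  exact SemiconjBy.orderOf_eq c (show c * a = (c * a * c⁻¹) * c by group)

theorem conj_reduce [Nonempty ι] (hφ : ∀ i, Function.Injective (φ i)) :
    ∀ (n : ℕ) (l : List (Σ i, G i)) (h : H), l.length ≤ n → Nice φ l →
    ∃ g', Cj (wp φ l * PushoutI.base φ h) g' ∧
      ((∃ i x, g' = PushoutI.of (φ := φ) i x) ∨ orderOf g' = 0) := by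
  have nilcase : ∀ h : H, ∃ g', Cj (wp φ ([] : List (Σ i, G i)) * PushoutI.base φ h) g' ∧
      ((∃ i x, g' = PushoutI.of (φ := φ) i x) ∨ orderOf g' = 0) := by
    intro h
    obtain ⟨i₀⟩ := (inferInstance : Nonempty ι)
    exact ⟨PushoutI.of (φ := φ) i₀ (φ i₀ h), ⟨1, by simp [PushoutI.of_apply_eq_base]⟩,
      Or.inl ⟨i₀, _, rfl⟩⟩
  intro n
  induction n with
  | zero =>
    intro l h hlen hl
    obtain rfl : l = [] := List.eq_nil_of_length_eq_zero (Nat.le_zero.mp hlen)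
    exact nilcase h
  | succ n ih =>
    intro l h hlen hl
    cases l with
    | nil => exact nilcase h
    | cons a t =>
      cases t with
      | nil =>
        refine ⟨PushoutI.of (φ := φ) a.1 (a.2 * φ a.1 h), ⟨1, ?_⟩, Or.inl ⟨_, _, rfl⟩⟩
        rw [wp_singleton]
        simp [map_mul, PushoutI.of_apply_eq_base, mul_assoc]
      | cons c t' =>
        obtain ⟨m, bb, hm⟩ : ∃ (m : List ((i : ι) × G i)) (bb : (i : ι) × G i), m ++ [bb] = c :: t' :=
          ⟨(c :: t').dropLast, (c :: t').getLast (by simp),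
            List.dropLast_append_getLast (by simp)⟩
        rw [← hm] at hl hlen ⊢
        obtain ⟨i, x⟩ := a
        have htt : Nice φ (m ++ [bb]) := nice_tail φ hl
        have hnm : Nice φ m := ⟨fun u hu => htt.1 u (List.mem_append_left _ hu),
          htt.2.prefix ⟨[bb], rfl⟩⟩
        have hjunction : ∀ u ∈ m.getLast?, u.1 ≠ bb.1 := by
          have h2 := htt.2
          rw [List.isChain_append] at h2
          intro u hu
          exact h2.2.2 u hu bb (by simp)
        have hlen' : m.length + 2 ≤ n + 1 := by simpa using hlen
        by_cases hab : i = bb.1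
        · -- cyclically reduce
          subst hab
          have ceq : (PushoutI.of (φ := φ) bb.1 x)⁻¹ *
              (wp φ (⟨bb.1, x⟩ :: (m ++ [bb])) * PushoutI.base φ h) *
                (PushoutI.of (φ := φ) bb.1 x) =
              wp φ m * PushoutI.of (φ := φ) bb.1 (bb.2 * (φ bb.1 h * x)) := by
            rw [wp_cons, wp_append, wp_singleton, map_mul, map_mul,
              ← PushoutI.of_apply_eq_base φ bb.1 h]
            group
          by_cases hzr : bb.2 * (φ bb.1 h * x) ∈ (φ bb.1).range
          · obtain ⟨h₂, hh₂⟩ := hzr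
            obtain ⟨g', hcj, hres⟩ := ih m h₂ (by omega) hnm
            refine ⟨g', Cj.trans ⟨(PushoutI.of (φ := φ) bb.1 x)⁻¹, ?_⟩ hcj, hres⟩
            rw [inv_inv, ceq, ← hh₂, PushoutI.of_apply_eq_base]
          · have hnl' : Nice φ (m ++ [⟨bb.1, bb.2 * (φ bb.1 h * x)⟩]) := by
              constructor
              · intro u hu
                rcases List.mem_append.mp hu with hu | hu
                · exact hnm.1 u hu
                · simp only [List.mem_singleton] at hu
                  subst hu
                  exact hzr
              · rw [List.isChain_append]
                refine ⟨hnm.2, List.isChain_singleton _, ?_⟩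
                intro u hu y hy
                simp only [List.head?_cons, Option.mem_def, Option.some.injEq] at hy
                subst hy
                exact hjunction u hu
            obtain ⟨g', hcj, hres⟩ :=
              ih (m ++ [⟨bb.1, bb.2 * (φ bb.1 h * x)⟩]) 1 (by simpa using by omega) hnl'
            refine ⟨g', Cj.trans ⟨(PushoutI.of (φ := φ) bb.1 x)⁻¹, ?_⟩ hcj, hres⟩
            rw [inv_inv, ceq, wp_append, wp_singleton]
            simp
        · -- cyclically reduced, infinite order
          have hnl' : Nice φ (⟨i, φ i h * x⟩ :: (m ++ [bb])) := nice_mod_head φ h hl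
          have hne : (⟨i, φ i h * x⟩ :: (m ++ [bb]) : List ((i : ι) × G i)) ≠ [] := by simp
          have hcyc : ((⟨i, φ i h * x⟩ :: (m ++ [bb])).getLast hne).1 ≠
              ((⟨i, φ i h * x⟩ :: (m ++ [bb])).head hne).1 := by
            have hgl : (⟨i, φ i h * x⟩ :: (m ++ [bb])).getLast hne = bb := by
              rw [List.getLast_cons (by simp : m ++ [bb] ≠ []),
                List.getLast_append_right (by simp : [bb] ≠ [])]
              rfl
            rw [hgl]
            exact fun hcon => hab hcon.symm
          refine ⟨wp φ (⟨i, φ i h * x⟩ :: (m ++ [bb])), ⟨PushoutI.base φ h, ?_⟩,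
            Or.inr (orderOf_wp_eq_zero φ hφ hnl' hne hcyc)⟩
          have hgrp : PushoutI.base φ h * (wp φ (⟨i, x⟩ :: (m ++ [bb])) * PushoutI.base φ h) *
              (PushoutI.base φ h)⁻¹ = PushoutI.base φ h * wp φ (⟨i, x⟩ :: (m ++ [bb])) := by
            group
          rw [hgrp, base_mul_wp_cons]

theorem torsion_case [Nonempty ι] (hφ : ∀ i, Function.Injective (φ i)) (g : PushoutI φ)
    (hg : orderOf g ≠ 0) :
    ∃ i, ∃ x, ∃ c : PushoutI φ, c * PushoutI.of (φ := φ) i x * c⁻¹ = g := by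
  obtain ⟨l, h, hl, rfl⟩ := exists_nice_form φ g
  obtain ⟨g', hcj, hres⟩ := conj_reduce φ hφ l.length l h le_rfl hl
  rcases hres with ⟨i, x, rfl⟩ | h0
  · obtain ⟨c, hc⟩ := hcj
    exact ⟨i, x, c⁻¹, by rw [← hc]; group⟩
  · exact absurd (hcj.orderOf_eq.trans h0) hg

end Pushout

section Coxeter

open CoxeterSystem

/-- Restriction of a Coxeter matrix to a subtype. -/
def csub {B : Type*} (M : CoxeterMatrix B) (p : B → Prop) : CoxeterMatrix {b // p b} where
  M := Matrix.of fun a b => M a.1 b.1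
  isSymm := by
    rw [Matrix.IsSymm]
    ext a b
    show M.M b.1 a.1 = M.M a.1 b.1
    exact M.isSymm.apply a.1 b.1
  diagonal a := M.diagonal a.1
  off_diagonal a b hab := M.off_diagonal a.1 b.1 fun hc => hab (Subtype.ext hc)

@[simp] lemma csub_apply {B : Type*} (M : CoxeterMatrix B) (p : B → Prop)
    (a b : {b // p b}) : csub M p a b = M a.1 b.1 := rfl

/-- Homomorphism between Coxeter groups induced by a map of indices compatible with
the matrices. -/
def cmap {B₁ B₂ : Type*} (M₁ : CoxeterMatrix B₁) (M₂ : CoxeterMatrix B₂) (f : B₁ → B₂)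
    (hf : ∀ a b, M₁ a b = M₂ (f a) (f b)) : M₁.Group →* M₂.Group :=
  M₁.toCoxeterSystem.lift ⟨fun b => M₂.simple (f b), fun a b => by
    rw [hf]
    exact M₂.toCoxeterSystem.simple_mul_simple_pow (f a) (f b)⟩

@[simp] lemma cmap_simple {B₁ B₂ : Type*} (M₁ : CoxeterMatrix B₁) (M₂ : CoxeterMatrix B₂)
    (f : B₁ → B₂) (hf : ∀ a b, M₁ a b = M₂ (f a) (f b)) (b : B₁) :
    cmap M₁ M₂ f hf (M₁.simple b) = M₂.simple (f b) :=
  M₁.toCoxeterSystem.lift_apply_simple _ b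

/-- A right-angled Coxeter matrix. -/
def IsRA {B : Type*} (M : CoxeterMatrix B) : Prop :=
  ∀ a b : B, a ≠ b → M a b = 2 ∨ M a b = 0

lemma isRA_csub {B : Type*} {M : CoxeterMatrix B} (h : IsRA M) (p : B → Prop) :
    IsRA (csub M p) :=
  fun a b hab => h a.1 b.1 fun hc => hab (Subtype.ext hc)

/-- In the "complete graph" case, the Coxeter group has exponent two. -/
lemma sq_eq_one_of_complete {B : Type*} (M : CoxeterMatrix B)
    (h2 : ∀ a b : B, a ≠ b → M a b = 2) (g : M.Group) : g * g = 1 := by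
  set cs := M.toCoxeterSystem with hcs
  have comm : ∀ i j : B, cs.simple i * cs.simple j = cs.simple j * cs.simple i := by
    intro i j
    rcases eq_or_ne i j with rfl | hij
    · rfl
    · have hp := cs.simple_mul_simple_pow i j
      rw [show M.M i j = 2 from h2 i j hij, pow_two] at hp
      have h1 : cs.simple i * cs.simple j = (cs.simple i * cs.simple j)⁻¹ :=
        eq_inv_of_mul_eq_one_left hp
      rw [h1, mul_inv_rev, cs.inv_simple, cs.inv_simple]
  have commAll : ∀ (x : M.Group) (i : B), cs.simple i * x = x * cs.simple i := by
    intro x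
    induction x using cs.simple_induction with
    | simple j => intro i; exact comm i j
    | one => intro i; rw [one_mul, mul_one]
    | mul u v hu hv =>
      intro i
      rw [← mul_assoc, hu i, mul_assoc, hv i, mul_assoc]
  suffices h : ∀ g : M.Group, g * g = 1 ∧ ∀ x : M.Group, g * x = x * g from (h g).1
  intro g
  induction g using cs.simple_induction with
  | simple i => exact ⟨cs.simple_mul_simple_self i, fun x => commAll x i⟩
  | one => exact ⟨one_mul 1, fun x => by rw [one_mul, mul_one]⟩
  | mul u v hu hv =>
    constructor
    · have hvu : v * u = u * v := hv.2 u
      calc u * v * (u * v) = u * (v * u) * v := by group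
        _ = u * (u * v) * v := by rw [hvu]
        _ = (u * u) * (v * v) := by group
        _ = 1 := by rw [hu.1, hv.1, one_mul]
    · intro x
      calc u * v * x = u * (x * v) := by rw [mul_assoc, hv.2 x]
        _ = x * (u * v) := by rw [← mul_assoc, hu.2 x, mul_assoc]

end Coxeter

section Step

open CoxeterSystem Monoid PushoutI

open Classical in
/-- Generic "kill some generators" liftability, valid for right-angled matrices. -/
lemma kill_liftable {B₁ B₂ : Type*} (M₁ : CoxeterMatrix B₁) (M₂ : CoxeterMatrix B₂)
    (hra : IsRA M₁) (q : B₁ → Prop) (f : ∀ b, q b → B₂)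
    (hf : ∀ a b (ha : q a) (hb : q b), M₁.M a b = M₂.M (f a ha) (f b hb))
    (e : B₁) (he : ∀ b, ¬q b → b = e) :
    CoxeterMatrix.IsLiftable M₁
      (fun b => if h : q b then M₂.simple (f b h) else 1) := by
  intro a b
  beta_reduce
  by_cases ha : q a <;> by_cases hb : q b
  · rw [dif_pos ha, dif_pos hb, hf a b ha hb]
    exact M₂.toCoxeterSystem.simple_mul_simple_pow (f a ha) (f b hb)
  · rw [dif_pos ha, dif_neg hb, mul_one]
    have hne : a ≠ b := fun hc => hb (hc ▸ ha)
    rcases hra a b hne with h2 | h0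
    · rw [h2]
      exact M₂.toCoxeterSystem.simple_sq (f a ha)
    · rw [h0, pow_zero]
  · rw [dif_neg ha, dif_pos hb, one_mul]
    have hne : a ≠ b := fun hc => ha (hc ▸ hb)
    rcases hra a b hne with h2 | h0
    · rw [h2]
      exact M₂.toCoxeterSystem.simple_sq (f b hb)
    · rw [h0, pow_zero]
  · rw [dif_neg ha, dif_neg hb, mul_one]
    rw [he a ha, he b hb, M₁.diagonal, pow_one]

open Classical in
lemma step {B : Type*} (M : CoxeterMatrix B) (hra : IsRA M) (s t : B) (hst : s ≠ t)
    (hMst : M.M s t = 0) (g : M.Group) (hg : orderOf g ≠ 0) :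
    ∃ (i : Bool) (x : (csub M (fun b => b ≠ cond i t s)).Group),
      orderOf x ∣ orderOf g ∧ (x * x = 1 → g * g = 1) := by
  classical
  let p : Bool → B → Prop := fun i b => b ≠ cond i t s
  let q : B → Prop := fun b => b ≠ s ∧ b ≠ t
  have hmem : ∀ (i : Bool) (c : {b // q b}), p i c.1 := by
    intro i c
    cases i
    · exact c.2.1
    · exact c.2.2
  let φf : ∀ i : Bool, (csub M q).Group →* (csub M (p i)).Group := fun i =>
    cmap (csub M q) (csub M (p i)) (fun c => ⟨c.1, hmem i c⟩) (fun a b => rfl)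
  have hrel : ∀ (pp : B → Prop) (u v : {b // pp b}),
      ((csub M pp).simple u * (csub M pp).simple v) ^ (M.M u.1 v.1) = 1 :=
    fun pp u v => (csub M pp).toCoxeterSystem.simple_mul_simple_pow u v
  have hss : ∀ (pp : B → Prop) (u : {b // pp b}),
      (csub M pp).simple u * (csub M pp).simple u = 1 :=
    fun pp u => (csub M pp).toCoxeterSystem.simple_mul_simple_self u
  -- injectivity of the amalgam maps
  have hφinj : ∀ i, Function.Injective (φf i) := by
    intro i
    have hee : p i (cond i s t) := by
      cases i
      · exact hst.symm
      · exact hst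
    have he : ∀ b : {b // p i b}, ¬ q b.1 → b = (⟨cond i s t, hee⟩ : {b // p i b}) := by
      intro b hb
      apply Subtype.ext
      rcases not_and_or.mp hb with h | h
      · have hbs : b.1 = s := not_not.mp h
        cases i
        · exact absurd hbs b.2
        · exact hbs
      · have hbt : b.1 = t := not_not.mp h
        cases i
        · exact hbt
        · exact absurd hbt b.2
    let r : (csub M (p i)).Group →* (csub M q).Group :=
      (csub M (p i)).toCoxeterSystem.lift ⟨_, kill_liftable (csub M (p i)) (csub M q)
        (isRA_csub hra _) (fun b => q b.1) (fun b h => ⟨b.1, h⟩) (fun a b ha hb => rfl)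
        ⟨cond i s t, hee⟩ he⟩
    have hr : ∀ x, r (φf i x) = x := by
      have hcomp : r.comp (φf i) = MonoidHom.id _ := by
        apply (csub M q).toCoxeterSystem.ext_simple
        intro c
        simp only [MonoidHom.comp_apply, MonoidHom.id_apply,
          CoxeterMatrix.toCoxeterSystem_simple]
        rw [show φf i ((csub M q).simple c) = (csub M (p i)).simple ⟨c.1, hmem i c⟩ from cmap_simple _ _ _ _ c]
        rw [show r ((csub M (p i)).simple ⟨c.1, hmem i c⟩) = _ from
          (csub M (p i)).toCoxeterSystem.lift_apply_simple _ ⟨c.1, hmem i c⟩]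
        beta_reduce
        rw [dif_pos c.2]
      exact fun x => DFunLike.congr_fun hcomp x
    exact fun u v huv => by rw [← hr u, ← hr v, huv]
  -- the map from the pushout to the Coxeter group
  let incl : ∀ i : Bool, (csub M (p i)).Group →* M.Group := fun i =>
    cmap (csub M (p i)) M Subtype.val (fun a b => rfl)
  let inclC : (csub M q).Group →* M.Group := cmap (csub M q) M Subtype.val (fun a b => rfl)
  have hcomm : ∀ i, (incl i).comp (φf i) = inclC := by
    intro i
    apply (csub M q).toCoxeterSystem.ext_simple
    intro c
    simp only [MonoidHom.comp_apply, CoxeterMatrix.toCoxeterSystem_simple]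
    rw [show φf i ((csub M q).simple c) = (csub M (p i)).simple ⟨c.1, hmem i c⟩ from cmap_simple _ _ _ _ c,
      show incl i ((csub M (p i)).simple ⟨c.1, hmem i c⟩) = M.simple c.1 from cmap_simple _ _ _ _ _,
      show inclC ((csub M q).simple c) = M.simple c.1 from cmap_simple _ _ _ _ c]
  let β : PushoutI φf →* M.Group := PushoutI.lift incl inclC hcomm
  have hβof : ∀ (i : Bool) (x : (csub M (p i)).Group),
      β (PushoutI.of (φ := φf) i x) = incl i x := fun i x => PushoutI.lift_of _ _ _ _
  -- the map from the Coxeter group to the pushout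
  let fα : B → PushoutI φf := fun b =>
    if hb : b = s then
      PushoutI.of (φ := φf) true ((csub M (p true)).simple ⟨b, fun hbt => hst (hb.symm.trans hbt)⟩)
    else PushoutI.of (φ := φf) false ((csub M (p false)).simple ⟨b, hb⟩)
  have hfαs : fα s = PushoutI.of (φ := φf) true ((csub M (p true)).simple ⟨s, hst⟩) :=
    dif_pos rfl
  have hfα' : ∀ (b : B) (hb : b ≠ s),
      fα b = PushoutI.of (φ := φf) false ((csub M (p false)).simple ⟨b, hb⟩) :=
    fun b hb => dif_neg hb
  have key : ∀ (b : B) (hbs : b ≠ s) (hbt : b ≠ t),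
      PushoutI.of (φ := φf) false ((csub M (p false)).simple ⟨b, hbs⟩)
        = PushoutI.of (φ := φf) true ((csub M (p true)).simple ⟨b, hbt⟩) := by
    intro b hbs hbt
    have h1 : (csub M (p false)).simple ⟨b, hbs⟩ = φf false ((csub M q).simple ⟨b, hbs, hbt⟩) := by
      exact (show φf false ((csub M q).simple ⟨b, hbs, hbt⟩) = (csub M (p false)).simple ⟨b, hbs⟩ from cmap_simple _ _ _ _ _).symm
    have h2 : (csub M (p true)).simple ⟨b, hbt⟩ = φf true ((csub M q).simple ⟨b, hbs, hbt⟩) := by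
      exact (show φf true ((csub M q).simple ⟨b, hbs, hbt⟩) = (csub M (p true)).simple ⟨b, hbt⟩ from cmap_simple _ _ _ _ _).symm
    rw [h1, h2, PushoutI.of_apply_eq_base, PushoutI.of_apply_eq_base]
  have hliftα : CoxeterMatrix.IsLiftable M fα := by
    intro b b'
    by_cases hb : b = s
    · subst hb
      by_cases hb' : b' = b
      · subst hb'
        rw [M.diagonal, pow_one, hfαs, ← map_mul, hss (p true) _, map_one]
      · by_cases hb't : b' = t
        · subst hb't
          rw [hMst, pow_zero]
        · rw [hfαs, hfα' b' hb', key b' hb' hb't, ← map_mul, ← map_pow,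
            hrel (p true) ⟨b, hst⟩ ⟨b', hb't⟩, map_one]
    · by_cases hb' : b' = s
      · subst hb'
        by_cases hbt : b = t
        · subst hbt
          rw [show M.M b b' = M.M b' b from (M.isSymm.apply b b').symm, hMst, pow_zero]
        · rw [hfαs, hfα' b hb, key b hb hbt, ← map_mul, ← map_pow,
            hrel (p true) ⟨b, hbt⟩ ⟨b', hst⟩, map_one]
      · rw [hfα' b hb, hfα' b' hb', ← map_mul, ← map_pow,
          hrel (p false) ⟨b, hb⟩ ⟨b', hb'⟩, map_one]
  let α : M.Group →* PushoutI φf := M.toCoxeterSystem.lift ⟨fα, hliftα⟩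
  have hαsimple : ∀ b : B, α (M.simple b) = fα b :=
    fun b => M.toCoxeterSystem.lift_apply_simple hliftα b
  have hcompβα : β.comp α = MonoidHom.id _ := by
    apply M.toCoxeterSystem.ext_simple
    intro b
    simp only [MonoidHom.comp_apply, MonoidHom.id_apply, CoxeterMatrix.toCoxeterSystem_simple]
    rw [hαsimple]
    by_cases hb : b = s
    · subst hb
      rw [hfαs, hβof]
      exact cmap_simple _ _ _ _ _
    · rw [hfα' b hb, hβof]
      exact cmap_simple _ _ _ _ _
  have hβαfun : ∀ x, β (α x) = x := fun x => DFunLike.congr_fun hcompβα x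
  -- torsion in the pushout
  have hαinj : Function.Injective α := fun u v huv => by rw [← hβαfun u, ← hβαfun v, huv]
  have hordα : orderOf (α g) = orderOf g := orderOf_injective α hαinj g
  obtain ⟨i, x, c, hc⟩ := torsion_case φf hφinj (α g) (by rw [hordα]; exact hg)
  -- retraction of the whole group onto a factor
  let R : ∀ i : Bool, M.Group →* (csub M (p i)).Group := fun i =>
    M.toCoxeterSystem.lift ⟨_, kill_liftable M (csub M (p i)) hra (p i)
      (fun b h => ⟨b, h⟩) (fun a b ha hb => rfl) (cond i t s) (fun b hb => not_not.mp hb)⟩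
  have hR : ∀ (i : Bool) (y : (csub M (p i)).Group), R i (incl i y) = y := by
    intro i
    have hcomp : (R i).comp (incl i) = MonoidHom.id _ := by
      apply (csub M (p i)).toCoxeterSystem.ext_simple
      intro u
      simp only [MonoidHom.comp_apply, MonoidHom.id_apply, CoxeterMatrix.toCoxeterSystem_simple]
      rw [show incl i ((csub M (p i)).simple u) = M.simple u.1 from cmap_simple _ _ _ _ u]
      rw [show (R i) (M.simple u.1) = _ from M.toCoxeterSystem.lift_apply_simple _ u.1]
      beta_reduce
      rw [dif_pos u.2]
    exact fun y => DFunLike.congr_fun hcomp y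
  have hβc : β c * incl i x * (β c)⁻¹ = g := by
    have h := congrArg β hc
    rw [map_mul, map_mul, map_inv, hβof, hβαfun] at h
    exact h
  refine ⟨i, x, ?_, ?_⟩
  · have h1 : orderOf x = orderOf (R i (incl i x)) := by rw [hR i x]
    have h2 : orderOf (incl i x) = orderOf g := Cj.orderOf_eq ⟨β c, hβc⟩
    rw [h1, ← h2]
    exact orderOf_map_dvd (R i) (incl i x)
  · intro hxx
    have h2 : incl i x * incl i x = 1 := by rw [← map_mul, hxx, map_one]
    rw [← hβc]
    calc β c * incl i x * (β c)⁻¹ * (β c * incl i x * (β c)⁻¹)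
        = β c * (incl i x * incl i x) * (β c)⁻¹ := by group
      _ = 1 := by rw [h2, mul_one, mul_inv_cancel]

universe u

theorem main : ∀ (n : ℕ) (B : Type u) [Fintype B] (M : CoxeterMatrix B), IsRA M →
    Fintype.card B ≤ n → ∀ g : M.Group, g * g = 1 ∨ orderOf g = 0 := by
  intro n
  induction n with
  | zero =>
    intro B _ M hra hcard g
    left
    apply sq_eq_one_of_complete M ?_ g
    intro a b hab
    have h1 : 0 < Fintype.card B := Fintype.card_pos_iff.mpr ⟨a⟩
    omega
  | succ n ih =>
    intro B _ M hra hcard g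
    by_cases hpair : ∃ s t, s ≠ t ∧ M.M s t = 0
    · obtain ⟨s, t, hst, hMst⟩ := hpair
      by_cases hg : orderOf g = 0
      · right; exact hg
      · left
        obtain ⟨i, x, hdvd, himp⟩ := step M hra s t hst hMst g hg
        classical
        have hcard' : Fintype.card {b // b ≠ cond i t s} ≤ n := by
          have h1 := Fintype.card_subtype_lt (p := fun b => b ≠ cond i t s)
            (x := cond i t s) (by simp)
          have h2 : Fintype.card {x // (fun b => b ≠ cond i t s) x}
              = Fintype.card {b // b ≠ cond i t s} := Fintype.card_congr (Equiv.refl _)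
          omega
        rcases ih {b // b ≠ cond i t s} (csub M (fun b => b ≠ cond i t s))
            (isRA_csub hra _) hcard' x with hx | hx
        · exact himp hx
        · rw [hx] at hdvd
          exact absurd (Nat.eq_zero_of_zero_dvd hdvd) hg
    · left
      push_neg at hpair
      apply sq_eq_one_of_complete M ?_ g
      intro a b hab
      rcases hra a b hab with h2 | h0
      · exact h2
      · exact absurd h0 (hpair a b hab)

end Step

end RACGAux


/-- In a right-angled Coxeter group, every element has order `1`, `2`, or `∞`
(`orderOf w = 0` meaning infinite order). -/
theorem orderOf_eq_one_or_two_or_infinite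
    {W : Type*} [Group W] (S : Set W) (hSfin : S.Finite)
    (hS : IsCoxeterGeneratingSet S) (hra : IsRightAngled S) :
    ∀ w : W, orderOf w = 1 ∨ orderOf w = 2 ∨ orderOf w = 0 := by
  classical
  obtain ⟨M, cs, hsimple⟩ := hS
  have hsymm : ∀ a b : W, orderOf (a * b) = orderOf (b * a) := fun a b =>
    SemiconjBy.orderOf_eq a⁻¹ (show a⁻¹ * (a * b) = (b * a) * a⁻¹ by group)
  have hne : ∀ {b b' : ↥S}, b ≠ b' → (b : W) ≠ (b' : W) :=
    fun hbb hc => hbb (Subtype.ext hc)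
  -- the "true" right-angled Coxeter matrix of `(W, S)`
  let M' : CoxeterMatrix ↥S :=
    { M := Matrix.of fun b b' => if b = b' then 1 else orderOf ((b : W) * (b' : W))
      isSymm := by
        rw [Matrix.IsSymm]
        ext b b'
        simp only [Matrix.transpose_apply, Matrix.of_apply]
        by_cases h : b = b'
        · rw [if_pos h.symm, if_pos h]
        · rw [if_neg (fun hc => h hc.symm), if_neg h, hsymm]
      diagonal := fun b => if_pos rfl
      off_diagonal := fun b b' hbb => by
        show (if b = b' then 1 else orderOf ((b : W) * (b' : W))) ≠ 1
        rw [if_neg hbb]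
        rcases hra b b.2 b' b'.2 (hne hbb) with h2 | h0
        · rw [h2]; omega
        · rw [h0]; omega }
  have hM'ne : ∀ {b b' : ↥S}, b ≠ b' → M'.M b b' = orderOf ((b : W) * (b' : W)) :=
    fun hbb => if_neg hbb
  have hRA : RACGAux.IsRA M' := by
    intro b b' hbb
    rw [hM'ne hbb]
    exact hra b b.2 b' b'.2 (hne hbb)
  -- the two mutually inverse homomorphisms
  have hd : CoxeterMatrix.IsLiftable M (fun b => M'.simple b) := by
    intro b b'
    rcases eq_or_ne b b' with rfl | hbb
    · rw [M.diagonal b, pow_one]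
      exact M'.toCoxeterSystem.simple_mul_simple_self b
    · have hW : ((b : W) * b') ^ (M.M b b') = 1 := by
        have h := cs.simple_mul_simple_pow b b'
        rwa [hsimple b, hsimple b'] at h
      have hdvd : orderOf ((b : W) * b') ∣ M.M b b' := orderOf_dvd_of_pow_eq_one hW
      rcases hra b b.2 b' b'.2 (hne hbb) with h2 | h0
      · obtain ⟨k, hk⟩ := h2 ▸ hdvd
        rw [hk, pow_mul]
        have hsq : (M'.simple b * M'.simple b') ^ 2 = 1 := by
          have h := M'.toCoxeterSystem.simple_mul_simple_pow b b'
          rwa [show M'.M b b' = 2 from (hM'ne hbb).trans h2] at h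
        rw [hsq, one_pow]
      · rw [show M.M b b' = 0 from Nat.eq_zero_of_zero_dvd (h0 ▸ hdvd), pow_zero]
  have he : CoxeterMatrix.IsLiftable M' (fun b => (b : W)) := by
    intro b b'
    rcases eq_or_ne b b' with rfl | hbb
    · rw [show M'.M b b = 1 from if_pos rfl, pow_one]
      show (b : W) * b = 1
      rw [← hsimple b]
      exact cs.simple_mul_simple_self b
    · rw [hM'ne hbb]
      exact pow_orderOf_eq_one _
  let d : W →* M'.Group := cs.lift ⟨fun b => M'.simple b, hd⟩
  let e : M'.Group →* W := M'.toCoxeterSystem.lift ⟨fun b => (b : W), he⟩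
  have hcompde : e.comp d = MonoidHom.id W := by
    apply cs.ext_simple
    intro b
    simp only [MonoidHom.comp_apply, MonoidHom.id_apply]
    rw [show d (cs.simple b) = M'.simple b from cs.lift_apply_simple hd b,
      show e (M'.simple b) = (b : W) from M'.toCoxeterSystem.lift_apply_simple he b,
      hsimple b]
  have hde : ∀ x, e (d x) = x := fun x => DFunLike.congr_fun hcompde x
  have hdinj : Function.Injective d := fun u v huv => by rw [← hde u, ← hde v, huv]
  intro w
  letI : Fintype ↥S := hSfin.fintype
  rcases RACGAux.main (Fintype.card ↥S) ↥S M' hRA le_rfl (d w) with h1 | h0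
  · have hw2 : w * w = 1 := hdinj (by rw [map_mul, h1, map_one])
    have hdvd2 : orderOf w ∣ 2 := orderOf_dvd_of_pow_eq_one (by rw [pow_two]; exact hw2)
    rcases Nat.prime_two.eq_one_or_self_of_dvd _ hdvd2 with h | h
    · exact Or.inl h
    · exact Or.inr (Or.inl h)
  · refine Or.inr (Or.inr ?_)
    rw [← orderOf_injective d hdinj w]
    exact h0
end

section
/- Let W be a group and let S and S' be two finite subsets of W such that (W,S) and (W,S') are Coxeter systems. If (W,S) is a right-angled Coxeter system, then (W,S') is also a right-angled Coxeter system. -/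
open Monoid Function List

namespace RAProofAux

section Pushout

variable {ι : Type*} {G : ι → Type*} [∀ i, Group (G i)] {H : Type*} [Group H]
  {φ : ∀ i, H →* G i}

/-- Product of a list of letters in the pushout. -/
def prodl (φ : ∀ i, H →* G i) (l : List (Σ i, G i)) : PushoutI φ :=
  (l.map fun p => PushoutI.of (φ := φ) p.1 p.2).prod

@[simp] theorem prodl_nil : prodl φ [] = 1 := rfl

@[simp] theorem prodl_cons (p : Σ i, G i) (l : List (Σ i, G i)) :
    prodl φ (p :: l) = PushoutI.of (φ := φ) p.1 p.2 * prodl φ l := by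
  simp [prodl]

theorem prodl_append (l₁ l₂ : List (Σ i, G i)) :
    prodl φ (l₁ ++ l₂) = prodl φ l₁ * prodl φ l₂ := by
  simp [prodl]

/-- A list of letters is reduced: adjacent letters have distinct indices and no letter is in
the image of the base group. -/
def Red (φ : ∀ i, H →* G i) (l : List (Σ i, G i)) : Prop :=
  (l.map Sigma.fst).IsChain (· ≠ ·) ∧ ∀ p ∈ l, p.2 ∉ (φ p.1).range

theorem red_nil : Red φ ([] : List (Σ i, G i)) := ⟨List.isChain_nil, by simp⟩

theorem red_singleton {p : Σ i, G i} (hp : p.2 ∉ (φ p.1).range) : Red φ [p] :=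
  ⟨List.isChain_singleton _, by simpa using hp⟩

theorem Red.of_append_left {l₁ l₂ : List (Σ i, G i)} (h : Red φ (l₁ ++ l₂)) : Red φ l₁ :=
  ⟨by
    have := h.1
    rw [List.map_append, List.isChain_append] at this
    exact this.1,
   fun p hp => h.2 p (List.mem_append.2 (Or.inl hp))⟩

theorem Red.of_append_right {l₁ l₂ : List (Σ i, G i)} (h : Red φ (l₁ ++ l₂)) : Red φ l₂ :=
  ⟨by
    have := h.1
    rw [List.map_append, List.isChain_append] at this
    exact this.2.1,
   fun p hp => h.2 p (List.mem_append.2 (Or.inr hp))⟩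

theorem red_append {l₁ l₂ : List (Σ i, G i)} (h₁ : Red φ l₁) (h₂ : Red φ l₂)
    (hj : ∀ x ∈ (l₁.map Sigma.fst).getLast?, ∀ y ∈ (l₂.map Sigma.fst).head?, x ≠ y) :
    Red φ (l₁ ++ l₂) :=
  ⟨by
    rw [List.map_append, List.isChain_append]
    exact ⟨h₁.1, h₂.1, hj⟩,
   fun p hp => (List.mem_append.1 hp).elim (h₁.2 p) (h₂.2 p)⟩

theorem prodl_notin_base (hφ : ∀ i, Injective (φ i)) {l : List (Σ i, G i)}
    (hl : Red φ l) (hne : l ≠ []) : prodl φ l ∉ (PushoutI.base φ).range := by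
  classical
  have hchain : l.IsChain fun a b => a.1 ≠ b.1 := by
    have := hl.1
    rwa [List.isChain_map] at this
  set w : CoprodI.Word G :=
    ⟨l, fun p hp h1 => (hl.2 p hp) (h1 ▸ ⟨1, map_one _⟩), hchain⟩ with hw
  have hred : PushoutI.Reduced φ w := fun p hp => hl.2 p hp
  have hprod : PushoutI.ofCoprodI (φ := φ) w.prod = prodl φ l := by
    rw [CoprodI.Word.prod]
    show (PushoutI.ofCoprodI (φ := φ)) (List.prod _) = _
    rw [map_list_prod]
    simp [prodl, List.map_map, Function.comp_def]
    rfl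
  intro hmem
  rw [← hprod] at hmem
  have := hred.eq_empty_of_mem_range hφ hmem
  apply hne
  have : w.toList = [] := by rw [this]; rfl
  exact this

theorem prodl_ne_one (hφ : ∀ i, Injective (φ i)) {l : List (Σ i, G i)}
    (hl : Red φ l) (hne : l ≠ []) : prodl φ l ≠ 1 := by
  intro h
  exact prodl_notin_base hφ hl hne (h ▸ ⟨1, map_one _⟩)

theorem base_mul_of {i : ι} (h : H) (g : G i) :
    PushoutI.base φ h * PushoutI.of (φ := φ) i g = PushoutI.of (φ := φ) i (φ i h * g) := by
  rw [map_mul, PushoutI.of_apply_eq_base]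

theorem of_mul_base {i : ι} (h : H) (g : G i) :
    PushoutI.of (φ := φ) i g * PushoutI.base φ h = PushoutI.of (φ := φ) i (g * φ i h) := by
  rw [map_mul, PushoutI.of_apply_eq_base]

theorem base_mul_prodl (h : H) (l : List (Σ i, G i)) (hl : Red φ l) :
    ∃ l' h', Red φ l' ∧ l'.map Sigma.fst = l.map Sigma.fst ∧
      PushoutI.base φ h * prodl φ l = prodl φ l' * PushoutI.base φ h' := by
  cases l with
  | nil => exact ⟨[], h, red_nil, rfl, by simp⟩
  | cons p t =>
      refine ⟨⟨p.1, φ p.1 h * p.2⟩ :: t, 1, ⟨?_, ?_⟩, ?_, ?_⟩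
      · simpa using hl.1
      · intro q hq
        rcases List.mem_cons.1 hq with rfl | hq'
        · intro ⟨c, hc⟩
          exact hl.2 p List.mem_cons_self ⟨h⁻¹ * c, by
            rw [map_mul, hc, map_inv]; group⟩
        · exact hl.2 q (List.mem_cons_of_mem _ hq')
      · simp
      · simp [← mul_assoc, base_mul_of]

theorem prodl_mul_base_mul_prodl (n : ℕ) :
    ∀ (l₁ l₂ : List (Σ i, G i)) (h : H), l₁.length + l₂.length ≤ n →
      Red φ l₁ → Red φ l₂ →
      ∃ l h', Red φ l ∧
        prodl φ l₁ * PushoutI.base φ h * prodl φ l₂ = prodl φ l * PushoutI.base φ h' := by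
  induction n using Nat.strong_induction_on with
  | _ n ih =>
    intro l₁ l₂ h hlen h₁ h₂
    rcases List.eq_nil_or_concat' l₁ with rfl | ⟨L, p, rfl⟩
    · rcases base_mul_prodl h l₂ h₂ with ⟨l', h', hred', _, heq⟩
      exact ⟨l', h', hred', by simpa using heq⟩
    · have hLred : Red φ L := h₁.of_append_left
      have hpnotin : p.2 ∉ (φ p.1).range := h₁.2 p (by simp)
      have key : prodl φ (L ++ [p]) * PushoutI.base φ h * prodl φ l₂ =
          prodl φ L * PushoutI.of (φ := φ) p.1 (p.2 * φ p.1 h) * prodl φ l₂ := by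
        rw [prodl_append]
        simp only [prodl_cons, prodl_nil, mul_one]
        rw [mul_assoc (prodl φ L), of_mul_base]
      have hg' : p.2 * φ p.1 h ∉ (φ p.1).range := by
        intro ⟨c, hc⟩
        exact hpnotin ⟨c * h⁻¹, by rw [map_mul, hc, map_inv]; group⟩
      have hjunc : ∀ x ∈ (L.map Sigma.fst).getLast?, x ≠ p.1 := by
        have h11 := h₁.1
        rw [List.map_append, List.isChain_append] at h11
        intro x hx
        exact h11.2.2 x hx p.1 (by simp)
      cases l₂ with
      | nil =>
          refine ⟨L ++ [⟨p.1, p.2 * φ p.1 h⟩], 1, ?_, ?_⟩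
          · refine red_append hLred (red_singleton hg') ?_
            intro x hx y hy
            simp only [List.map_cons, List.map_nil, List.head?_cons, Option.mem_def,
              Option.some.injEq] at hy
            subst hy
            exact hjunc x hx
          · rw [key]; simp [prodl_append]
      | cons q t =>
          by_cases hiq : p.1 = q.1
          · -- merge letters
            rcases p with ⟨i, g₁⟩
            rcases q with ⟨j, g₂⟩
            cases hiq
            have htred : Red φ t := (show Red φ ([⟨i, g₂⟩] ++ t) from h₂).of_append_right
            by_cases hm : g₁ * φ i h * g₂ ∈ (φ i).range
            · rcases hm with ⟨c, hc⟩
              have heq2 : prodl φ (L ++ [⟨i, g₁⟩]) * PushoutI.base φ h * prodl φ (⟨i, g₂⟩ :: t) =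
                  prodl φ L * PushoutI.base φ c * prodl φ t := by
                rw [key, prodl_cons, mul_assoc (prodl φ L), mul_assoc (prodl φ L),
                  ← mul_assoc (PushoutI.of (φ := φ) i (g₁ * φ i h))]
                rw [show PushoutI.of (φ := φ) i (g₁ * φ i h) * PushoutI.of (φ := φ) i g₂ =
                  PushoutI.base φ c by rw [← map_mul, ← hc, PushoutI.of_apply_eq_base]]
              have hlt : L.length + t.length < n := by
                have h5 : (L ++ [(⟨i, g₁⟩ : Σ i, G i)]).length +
                    ((⟨i, g₂⟩ : Σ i, G i) :: t).length = L.length + t.length + 2 := by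
                  simp; omega
                omega
              rcases ih _ hlt L t c (le_refl _) hLred htred with ⟨l, h', hred, heq3⟩
              exact ⟨l, h', hred, by rw [heq2, heq3]⟩
            · refine ⟨L ++ ⟨i, g₁ * φ i h * g₂⟩ :: t, 1, ?_, ?_⟩
              · refine red_append hLred ⟨?_, ?_⟩ ?_
                · have h21 := h₂.1; simpa using h21
                · intro r hr
                  rcases List.mem_cons.1 hr with rfl | hr'
                  · exact hm
                  · exact htred.2 r hr'
                · intro x hx y hy
                  simp only [List.map_cons, List.head?_cons, Option.mem_def,
                    Option.some.injEq] at hy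
                  subst hy
                  exact hjunc x hx
              · rw [key, prodl_cons, prodl_append, prodl_cons]
                have : PushoutI.of (φ := φ) i (g₁ * φ i h) * (PushoutI.of (φ := φ) i g₂ *
                    prodl φ t) = PushoutI.of (φ := φ) i (g₁ * φ i h * g₂) * prodl φ t := by
                  rw [← mul_assoc, ← map_mul]
                rw [mul_assoc (prodl φ L), this]
                simp [mul_assoc]
          · refine ⟨L ++ ⟨p.1, p.2 * φ p.1 h⟩ :: q :: t, 1, ?_, ?_⟩
            · refine red_append hLred ⟨?_, ?_⟩ ?_
              · have h21 := h₂.1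
                simp only [List.map_cons] at h21 ⊢
                exact h21.cons (by simpa using hiq)
              · intro r hr
                rcases List.mem_cons.1 hr with rfl | hr'
                · exact hg'
                · exact h₂.2 r hr'
              · intro x hx y hy
                simp only [List.map_cons, List.head?_cons, Option.mem_def,
                  Option.some.injEq] at hy
                subst hy
                exact hjunc x hx
            · rw [key, prodl_append, prodl_cons, prodl_cons, prodl_cons]
              simp [mul_assoc]

theorem exists_rep (x : PushoutI φ) :
    ∃ l h, Red φ l ∧ x = prodl φ l * PushoutI.base φ h := by
  induction x using PushoutI.induction_on with
  | of i g =>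
      by_cases hg : g ∈ (φ i).range
      · rcases hg with ⟨c, rfl⟩
        exact ⟨[], c, red_nil, by rw [PushoutI.of_apply_eq_base]; simp⟩
      · exact ⟨[⟨i, g⟩], 1, red_singleton hg, by simp⟩
  | base h => exact ⟨[], h, red_nil, by simp⟩
  | mul x y hx hy =>
      rcases hx with ⟨l₁, h₁, hr₁, rfl⟩
      rcases hy with ⟨l₂, h₂, hr₂, rfl⟩
      rcases prodl_mul_base_mul_prodl (l₁.length + l₂.length) l₁ l₂ h₁ (le_refl _) hr₁ hr₂
        with ⟨l, h', hred, heq⟩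
      refine ⟨l, h' * h₂, hred, ?_⟩
      rw [map_mul, ← mul_assoc, heq, mul_assoc]

theorem cyc_pow {l : List (Σ i, G i)} (hred : Red φ l) (hne : l ≠ [])
    (hht : ∀ x ∈ (l.map Sigma.fst).getLast?, ∀ y ∈ (l.map Sigma.fst).head?, x ≠ y) :
    ∀ m : ℕ, 0 < m → ∃ L, Red φ L ∧ L ≠ [] ∧
      (L.map Sigma.fst).getLast? = (l.map Sigma.fst).getLast? ∧
      prodl φ l ^ m = prodl φ L := by
  intro m hm
  induction m with
  | zero => omega
  | succ m ihm =>
      rcases Nat.eq_zero_or_pos m with rfl | hm'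
      · exact ⟨l, hred, hne, rfl, by simp⟩
      · rcases ihm hm' with ⟨L, hLred, hLne, hLlast, hLprod⟩
        refine ⟨L ++ l, red_append hLred hred ?_, by simp [hLne], ?_, ?_⟩
        · intro x hx y hy
          exact hht x (hLlast ▸ hx) y hy
        · rw [List.map_append, List.getLast?_append_of_ne_nil]
          simpa using hne
        · rw [pow_succ, hLprod, prodl_append]

theorem sq_eq_one_of_conj_torsion [Nonempty ι] (hφ : ∀ i, Injective (φ i)) :
    ∀ (N : ℕ) (l : List (Σ i, G i)) (h : H) (x : PushoutI φ), l.length ≤ N → Red φ l →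
      x = prodl φ l * PushoutI.base φ h → (∃ n, 0 < n ∧ x ^ n = 1) →
      ∃ (u : PushoutI φ) (i : ι) (g : G i), u * x * u⁻¹ = PushoutI.of (φ := φ) i g := by
  intro N
  induction N using Nat.strong_induction_on with
  | _ N ihN =>
    intro l h x hlen hred heq htor
    cases l with
    | nil =>
        refine ⟨1, Classical.arbitrary ι, φ _ h, ?_⟩
        rw [PushoutI.of_apply_eq_base]
        simpa using heq
    | cons p rest =>
      rcases List.eq_nil_or_concat' rest with rfl | ⟨mid, r, rfl⟩
      · refine ⟨1, p.1, p.2 * φ p.1 h, ?_⟩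
        rw [← of_mul_base]
        simp only [one_mul, inv_one, mul_one]
        rw [heq]; simp
      · -- l = p :: mid ++ [r], length ≥ 2
        by_cases hir : p.1 = r.1
        · -- conjugate to something shorter
          rcases p with ⟨i, g₁⟩
          rcases r with ⟨j, g₂⟩
          cases hir
          rcases htor with ⟨n, hn, hxn⟩
          set u₀ : PushoutI φ := PushoutI.of (φ := φ) i g₂ * PushoutI.base φ h with hu₀
          have hy : u₀ * x * u₀⁻¹ =
              PushoutI.of (φ := φ) i (g₂ * φ i h * g₁) * prodl φ mid := by
            have hA : PushoutI.of (φ := φ) i g₂ * PushoutI.base φ h *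
                PushoutI.of (φ := φ) i g₁ = PushoutI.of (φ := φ) i (g₂ * φ i h * g₁) := by
              rw [of_mul_base, ← map_mul]
            have hx2 : x = PushoutI.of (φ := φ) i g₁ *
                (prodl φ mid * PushoutI.of (φ := φ) i g₂) * PushoutI.base φ h := by
              rw [heq, prodl_cons, prodl_append]
              simp only [prodl_cons, prodl_nil, mul_one]
            rw [hx2, hu₀, ← hA]
            group
          have hymid : Red φ mid := by
            have h9 : Red φ ((⟨i, g₁⟩ :: mid) ++ [⟨i, g₂⟩]) := by simpa using hred
            have h10 : Red φ ([⟨i, g₁⟩] ++ mid) := h9.of_append_left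
            exact h10.of_append_right
          have hytor : ∃ n, 0 < n ∧ (u₀ * x * u₀⁻¹) ^ n = 1 := by
            exact ⟨n, hn, by rw [conj_pow, hxn]; simp⟩
          by_cases hm : g₂ * φ i h * g₁ ∈ (φ i).range
          · rcases hm with ⟨c, hc⟩
            have hy2 : u₀ * x * u₀⁻¹ = PushoutI.base φ c * prodl φ mid := by
              rw [hy, ← hc, PushoutI.of_apply_eq_base]
            rcases base_mul_prodl c mid hymid with ⟨l', h', hl'red, hl'map, heq'⟩
            have hlen' : l'.length < N := by
              have : l'.length = mid.length := by
                have := congrArg List.length hl'map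
                simpa using this
              have : (⟨i, g₁⟩ :: (mid ++ [⟨i, g₂⟩]) : List _).length = mid.length + 2 := by
                simp
              omega
            rcases ihN l'.length hlen' l' h' (u₀ * x * u₀⁻¹) (le_refl _) hl'red
              (by rw [← heq']; exact hy2)
              ⟨n, hn, by rw [conj_pow, hxn]; simp⟩ with ⟨u, i', g', hu⟩
            refine ⟨u * u₀, i', g', ?_⟩
            rw [mul_inv_rev, show u * u₀ * x * (u₀⁻¹ * u⁻¹) = u * (u₀ * x * u₀⁻¹) * u⁻¹ by group,
              hu]
          · have hy3 : u₀ * x * u₀⁻¹ = prodl φ (⟨i, g₂ * φ i h * g₁⟩ :: mid) *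
                PushoutI.base φ 1 := by
              rw [hy]; simp
            have hredy : Red φ (⟨i, g₂ * φ i h * g₁⟩ :: mid) := by
              constructor
              · have h9 := hred.1
                simp only [List.map_cons, List.map_append, List.map_nil] at h9 ⊢
                exact h9.prefix ⟨[i], by simp⟩
              · intro q hq
                rcases List.mem_cons.1 hq with rfl | hq'
                · exact hm
                · exact hymid.2 q hq'
            have hlen2 : (⟨i, g₂ * φ i h * g₁⟩ :: mid : List _).length < N := by
              have : (⟨i, g₁⟩ :: (mid ++ [⟨i, g₂⟩]) : List _).length = mid.length + 2 := by simp
              simp only [List.length_cons]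
              omega
            rcases ihN _ hlen2 _ 1 _ (le_refl _) hredy hy3 hytor with ⟨u, i', g', hu⟩
            refine ⟨u * u₀, i', g', ?_⟩
            rw [mul_inv_rev, show u * u₀ * x * (u₀⁻¹ * u⁻¹) = u * (u₀ * x * u₀⁻¹) * u⁻¹ by group,
              hu]
        · -- infinite order: contradiction
          exfalso
          rcases htor with ⟨n, hn, hxn⟩
          set l' : List (Σ i, G i) := ⟨p.1, φ p.1 h * p.2⟩ :: (mid ++ [r]) with hl'
          have hredl' : Red φ l' := by
            rw [hl']
            constructor
            · have h9 := hred.1; simpa using h9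
            · intro q hq
              rcases List.mem_cons.1 hq with rfl | hq'
              · intro ⟨c, hc⟩
                exact hred.2 p List.mem_cons_self ⟨h⁻¹ * c, by
                  rw [map_mul, hc, map_inv]; group⟩
              · exact hred.2 q (List.mem_cons_of_mem _ hq')
          have hyeq : PushoutI.base φ h * x * (PushoutI.base φ h)⁻¹ = prodl φ l' := by
            rw [heq, hl', prodl_cons, prodl_cons, ← base_mul_of]
            group
          have hht : ∀ x' ∈ (l'.map Sigma.fst).getLast?, ∀ y ∈ (l'.map Sigma.fst).head?,
              x' ≠ y := by
            intro a ha b hb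
            have hlast : (l'.map Sigma.fst).getLast? = some r.1 := by
              rw [hl']
              rw [show ((⟨p.1, φ p.1 h * p.2⟩ : Σ i, G i) :: (mid ++ [r])).map Sigma.fst =
                (p.1 :: mid.map Sigma.fst) ++ [r.1] by simp]
              rw [List.getLast?_append_of_ne_nil _ (by simp)]
              simp
            have hhead : (l'.map Sigma.fst).head? = some p.1 := by simp [hl']
            rw [hlast] at ha
            rw [hhead] at hb
            simp only [Option.mem_def, Option.some.injEq] at ha hb
            subst ha; subst hb
            exact fun hcontra => hir hcontra.symm
          rcases cyc_pow hredl' (by simp [hl']) hht n hn with ⟨L, hLred, hLne, _, hLprod⟩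
          have : prodl φ l' ^ n = 1 := by
            rw [← hyeq, conj_pow, hxn]; simp
          rw [hLprod] at this
          exact prodl_ne_one hφ hLred hLne this

end Pushout

section RACG

open CoxeterSystem

variable {B : Type*}

/-- Restriction of a Coxeter matrix to a subset of the index set. -/
def resM (M : CoxeterMatrix B) (T : Set B) : CoxeterMatrix T where
  M := Matrix.of fun a b => M a.1 b.1
  isSymm := Matrix.IsSymm.ext fun a b => M.isSymm.apply a.1 b.1
  diagonal a := M.diagonal a.1
  off_diagonal a b hab := M.off_diagonal a.1 b.1 (fun h => hab (Subtype.ext h))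

@[simp] theorem resM_apply (M : CoxeterMatrix B) (T : Set B) (a b : T) :
    resM M T a b = M a.1 b.1 := rfl

/-- A Coxeter matrix is right-angled if all off-diagonal entries are `2` or `0`. -/
def IsRA (M : CoxeterMatrix B) : Prop := ∀ i j : B, i ≠ j → M i j = 2 ∨ M i j = 0

theorem IsRA.resM {M : CoxeterMatrix B} (h : IsRA M) (T : Set B) : IsRA (resM M T) :=
  fun a b hab => h a.1 b.1 (fun h' => hab (Subtype.ext h'))

theorem liftable_of_ra {M : CoxeterMatrix B} (hM : IsRA M) {Gp : Type*} [Monoid Gp]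
    (f : B → Gp) (hf1 : ∀ i, f i * f i = 1)
    (hf2 : ∀ i j, i ≠ j → M i j = 2 → (f i * f j) ^ 2 = 1) :
    M.IsLiftable f := by
  intro i j
  rcases eq_or_ne i j with rfl | hij
  · rw [M.diagonal, pow_one, hf1]
  · rcases hM i j hij with h2 | h0
    · rw [h2]; exact hf2 i j hij h2
    · rw [h0, pow_zero]

section Decomp

universe u

variable {B : Type u}

open CoxeterSystem

theorem cm_simple_mul_self (X : CoxeterMatrix B) (i : B) : X.simple i * X.simple i = 1 :=
  X.toCoxeterSystem.simple_mul_simple_self i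

theorem cm_simple_pow (X : CoxeterMatrix B) (a b : B) :
    (X.simple a * X.simple b) ^ X a b = 1 :=
  X.toCoxeterSystem.simple_mul_simple_pow a b

/-- The inclusion homomorphism between the Coxeter groups of restricted matrices. -/
def inclHom (M : CoxeterMatrix B) {T T' : Set B} (hTT' : T ⊆ T') :
    (resM M T).Group →* (resM M T').Group :=
  (CoxeterMatrix.toCoxeterSystem (resM M T)).lift
    ⟨fun t => (resM M T').simple ⟨t.1, hTT' t.2⟩, fun a b =>
      cm_simple_pow (resM M T') ⟨a.1, hTT' a.2⟩ ⟨b.1, hTT' b.2⟩⟩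

@[simp] theorem inclHom_simple (M : CoxeterMatrix B) {T T' : Set B} (hTT' : T ⊆ T') (t : T) :
    inclHom M hTT' ((resM M T).simple t) = (resM M T').simple ⟨t.1, hTT' t.2⟩ :=
  (CoxeterMatrix.toCoxeterSystem (resM M T)).lift_apply_simple _ t

/-- The "kill generators outside K'" homomorphism, for right-angled matrices. -/
def killHom (M : CoxeterMatrix B) (hra : IsRA M) (T K' : Set B) [∀ b, Decidable (b ∈ K')] :
    (resM M T).Group →* (resM M K').Group :=
  (CoxeterMatrix.toCoxeterSystem (resM M T)).lift
    ⟨fun t => if h : t.1 ∈ K' then (resM M K').simple ⟨t.1, h⟩ else 1, by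
      apply liftable_of_ra (hra.resM T)
      · intro a
        by_cases h : a.1 ∈ K'
        · rw [dif_pos h]
          exact cm_simple_mul_self _ _
        · rw [dif_neg h, mul_one]
      · intro a b _ hab2
        by_cases ha : a.1 ∈ K' <;> by_cases hb : b.1 ∈ K'
        · rw [dif_pos ha, dif_pos hb]
          have h9 := cm_simple_pow (resM M K') ⟨a.1, ha⟩ ⟨b.1, hb⟩
          rwa [show resM M K' ⟨a.1, ha⟩ ⟨b.1, hb⟩ = 2 from hab2] at h9
        · rw [dif_pos ha, dif_neg hb, mul_one, pow_two]
          exact cm_simple_mul_self _ _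
        · rw [dif_neg ha, dif_pos hb, one_mul, pow_two]
          exact cm_simple_mul_self _ _
        · rw [dif_neg ha, dif_neg hb, mul_one, one_pow]⟩

@[simp] theorem killHom_simple (M : CoxeterMatrix B) (hra : IsRA M) (T K' : Set B)
    [∀ b, Decidable (b ∈ K')] (t : T) :
    killHom M hra T K' ((resM M T).simple t) =
      if h : t.1 ∈ K' then (resM M K').simple ⟨t.1, h⟩ else 1 :=
  (CoxeterMatrix.toCoxeterSystem (resM M T)).lift_apply_simple _ t

theorem killHom_comp_inclHom (M : CoxeterMatrix B) (hra : IsRA M) {K' T : Set B}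
    (hKT : K' ⊆ T) [∀ b, Decidable (b ∈ K')] :
    (killHom M hra T K').comp (inclHom M hKT) = MonoidHom.id _ := by
  apply (CoxeterMatrix.toCoxeterSystem (resM M K')).ext_simple
  intro k
  show (killHom M hra T K') (inclHom M hKT ((resM M K').simple k)) = (resM M K').simple k
  rw [inclHom_simple, killHom_simple, dif_pos k.2]

theorem inclHom_injective (M : CoxeterMatrix B) (hra : IsRA M) {K' T : Set B} (hKT : K' ⊆ T) :
    Function.Injective (inclHom M hKT) := by
  classical
  intro a b hab
  have h9 := DFunLike.congr_arg (killHom M hra T K') hab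
  rwa [← MonoidHom.comp_apply, ← MonoidHom.comp_apply, killHom_comp_inclHom M hra hKT,
    MonoidHom.id_apply, MonoidHom.id_apply] at h9

/-- The projection onto the full Coxeter group. -/
def projHom (M : CoxeterMatrix B) (T : Set B) : (resM M T).Group →* M.Group :=
  (CoxeterMatrix.toCoxeterSystem (resM M T)).lift
    ⟨fun t => M.simple t.1, fun a b => cm_simple_pow M a.1 b.1⟩

@[simp] theorem projHom_simple (M : CoxeterMatrix B) (T : Set B) (t : T) :
    projHom M T ((resM M T).simple t) = M.simple t.1 :=
  (CoxeterMatrix.toCoxeterSystem (resM M T)).lift_apply_simple _ t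

/-- The link of `i₀`. -/
def Kset (M : CoxeterMatrix B) (i₀ : B) : Set B := {b | b ≠ i₀ ∧ M i₀ b = 2}
/-- The star of `i₀`. -/
abbrev Aset (M : CoxeterMatrix B) (i₀ : B) : Set B := insert i₀ (Kset M i₀)
/-- The complement of `i₀`. -/
abbrev Cset (M : CoxeterMatrix B) (i₀ : B) : Set B := {b | b ≠ i₀}

theorem Kset_subset_Aset (M : CoxeterMatrix B) (i₀ : B) : Kset M i₀ ⊆ Aset M i₀ :=
  Set.subset_insert _ _
theorem Kset_subset_Cset (M : CoxeterMatrix B) (i₀ : B) : Kset M i₀ ⊆ Cset M i₀ :=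
  fun _ hb => hb.1

/-- The two-element family consisting of the star group and the complement group. -/
abbrev Gfam (M : CoxeterMatrix B) (i₀ : B) : Bool → Type u := fun b =>
  Bool.rec ((resM M (Cset M i₀)).Group) ((resM M (Aset M i₀)).Group) b

instance (M : CoxeterMatrix B) (i₀ : B) : ∀ b, Group (Gfam M i₀ b) := fun b =>
  Bool.rec (inferInstanceAs (Group (resM M (Cset M i₀)).Group))
    (inferInstanceAs (Group (resM M (Aset M i₀)).Group)) b

/-- The family of maps from the link group. -/
def φfam (M : CoxeterMatrix B) (i₀ : B) :
    ∀ b : Bool, (resM M (Kset M i₀)).Group →* Gfam M i₀ b := fun b =>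
  Bool.rec (inclHom M (Kset_subset_Cset M i₀)) (inclHom M (Kset_subset_Aset M i₀)) b

theorem φfam_injective (M : CoxeterMatrix B) (i₀ : B) (hra : IsRA M) :
    ∀ b, Function.Injective (φfam M i₀ b) := fun b => by
  cases b
  · exact inclHom_injective M hra (Kset_subset_Cset M i₀)
  · exact inclHom_injective M hra (Kset_subset_Aset M i₀)

theorem bridge (M : CoxeterMatrix B) (i₀ : B) (k : B) (hk : k ∈ Kset M i₀) :
    PushoutI.of (φ := φfam M i₀) true ((resM M (Aset M i₀)).simple ⟨k, Kset_subset_Aset M i₀ hk⟩)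
      = PushoutI.of (φ := φfam M i₀) false ((resM M (Cset M i₀)).simple ⟨k, hk.1⟩) := by
  have h1 : (resM M (Aset M i₀)).simple ⟨k, Kset_subset_Aset M i₀ hk⟩ =
      φfam M i₀ true ((resM M (Kset M i₀)).simple ⟨k, hk⟩) :=
    (inclHom_simple M (Kset_subset_Aset M i₀) ⟨k, hk⟩).symm
  have h2 : (resM M (Cset M i₀)).simple ⟨k, hk.1⟩ =
      φfam M i₀ false ((resM M (Kset M i₀)).simple ⟨k, hk⟩) :=
    (inclHom_simple M (Kset_subset_Cset M i₀) ⟨k, hk⟩).symm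
  rw [h1, h2, PushoutI.of_apply_eq_base, PushoutI.of_apply_eq_base]

open scoped Classical in
/-- The simple-reflection values of the map into the pushout. -/
noncomputable def fTheta (M : CoxeterMatrix B) (i₀ : B) :
    B → Monoid.PushoutI (φfam M i₀) := fun b =>
  if hb : b = i₀
    then PushoutI.of (φ := φfam M i₀) true
      ((resM M (Aset M i₀)).simple ⟨i₀, Set.mem_insert _ _⟩)
    else PushoutI.of (φ := φfam M i₀) false ((resM M (Cset M i₀)).simple ⟨b, hb⟩)

theorem fTheta_liftable (M : CoxeterMatrix B) (i₀ : B) (hra : IsRA M) :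
    M.IsLiftable (fTheta M i₀) := by
  apply liftable_of_ra hra
  · intro i
    unfold fTheta
    by_cases hi : i = i₀
    · rw [dif_pos hi, ← map_mul, cm_simple_mul_self, map_one]
    · rw [dif_neg hi, ← map_mul, cm_simple_mul_self, map_one]
  · intro i j hij h2
    unfold fTheta
    by_cases hi : i = i₀ <;> by_cases hj : j = i₀
    · exact absurd (hi.trans hj.symm) hij
    · subst hi
      have hjK : j ∈ Kset M i := ⟨hj, h2⟩
      rw [dif_pos rfl, dif_neg hj,
        show ((resM M (Cset M i)).simple ⟨j, hj⟩) =
          (resM M (Cset M i)).simple ⟨j, hjK.1⟩ from rfl,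
        ← bridge M i j hjK, ← map_mul, ← map_pow]
      have h9 := cm_simple_pow (resM M (Aset M i))
        ⟨i, Set.mem_insert _ _⟩ ⟨j, Kset_subset_Aset M i hjK⟩
      rw [show resM M (Aset M i) ⟨i, Set.mem_insert _ _⟩ ⟨j, Kset_subset_Aset M i hjK⟩
        = 2 from h2] at h9
      rw [h9, map_one]
    · subst hj
      have hiK : i ∈ Kset M j := ⟨hi, (M.isSymm.apply j i) ▸ h2⟩
      rw [dif_pos rfl, dif_neg hi,
        show ((resM M (Cset M j)).simple ⟨i, hi⟩) =
          (resM M (Cset M j)).simple ⟨i, hiK.1⟩ from rfl,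
        ← bridge M j i hiK, ← map_mul, ← map_pow]
      have h9 := cm_simple_pow (resM M (Aset M j))
        ⟨i, Kset_subset_Aset M j hiK⟩ ⟨j, Set.mem_insert _ _⟩
      rw [show resM M (Aset M j) ⟨i, Kset_subset_Aset M j hiK⟩ ⟨j, Set.mem_insert _ _⟩
        = 2 from h2] at h9
      rw [h9, map_one]
    · rw [dif_neg hi, dif_neg hj, ← map_mul, ← map_pow]
      have h9 := cm_simple_pow (resM M (Cset M i₀)) ⟨i, hi⟩ ⟨j, hj⟩
      rw [show resM M (Cset M i₀) ⟨i, hi⟩ ⟨j, hj⟩ = 2 from h2] at h9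
      rw [h9, map_one]

/-- The map from the Coxeter group into the pushout. -/
noncomputable def theta (M : CoxeterMatrix B) (i₀ : B) (hra : IsRA M) :
    M.Group →* Monoid.PushoutI (φfam M i₀) :=
  (CoxeterMatrix.toCoxeterSystem M).lift ⟨fTheta M i₀, fTheta_liftable M i₀ hra⟩

@[simp] theorem theta_simple (M : CoxeterMatrix B) (i₀ : B) (hra : IsRA M) (b : B) :
    theta M i₀ hra (M.simple b) = fTheta M i₀ b :=
  (CoxeterMatrix.toCoxeterSystem M).lift_apply_simple _ b

/-- The map back from the pushout. -/
def xi (M : CoxeterMatrix B) (i₀ : B) : Monoid.PushoutI (φfam M i₀) →* M.Group :=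
  Monoid.PushoutI.lift
    (fun b => Bool.rec (projHom M (Cset M i₀)) (projHom M (Aset M i₀)) b)
    (projHom M (Kset M i₀)) (by
      intro b
      cases b
      · apply (CoxeterMatrix.toCoxeterSystem (resM M (Kset M i₀))).ext_simple
        intro k
        show projHom M (Cset M i₀)
            (inclHom M (Kset_subset_Cset M i₀) ((resM M (Kset M i₀)).simple k)) =
          projHom M (Kset M i₀) ((resM M (Kset M i₀)).simple k)
        rw [inclHom_simple, projHom_simple, projHom_simple]
      · apply (CoxeterMatrix.toCoxeterSystem (resM M (Kset M i₀))).ext_simple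
        intro k
        show projHom M (Aset M i₀)
            (inclHom M (Kset_subset_Aset M i₀) ((resM M (Kset M i₀)).simple k)) =
          projHom M (Kset M i₀) ((resM M (Kset M i₀)).simple k)
        rw [inclHom_simple, projHom_simple, projHom_simple])

theorem xi_comp_theta (M : CoxeterMatrix B) (i₀ : B) (hra : IsRA M) :
    (xi M i₀).comp (theta M i₀ hra) = MonoidHom.id _ := by
  apply (CoxeterMatrix.toCoxeterSystem M).ext_simple
  intro b
  show (xi M i₀) ((theta M i₀ hra) (M.simple b)) = M.simple b
  rw [theta_simple]
  unfold fTheta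
  by_cases hb : b = i₀
  · subst hb
    rw [dif_pos rfl, xi, Monoid.PushoutI.lift_of]
    exact projHom_simple M (Aset M b) ⟨b, Set.mem_insert _ _⟩
  · rw [dif_neg hb, xi, Monoid.PushoutI.lift_of]
    exact projHom_simple M (Cset M i₀) ⟨b, hb⟩

theorem theta_injective (M : CoxeterMatrix B) (i₀ : B) (hra : IsRA M) :
    Function.Injective (theta M i₀ hra) := by
  intro a b hab
  have h9 := DFunLike.congr_arg (xi M i₀) hab
  rwa [← MonoidHom.comp_apply, ← MonoidHom.comp_apply, xi_comp_theta,
    MonoidHom.id_apply, MonoidHom.id_apply] at h9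

end Decomp

section MainInduction

universe u

open CoxeterSystem

theorem cm_inv_simple {B : Type u} (X : CoxeterMatrix B) (i : B) :
    (X.simple i)⁻¹ = X.simple i :=
  X.toCoxeterSystem.inv_simple i

theorem sq_eq_one_of_torsion :
    ∀ (N : ℕ) (B : Type u) (_ : Finite B) (M : CoxeterMatrix B), Nat.card B ≤ N →
      IsRA M → ∀ x : M.Group, (∃ n, 0 < n ∧ x ^ n = 1) → x * x = 1 := by
  intro N
  induction N using Nat.strong_induction_on with
  | _ N ihN =>
    intro B hB M hcard hra x htor
    by_cases hcomp : ∀ i j : B, i ≠ j → M i j = 2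
    · -- "complete graph" case: the group is elementary abelian 2-group
      have hcommS : ∀ i j : B, M.simple i * M.simple j = M.simple j * M.simple i := by
        intro i j
        rcases eq_or_ne i j with rfl | hij
        · rfl
        · have h2 : (M.simple i * M.simple j) ^ 2 = 1 := by
            have h9 := cm_simple_pow M i j
            rwa [hcomp i j hij] at h9
          rw [pow_two] at h2
          have h3 : M.simple i * M.simple j = (M.simple i * M.simple j)⁻¹ :=
            eq_inv_of_mul_eq_one_left h2
          rw [h3, mul_inv_rev, cm_inv_simple, cm_inv_simple]
      have hcommS' : ∀ (i : B) (y : M.Group), M.simple i * y = y * M.simple i := by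
        intro i y
        refine (CoxeterMatrix.toCoxeterSystem M).simple_induction
          (p := fun y => M.simple i * y = y * M.simple i) y
          (fun j => hcommS i j) (by simp) ?_
        intro a b ha hb
        rw [← mul_assoc, ha, mul_assoc, hb, ← mul_assoc]
      have hcomm : ∀ a y : M.Group, a * y = y * a := by
        intro a
        refine (CoxeterMatrix.toCoxeterSystem M).simple_induction
          (p := fun a => ∀ y : M.Group, a * y = y * a) a
          (fun j y => hcommS' j y) (fun y => by simp) ?_
        intro w w' hw hw' y
        rw [mul_assoc, hw' y, ← mul_assoc, hw y, mul_assoc]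
      refine (CoxeterMatrix.toCoxeterSystem M).simple_induction
        (p := fun w => w * w = 1) x
        (fun j => cm_simple_mul_self M j) (by simp) ?_
      intro w w' hw hw'
      have h9 : w * w' * (w * w') = (w * w) * (w' * w') := by
        rw [mul_assoc w w' (w * w'), ← mul_assoc w' w w', hcomm w' w, mul_assoc w w' w',
          ← mul_assoc]
      rw [h9, hw, hw', one_mul]
    · -- there are two non-adjacent vertices
      push_neg at hcomp
      obtain ⟨i₀, j₀, hij₀, hM2⟩ := hcomp
      have hM0 : M i₀ j₀ = 0 := (hra i₀ j₀ hij₀).resolve_left hM2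
      classical
      rcases htor with ⟨n, hn, hxn⟩
      set x' := theta M i₀ hra x with hx'
      rcases exists_rep x' with ⟨l, h, hred, heq⟩
      rcases sq_eq_one_of_conj_torsion (φfam_injective M i₀ hra) l.length l h x'
        (le_refl _) hred heq ⟨n, hn, by rw [hx', ← map_pow, hxn, map_one]⟩
        with ⟨u, b, g, hu⟩
      have hof : PushoutI.of (φ := φfam M i₀) b g = u * x' * u⁻¹ := hu.symm
      have hgtor : g ^ n = 1 := by
        apply Monoid.PushoutI.of_injective (φfam_injective M i₀ hra) b
        rw [map_pow, hof, conj_pow, hx', ← map_pow, hxn, map_one, mul_one,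
          mul_inv_cancel, map_one]
      have hjA : j₀ ∉ Aset M i₀ := by
        intro hj
        rcases Set.mem_insert_iff.1 hj with rfl | hjK
        · exact hij₀ rfl
        · exact absurd (hjK.2.symm.trans hM0) (by norm_num)
      have hsubA : Nat.card ↥(Aset M i₀) < Nat.card B := by
        rw [Nat.card_coe_set_eq]
        have h9 := Set.ncard_lt_ncard (show Aset M i₀ ⊂ Set.univ from
          Set.ssubset_univ_iff.2 (fun hEq => hjA (by rw [hEq]; exact Set.mem_univ j₀)))
          Set.finite_univ
        rwa [Set.ncard_univ] at h9
      have hi₀C : i₀ ∉ Cset M i₀ := fun hc => hc rfl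
      have hsubC : Nat.card ↥(Cset M i₀) < Nat.card B := by
        rw [Nat.card_coe_set_eq]
        have h9 := Set.ncard_lt_ncard (show Cset M i₀ ⊂ Set.univ from
          Set.ssubset_univ_iff.2 (fun hEq => hi₀C (by rw [hEq]; exact Set.mem_univ i₀)))
          Set.finite_univ
        rwa [Set.ncard_univ] at h9
      have hxx : x' * x' = 1 := by
        have keyconj : (PushoutI.of (φ := φfam M i₀) b g) * (PushoutI.of (φ := φfam M i₀) b g)
            = 1 → x' * x' = 1 := by
          intro h9
          rw [hof] at h9
          have h11 : u * (x' * x') * u⁻¹ = 1 := by rw [← h9]; group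
          calc x' * x' = u⁻¹ * (u * (x' * x') * u⁻¹) * u := by group
          _ = 1 := by rw [h11]; group
        apply keyconj
        rw [← map_mul]
        cases b
        · have hgg : g * g = 1 :=
            ihN (Nat.card ↥(Cset M i₀)) (lt_of_lt_of_le hsubC hcard) ↥(Cset M i₀)
              inferInstance (resM M (Cset M i₀)) (le_refl _) (hra.resM _) g ⟨n, hn, hgtor⟩
          rw [hgg, map_one]
        · have hgg : g * g = 1 :=
            ihN (Nat.card ↥(Aset M i₀)) (lt_of_lt_of_le hsubA hcard) ↥(Aset M i₀)
              inferInstance (resM M (Aset M i₀)) (le_refl _) (hra.resM _) g ⟨n, hn, hgtor⟩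
          rw [hgg, map_one]
      apply theta_injective M i₀ hra
      rw [map_mul, map_one, ← hx']
      exact hxx

end MainInduction

end RACG

end RAProofAux

namespace RAProofAux

/-- The Coxeter matrix of "true orders" attached to a set of involutions. -/
noncomputable def trueOrderMatrix {W : Type*} [Group W] (S : Set W) (hinv : ∀ s : S, (s : W) * s = 1) :
    CoxeterMatrix ↥S where
  M := Matrix.of fun i j => orderOf ((i : W) * j)
  isSymm := Matrix.IsSymm.ext fun i j => by
    show orderOf ((j : W) * i) = orderOf ((i : W) * j)
    have h1 : ((j : W) * i) = ((i : W) * j)⁻¹ := by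
      rw [mul_inv_rev, inv_eq_of_mul_eq_one_right (hinv i),
        inv_eq_of_mul_eq_one_right (hinv j)]
    rw [h1, orderOf_inv]
  diagonal i := by
    show orderOf ((i : W) * i) = 1
    rw [hinv i, orderOf_one]
  off_diagonal i j hij := by
    show orderOf ((i : W) * j) ≠ 1
    intro h1
    have h2 : (i : W) * j = 1 := orderOf_eq_one_iff.1 h1
    have h3 : (i : W)⁻¹ = j := inv_eq_of_mul_eq_one_right h2
    have h4 : (i : W)⁻¹ = (i : W) := inv_eq_of_mul_eq_one_right (hinv i)
    exact hij (Subtype.ext (h4.symm.trans h3))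

/-- In a group admitting a right-angled Coxeter generating set, every element of finite
order squares to the identity. -/
theorem sq_eq_one_of_torsion_of_ra {W : Type*} [Group W] (S : Set W) (hSfin : S.Finite)
    (hS : IsCoxeterGeneratingSet S) (hra : IsRightAngled S) (w : W)
    (htor : ∃ n, 0 < n ∧ w ^ n = 1) : w * w = 1 := by
  classical
  obtain ⟨M, cs, hsim⟩ := hS
  haveI : Finite ↥S := hSfin.to_subtype
  have hinvS : ∀ s : S, (s : W) * s = 1 := by
    intro s
    have h9 := cs.simple_mul_simple_self s
    rwa [hsim s] at h9
  set M'' : CoxeterMatrix ↥S := trueOrderMatrix S hinvS with hM''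
  have hliftβ : M''.IsLiftable (fun i : ↥S => (i : W)) := by
    intro i j
    show ((i : W) * j) ^ (orderOf ((i : W) * j)) = 1
    exact pow_orderOf_eq_one _
  set β : M''.Group →* W :=
    (CoxeterMatrix.toCoxeterSystem M'').lift ⟨fun i => (i : W), hliftβ⟩ with hβ
  have hliftα : M.IsLiftable (fun i : ↥S => M''.simple i) := by
    intro i j
    have hdvd : orderOf ((i : W) * (j : W)) ∣ M i j := by
      apply orderOf_dvd_of_pow_eq_one
      have h9 := cs.simple_mul_simple_pow i j
      rwa [hsim i, hsim j] at h9
    rcases hdvd with ⟨c, hc⟩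
    have h10 : (M''.simple i * M''.simple j) ^ (orderOf ((i : W) * (j : W))) = 1 :=
      cm_simple_pow M'' i j
    rw [hc, pow_mul, h10, one_pow]
  set α : W →* M''.Group := cs.lift ⟨fun i => M''.simple i, hliftα⟩ with hα
  have hβα : ∀ w : W, β (α w) = w := by
    have h9 : β.comp α = MonoidHom.id W := by
      apply cs.ext_simple
      intro i
      rw [MonoidHom.comp_apply, MonoidHom.id_apply]
      rw [show α (cs.simple i) = M''.simple i from cs.lift_apply_simple _ i]
      rw [show β (M''.simple i) = (i : W) from
        (CoxeterMatrix.toCoxeterSystem M'').lift_apply_simple _ i]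
      exact (hsim i).symm
    intro w
    exact DFunLike.congr_fun h9 w
  have hM''ra : IsRA M'' := by
    intro i j hij
    have h9 := hra (i : W) i.2 (j : W) j.2 (fun hc => hij (Subtype.ext hc))
    exact h9
  have h9 : α w * α w = 1 := by
    apply sq_eq_one_of_torsion (Nat.card ↥S) ↥S inferInstance M'' (le_refl _) hM''ra
    rcases htor with ⟨n, hn, hwn⟩
    exact ⟨n, hn, by rw [← map_pow, hwn, map_one]⟩
  calc w * w = β (α (w * w)) := (hβα _).symm
  _ = β 1 := by rw [map_mul, h9]
  _ = 1 := map_one β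

end RAProofAux

/-- If `S` and `S'` are two finite sets of Coxeter generators for `W` and `(W, S)` is
right-angled, then `(W, S')` is right-angled as well. -/
theorem isRightAngled_of_isRightAngled
    {W : Type*} [Group W] (S S' : Set W) (hSfin : S.Finite) (hS'fin : S'.Finite)
    (hS : IsCoxeterGeneratingSet S) (hS' : IsCoxeterGeneratingSet S')
    (hra : IsRightAngled S) :
    IsRightAngled S' := by
  obtain ⟨N, csN, hsimN⟩ := hS'
  intro s hs t ht hst
  by_cases h0 : orderOf (s * t) = 0
  · right; exact h0
  · left
    have htor : ∃ n, 0 < n ∧ (s * t) ^ n = 1 :=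
      ⟨orderOf (s * t), Nat.pos_of_ne_zero h0, pow_orderOf_eq_one _⟩
    have h2 : (s * t) * (s * t) = 1 :=
      RAProofAux.sq_eq_one_of_torsion_of_ra S hSfin hS hra (s * t) htor
    have hdvd : orderOf (s * t) ∣ 2 :=
      orderOf_dvd_of_pow_eq_one (by rw [pow_two]; exact h2)
    rcases (Nat.dvd_prime Nat.prime_two).1 hdvd with h1 | h2'
    · exfalso
      have hst1 : s * t = 1 := orderOf_eq_one_iff.1 h1
      have hs2 : s * s = 1 := by
        have h9 := csN.simple_mul_simple_self ⟨s, hs⟩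
        rwa [hsimN ⟨s, hs⟩] at h9
      have hts : t = s := by
        have h3 : s⁻¹ = t := inv_eq_of_mul_eq_one_right hst1
        have h4 : s⁻¹ = s := inv_eq_of_mul_eq_one_right hs2
        rw [← h3, h4]
      exact hst hts.symm
    · exact h2'
end

section
/- Let W be a group and let S and S' be two finite subsets of W such that (W,S) and (W,S') are Coxeter systems, with (W,S) right-angled. Then S and S' have the same cardinality. -/
open Monoid PushoutI PushoutI.NormalWord CoprodI Function List

namespace RacgAux

/-- A group has no odd torsion. -/
def NoOddTorsion (G : Type*) [Group G] : Prop :=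
  ∀ (g : G) (n : ℕ), Odd n → g ^ n = 1 → g = 1

lemma conjpow {G : Type*} [Group G] (a x : G) (n : ℕ) :
    (a⁻¹ * x * a) ^ n = a⁻¹ * x ^ n * a := by
  induction n with
  | zero => group
  | succ n ih => rw [pow_succ, pow_succ, ih]; group

section Pushout

variable {ι : Type*} {G : ι → Type*} [∀ i, Group (G i)] {H : Type*} [Group H]
  (φ : ∀ i, H →* G i)

/-- Product of a list of letters in the pushout. -/
def lprod (L : List (Σ i, G i)) : PushoutI φ :=
  (L.map fun l => of l.1 l.2).prod

@[simp] lemma lprod_nil : lprod φ ([] : List (Σ i, G i)) = 1 := rfl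

lemma lprod_cons (l : (Σ i, G i)) (L : List (Σ i, G i)) :
    lprod φ (l :: L) = of l.1 l.2 * lprod φ L := by simp [lprod]

lemma lprod_append (L₁ L₂ : List (Σ i, G i)) :
    lprod φ (L₁ ++ L₂) = lprod φ L₁ * lprod φ L₂ := by simp [lprod]

lemma lprod_singleton (l : (Σ i, G i)) : lprod φ [l] = of l.1 l.2 := by simp [lprod]

/-- Alternating indices. -/
def Alt (L : List (Σ i, G i)) : Prop := L.Chain' (fun a b => a.1 ≠ b.1)

/-- All letters nontrivial mod the base. -/
def Red (L : List (Σ i, G i)) : Prop := ∀ l ∈ L, l.2 ∉ (φ l.1).range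

lemma Red.ne_one {L : List (Σ i, G i)} (h : Red φ L) : ∀ l ∈ L, l.2 ≠ (1 : G l.1) := by
  intro l hl h1
  exact h l hl (h1 ▸ one_mem _)

/-- Bundle into a word. -/
def mkWord (L : List (Σ i, G i)) (halt : Alt L) (hred : Red φ L) : Word G :=
  ⟨L, hred.ne_one φ, halt⟩

lemma lprod_eq_ofCoprodI (L : List (Σ i, G i)) (halt : Alt L) (hred : Red φ L) :
    lprod φ L = ofCoprodI ((mkWord φ L halt hred).prod) := by
  rw [Word.prod, map_list_prod, lprod, mkWord]
  simp [List.map_map, Function.comp_def]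

lemma lprod_ne_one (hφ : ∀ i, Injective (φ i)) (L : List (Σ i, G i))
    (halt : Alt L) (hred : Red φ L) (hne : L ≠ []) : lprod φ L ≠ 1 := by
  intro h1
  have : (mkWord φ L halt hred) = Word.empty := by
    apply Reduced.eq_empty_of_mem_range hφ
    · intro g hg
      exact hred g hg
    · rw [← lprod_eq_ofCoprodI, h1]; exact one_mem _
  apply hne
  simpa [mkWord, Word.empty] using congrArg Word.toList this

/-- `m` concatenated copies of `L`. -/
def nrep (m : ℕ) (L : List (Σ i, G i)) : List (Σ i, G i) := (List.replicate m L).flatten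

lemma nrep_zero (L : List (Σ i, G i)) : nrep 0 L = [] := rfl

lemma nrep_succ (m : ℕ) (L : List (Σ i, G i)) : nrep (m+1) L = L ++ nrep m L := by
  simp [nrep, List.replicate_succ]

lemma lprod_nrep (m : ℕ) (L : List (Σ i, G i)) :
    lprod φ (nrep m L) = (lprod φ L) ^ m := by
  induction m with
  | zero => simp [nrep_zero]
  | succ m ih => rw [nrep_succ, lprod_append, ih, pow_succ']

lemma red_nrep {L : List (Σ i, G i)} (hred : Red φ L) (m : ℕ) : Red φ (nrep m L) := by
  induction m with
  | zero => intro l hl; simp [nrep_zero] at hl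
  | succ m ih =>
    intro l hl
    rw [nrep_succ] at hl
    rcases List.mem_append.1 hl with h | h
    · exact hred l h
    · exact ih l h

lemma head?_nrep_succ (m : ℕ) (L : List (Σ i, G i)) (hne : L ≠ []) :
    (nrep (m+1) L).head? = L.head? := by
  rw [nrep_succ]
  cases L with
  | nil => exact absurd rfl hne
  | cons a l => simp

lemma nrep_of_nil (m : ℕ) : nrep m ([] : List (Σ i, G i)) = [] := by
  induction m with
  | zero => rfl
  | succ m ih => rw [nrep_succ, ih]; rfl

lemma alt_nrep {L : List (Σ i, G i)} (halt : Alt L)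
    (hseam : ∀ a ∈ L.getLast?, ∀ b ∈ L.head?, a.1 ≠ b.1) (m : ℕ) :
    Alt (nrep m L) := by
  rcases eq_or_ne L [] with rfl | hne
  · rw [nrep_of_nil]; exact List.isChain_nil
  induction m with
  | zero => exact List.isChain_nil
  | succ m ih =>
    rw [nrep_succ]
    apply List.IsChain.append halt ih
    intro a ha b hb
    cases m with
    | zero => simp [nrep_zero] at hb
    | succ m =>
      rw [head?_nrep_succ m L hne] at hb
      exact hseam a ha b hb

lemma not_mem_range_of_mem_set (d : Transversal φ) {i : ι} {g : G i}
    (hg : g ∈ d.set i) (h1 : g ≠ 1) : g ∉ (φ i).range := by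
  rintro ⟨y, hy⟩
  have h := (d.compl i).existsUnique g
  obtain ⟨p, -, hp⟩ := h
  have e1 := hp (⟨⟨g, ⟨y, hy⟩⟩, ⟨1, d.one_mem i⟩⟩ : ((φ i).range : Set (G i)) × (d.set i))
    (by simp)
  have e2 := hp (⟨⟨1, one_mem _⟩, ⟨g, hg⟩⟩ : ((φ i).range : Set (G i)) × (d.set i))
    (by simp)
  rw [← e2] at e1
  apply h1
  have := congrArg (fun q => (q.2 : G i)) e1
  simpa using this.symm

lemma lprod_eq_word_prod (w : Word G) : lprod φ w.toList = ofCoprodI w.prod := by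
  rw [Word.prod, map_list_prod, lprod]
  simp [List.map_map, Function.comp_def]

lemma base_pow_eq_one [Nonempty ι] (hφ : ∀ i, Injective (φ i))
    (hG : ∀ i, NoOddTorsion (G i)) {h : H} {n : ℕ} (hodd : Odd n)
    (hpow : (base φ h) ^ n = 1) : base φ h = 1 := by
  obtain ⟨i⟩ := ‹Nonempty ι›
  have h1 : h ^ n = 1 := base_injective hφ (by rw [map_pow, hpow, map_one])
  have h2 : (φ i h) ^ n = 1 := by rw [← map_pow, h1, map_one]
  have h3 : h = 1 := hφ i (by rw [hG i _ n hodd h2, map_one])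
  rw [h3, map_one]

lemma key [Nonempty ι] (hφ : ∀ i, Injective (φ i)) (hG : ∀ i, NoOddTorsion (G i))
    {n : ℕ} (hodd : Odd n) :
    ∀ (k : ℕ) (h : H) (L : List (Σ i, G i)), Alt L → Red φ L → L.length ≤ k →
      (base φ h * lprod φ L) ^ n = 1 → base φ h * lprod φ L = 1 := by
  classical
  intro k
  induction k with
  | zero =>
    intro h L _ _ hlen hpow
    have hL : L = [] := List.length_eq_zero_iff.mp (Nat.le_zero.mp hlen)
    subst hL
    simpa using base_pow_eq_one φ hφ hG hodd (by simpa using hpow)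
  | succ k ih =>
    intro h L halt hred hlen hpow
    rcases L with _ | ⟨l₁, T⟩
    · simpa using base_pow_eq_one φ hφ hG hodd (by simpa using hpow)
    rcases eq_or_ne T [] with rfl | hT
    · -- singleton case
      have hx : base φ h * lprod φ [l₁] = of l₁.1 (φ l₁.1 h * l₁.2) := by
        rw [lprod_singleton, map_mul, of_apply_eq_base]
      rw [hx] at hpow ⊢
      rw [← map_pow] at hpow
      have h1 : (φ l₁.1 h * l₁.2) ^ n = 1 := of_injective hφ l₁.1 (by rw [hpow, map_one])
      rw [hG l₁.1 _ n hodd h1, map_one]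
    · -- length ≥ 2
      set g₁' : G l₁.1 := φ l₁.1 h * l₁.2 with hg₁'def
      have hg₁'r : g₁' ∉ (φ l₁.1).range := by
        rintro ⟨y, hy⟩
        exact hred l₁ List.mem_cons_self
          ⟨h⁻¹ * y, by rw [map_mul, map_inv, hy, hg₁'def]; group⟩
      have hchainT : (∀ b ∈ T.head?, l₁.1 ≠ b.1) ∧ Alt T := List.isChain_cons.mp halt
      have hxeq : base φ h * lprod φ (l₁ :: T) = lprod φ (⟨l₁.1, g₁'⟩ :: T) := by
        rw [lprod_cons, lprod_cons, ← mul_assoc, ← of_apply_eq_base φ l₁.1 h, ← map_mul]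
      have haltL' : Alt (⟨l₁.1, g₁'⟩ :: T) := List.isChain_cons.mpr ⟨hchainT.1, hchainT.2⟩
      have hredL' : Red φ (⟨l₁.1, g₁'⟩ :: T) := by
        rintro l hl
        rcases List.mem_cons.mp hl with rfl | hl
        · exact hg₁'r
        · exact hred l (List.mem_cons_of_mem _ hl)
      rcases T.eq_nil_or_concat with rfl | ⟨Mid, ⟨j, gl⟩, rfl⟩
      · exact absurd rfl hT
      simp only [List.concat_eq_append] at hT hchainT hred hlen hpow hxeq haltL' hredL' ⊢
      have hchainT2 : Alt (Mid ++ [(⟨j, gl⟩ : Σ i, G i)]) := by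
        simpa using hchainT.2
      have hMidAlt : Alt Mid := hchainT2.left_of_append
      have hMidSeam : ∀ a ∈ Mid.getLast?, ∀ b ∈ [(⟨j, gl⟩ : Σ i, G i)].head?, a.1 ≠ b.1 :=
        (List.isChain_append.mp hchainT2).2.2
      have hMidRed : Red φ Mid := fun l hl =>
        hred l (List.mem_cons_of_mem _ (List.mem_append_left _ hl))
      have hglRed : gl ∉ (φ j).range :=
        hred ⟨j, gl⟩ (List.mem_cons_of_mem _ (List.mem_append_right _ (List.mem_singleton_self _)))
      have hlenMid : Mid.length + 2 ≤ k + 1 := by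
        simpa [List.length_append] using hlen
      by_cases hij : j = l₁.1
      · -- first and last letters in the same factor: cyclically reduce
        subst hij
        set c := of (φ := φ) l₁.1 g₁' with hc
        set y := lprod φ Mid * of l₁.1 (gl * g₁') with hy
        have hyc : y = c⁻¹ * (base φ h * lprod φ (l₁ :: (Mid ++ [⟨l₁.1, gl⟩]))) * c := by
          rw [hxeq, lprod_cons, lprod_append, lprod_singleton, hy, map_mul, hc]
          group
        have hyn : y ^ n = 1 := by
          rw [hyc, conjpow, hpow]
          group
        by_cases hr : gl * g₁' ∈ (φ l₁.1).range
        · obtain ⟨h', hh'⟩ := hr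
          set z := base φ h' * lprod φ Mid with hz
          have hzy : z = (lprod φ Mid)⁻¹ * y * lprod φ Mid := by
            rw [hz, hy, ← hh', of_apply_eq_base]
            group
          have hzn : z ^ n = 1 := by rw [hzy, conjpow, hyn]; group
          have hz1 : z = 1 := ih h' Mid hMidAlt hMidRed (by omega) hzn
          have hy1 : y = 1 := by
            have : lprod φ Mid * z * (lprod φ Mid)⁻¹ = y := by rw [hzy]; group
            rw [← this, hz1]; group
          have : base φ h * lprod φ (l₁ :: (Mid ++ [⟨l₁.1, gl⟩])) = c * y * c⁻¹ := by
            rw [hyc]; group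
          rw [this, hy1]; group
        · set V := Mid ++ [(⟨l₁.1, gl * g₁'⟩ : Σ i, G i)] with hV
          have hVAlt : Alt V := by
            rw [hV]
            apply List.isChain_append.mpr
            refine ⟨hMidAlt, List.isChain_singleton _, ?_⟩
            intro a ha b hb
            simp only [List.head?_cons, Option.mem_def, Option.some.injEq] at hb
            have := hMidSeam a ha ⟨l₁.1, gl⟩ (by simp)
            subst hb
            simpa using this
          have hVRed : Red φ V := by
            intro l hl
            rcases List.mem_append.mp hl with hl | hl
            · exact hMidRed l hl
            · rcases List.mem_singleton.mp hl with rfl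
              exact hr
          have hVlen : V.length ≤ k := by simp [hV]; omega
          have hyV : base φ 1 * lprod φ V = y := by
            rw [map_one, one_mul, hV, lprod_append, lprod_singleton, hy, map_mul]
          have hy1 : y = 1 := by
            rw [← hyV]
            exact ih 1 V hVAlt hVRed hVlen (by rw [hyV]; exact hyn)
          have : base φ h * lprod φ (l₁ :: (Mid ++ [⟨l₁.1, gl⟩])) = c * y * c⁻¹ := by
            rw [hyc]; group
          rw [this, hy1]; group
      · -- cyclically reduced: powers are nontrivial, contradiction
        exfalso
        set L' := (⟨l₁.1, g₁'⟩ : Σ i, G i) :: (Mid ++ [⟨j, gl⟩]) with hL'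
        have hlast : L'.getLast? = some ⟨j, gl⟩ := by
          rw [hL', ← List.cons_append]
          exact List.getLast?_concat
        have hhead : L'.head? = some ⟨l₁.1, g₁'⟩ := rfl
        have hseam : ∀ a ∈ L'.getLast?, ∀ b ∈ L'.head?, a.1 ≠ b.1 := by
          intro a ha b hb
          rw [hlast, Option.mem_def, Option.some.injEq] at ha
          rw [hhead, Option.mem_def, Option.some.injEq] at hb
          subst ha; subst hb
          exact hij
        obtain ⟨m, hm⟩ := hodd
        have hne : nrep n L' ≠ [] := by
          rw [hm, nrep_succ]
          simp [hL']
        have h1 : lprod φ (nrep n L') ≠ 1 :=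
          lprod_ne_one φ hφ _ (alt_nrep haltL' hseam n) (red_nrep φ hredL' n) hne
        apply h1
        rw [lprod_nrep, ← hxeq]
        exact hpow

theorem pushout_noOddTorsion [Nonempty ι] (hφ : ∀ i, Injective (φ i))
    (hG : ∀ i, NoOddTorsion (G i)) : NoOddTorsion (PushoutI φ) := by
  classical
  intro x n hodd hxn
  obtain ⟨d⟩ := transversal_nonempty φ hφ
  set w : NormalWord d := NormalWord.equiv x with hw
  have hxw : x = w.prod := (NormalWord.equiv.left_inv x).symm
  have hAlt : Alt w.toList := w.toWord.chain_ne
  have hRed : Red φ w.toList := by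
    intro l hl
    exact not_mem_range_of_mem_set φ d (w.normalized l.1 l.2 hl) (w.toWord.ne_one l hl)
  have hx2 : x = base φ w.head * lprod φ w.toList := by
    rw [hxw, NormalWord.prod, lprod_eq_word_prod]
  have := key φ hφ hG hodd w.toList.length w.head w.toList hAlt hRed le_rfl
    (by rw [← hx2]; exact hxn)
  rw [hx2, this]

end Pushout

end RacgAux

namespace RacgAux2
open Monoid PushoutI CoxeterSystem

/-- symmetrized adjacency -/
def AdjS {V : Type*} (Adj : V → V → Prop) (u v : V) : Prop := Adj u v ∨ Adj v u

lemma adjS_symm {V : Type*} (Adj : V → V → Prop) {u v : V} (h : AdjS Adj u v) :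
    AdjS Adj v u := h.symm

open scoped Classical in
/-- the right-angled Coxeter matrix of a graph -/
noncomputable def racgMatrix (V : Type*) (Adj : V → V → Prop) : CoxeterMatrix V where
  M := Matrix.of fun u v => if u = v then 1 else if AdjS Adj u v then 2 else 0
  isSymm := by
    ext u v
    simp only [Matrix.transpose_apply, Matrix.of_apply]
    by_cases h : u = v
    · simp [h]
    · rw [if_neg h, if_neg (Ne.symm h)]
      by_cases h2 : AdjS Adj u v
      · rw [if_pos h2, if_pos (adjS_symm _ h2)]
      · rw [if_neg h2, if_neg (fun hh => h2 (adjS_symm _ hh))]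
  diagonal := fun i => by simp [Matrix.of_apply]
  off_diagonal := fun i i' h => by
    simp only [Matrix.of_apply]
    rw [if_neg h]
    by_cases h2 : AdjS Adj i i'
    · rw [if_pos h2]; omega
    · rw [if_neg h2]; omega

lemma racgMatrix_apply_of_adj {V : Type*} (Adj : V → V → Prop) {u v : V} (h : u ≠ v)
    (hadj : AdjS Adj u v) : racgMatrix V Adj u v = 2 := by
  classical
  show (racgMatrix V Adj).M u v = 2
  rw [racgMatrix]
  simp only [Matrix.of_apply]
  rw [if_neg h, if_pos hadj]

lemma racgMatrix_apply_of_not_adj {V : Type*} (Adj : V → V → Prop) {u v : V} (h : u ≠ v)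
    (hadj : ¬ AdjS Adj u v) : racgMatrix V Adj u v = 0 := by
  classical
  show (racgMatrix V Adj).M u v = 0
  rw [racgMatrix]
  simp only [Matrix.of_apply]
  rw [if_neg h, if_neg hadj]

/-- the right-angled Coxeter group of a graph -/
noncomputable def racg (V : Type*) (Adj : V → V → Prop) : Type _ := (racgMatrix V Adj).Group

noncomputable instance (V : Type*) (Adj : V → V → Prop) : Group (racg V Adj) :=
  inferInstanceAs (Group (racgMatrix V Adj).Group)

/-- the canonical Coxeter system -/
noncomputable def racgCS (V : Type*) (Adj : V → V → Prop) :
    CoxeterSystem (racgMatrix V Adj) (racg V Adj) :=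
  (racgMatrix V Adj).toCoxeterSystem

/-- generators -/
noncomputable def gen {V : Type*} {Adj : V → V → Prop} (v : V) : racg V Adj :=
  (racgCS V Adj).simple v

lemma gen_mul_self {V : Type*} {Adj : V → V → Prop} (v : V) :
    (gen v : racg V Adj) * gen v = 1 :=
  (racgCS V Adj).simple_mul_simple_self v

lemma gen_sq {V : Type*} {Adj : V → V → Prop} (v : V) :
    (gen v : racg V Adj) ^ 2 = 1 := by
  rw [pow_two]; exact gen_mul_self v

lemma gen_mul_gen_sq {V : Type*} {Adj : V → V → Prop} {u v : V} (hne : u ≠ v)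
    (h : AdjS Adj u v) : ((gen u : racg V Adj) * gen v) ^ 2 = 1 := by
  have := (racgCS V Adj).simple_mul_simple_pow u v
  rwa [racgMatrix_apply_of_adj Adj hne h] at this

/-- lifting out of a racg -/
noncomputable def racgLift {V : Type*} {Adj : V → V → Prop} {G : Type*} [Monoid G]
    (f : V → G) (h1 : ∀ v, f v * f v = 1)
    (h2 : ∀ u v, u ≠ v → AdjS Adj u v → (f u * f v) ^ 2 = 1) :
    racg V Adj →* G :=
  (racgCS V Adj).lift ⟨f, by
    intro i i'
    by_cases h : i = i'
    · subst h
      rw [(racgMatrix V Adj).diagonal i, pow_one]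
      exact h1 i
    · by_cases hadj : AdjS Adj i i'
      · rw [racgMatrix_apply_of_adj Adj h hadj]; exact h2 i i' h hadj
      · rw [racgMatrix_apply_of_not_adj Adj h hadj]; exact pow_zero _⟩

@[simp] lemma racgLift_gen {V : Type*} {Adj : V → V → Prop} {G : Type*} [Monoid G]
    (f : V → G) (h1 : ∀ v, f v * f v = 1)
    (h2 : ∀ u v, u ≠ v → AdjS Adj u v → (f u * f v) ^ 2 = 1) (v : V) :
    racgLift f h1 h2 (gen v : racg V Adj) = f v :=
  (racgCS V Adj).lift_apply_simple _ v

lemma racg_hom_ext {V : Type*} {Adj : V → V → Prop} {G : Type*} [Monoid G]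
    {f g : racg V Adj →* G} (h : ∀ v, f (gen v) = g (gen v)) : f = g :=
  (racgCS V Adj).ext_simple h

/-- restricted adjacency on a subset -/
def radj {V : Type*} (Adj : V → V → Prop) (A : Set V) : ↥A → ↥A → Prop :=
  fun a b => Adj a.1 b.1

lemma adjS_radj {V : Type*} {Adj : V → V → Prop} {A : Set V} {a b : ↥A} :
    AdjS (radj Adj A) a b ↔ AdjS Adj a.1 b.1 := Iff.rfl

/-- inclusion of a sub-racg induced by A ⊆ B -/
noncomputable def rincS {V : Type*} {Adj : V → V → Prop} {A B : Set V} (hAB : A ⊆ B) :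
    racg ↥A (radj Adj A) →* racg ↥B (radj Adj B) :=
  racgLift (fun a => gen ⟨a.1, hAB a.2⟩) (fun a => gen_mul_self _)
    (fun a b hne hadj => gen_mul_gen_sq
      (fun hh => hne (Subtype.ext (Subtype.mk_eq_mk.mp hh))) hadj)

@[simp] lemma rincS_gen {V : Type*} {Adj : V → V → Prop} {A B : Set V} (hAB : A ⊆ B)
    (a : ↥A) : (rincS (Adj := Adj) hAB) (gen a) = gen ⟨a.1, hAB a.2⟩ :=
  racgLift_gen _ _ _ a

open scoped Classical in
/-- retraction onto a sub-racg -/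
noncomputable def rresS {V : Type*} {Adj : V → V → Prop} {A B : Set V} (_hAB : A ⊆ B) :
    racg ↥B (radj Adj B) →* racg ↥A (radj Adj A) :=
  racgLift (fun b => if h : b.1 ∈ A then gen ⟨b.1, h⟩ else 1)
    (fun b => by
      by_cases h : b.1 ∈ A
      · rw [dif_pos h]; exact gen_mul_self _
      · rw [dif_neg h, mul_one])
    (fun a b hne hadj => by
      by_cases ha : a.1 ∈ A <;> by_cases hb : b.1 ∈ A
      · rw [dif_pos ha, dif_pos hb]
        exact gen_mul_gen_sq (fun hh => hne (Subtype.ext (Subtype.mk_eq_mk.mp hh))) hadj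
      · rw [dif_pos ha, dif_neg hb, mul_one]; exact gen_sq _
      · rw [dif_neg ha, dif_pos hb, one_mul]; exact gen_sq _
      · rw [dif_neg ha, dif_neg hb, mul_one, one_pow])

lemma rincS_injective {V : Type*} {Adj : V → V → Prop} {A B : Set V} (hAB : A ⊆ B) :
    Function.Injective (rincS (Adj := Adj) hAB) := by
  classical
  have hcomp : (rresS (Adj := Adj) hAB).comp (rincS (Adj := Adj) hAB) = MonoidHom.id _ := by
    apply racg_hom_ext
    intro a
    simp only [MonoidHom.comp_apply, MonoidHom.id_apply, rincS_gen]
    rw [rresS, racgLift_gen]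
    rw [dif_pos a.2]
  intro x y hxy
  have := congrArg (rresS (Adj := Adj) hAB) hxy
  rwa [← MonoidHom.comp_apply, ← MonoidHom.comp_apply, hcomp, MonoidHom.id_apply,
    MonoidHom.id_apply] at this

end RacgAux2

namespace RacgAux2
open Monoid PushoutI CoxeterSystem RacgAux

section Complete

variable {V : Type*} {Adj : V → V → Prop}

lemma gen_inv (v : V) : (gen v : racg V Adj)⁻¹ = gen v :=
  inv_eq_of_mul_eq_one_right (gen_mul_self v)

lemma gen_comm (hcomp : ∀ u v : V, u ≠ v → AdjS Adj u v) (u v : V) :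
    (gen u : racg V Adj) * gen v = gen v * gen u := by
  by_cases h : u = v
  · subst h; rfl
  · have h2 : ((gen u : racg V Adj) * gen v)⁻¹ = gen u * gen v :=
      inv_eq_of_mul_eq_one_right (by rw [← pow_two]; exact gen_mul_gen_sq h (hcomp u v h))
    calc (gen u : racg V Adj) * gen v = ((gen u : racg V Adj) * gen v)⁻¹ := h2.symm
    _ = (gen v : racg V Adj)⁻¹ * (gen u)⁻¹ := mul_inv_rev _ _
    _ = gen v * gen u := by rw [gen_inv, gen_inv]

lemma wordProd_comm_gen (hcomp : ∀ u v : V, u ≠ v → AdjS Adj u v) (ω : List V) (i : V) :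
    (racgCS V Adj).wordProd ω * gen i = gen i * (racgCS V Adj).wordProd ω := by
  induction ω with
  | nil => simp
  | cons j ω ih =>
    rw [CoxeterSystem.wordProd_cons, mul_assoc, ih, ← mul_assoc, ← mul_assoc]
    congr 1
    exact gen_comm hcomp j i

lemma mul_self_of_complete (hcomp : ∀ u v : V, u ≠ v → AdjS Adj u v) (x : racg V Adj) :
    x * x = 1 := by
  obtain ⟨ω, rfl⟩ := (racgCS V Adj).wordProd_surjective x
  induction ω with
  | nil => simp
  | cons i ω ih =>
    rw [CoxeterSystem.wordProd_cons]
    calc (gen i : racg V Adj) * (racgCS V Adj).wordProd ω *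
          ((gen i : racg V Adj) * (racgCS V Adj).wordProd ω)
        = gen i * ((racgCS V Adj).wordProd ω * gen i) * (racgCS V Adj).wordProd ω := by
          group
      _ = gen i * (gen i * (racgCS V Adj).wordProd ω) * (racgCS V Adj).wordProd ω := by
          rw [wordProd_comm_gen hcomp]
      _ = (gen i * gen i) * ((racgCS V Adj).wordProd ω * (racgCS V Adj).wordProd ω) := by
          group
      _ = 1 := by rw [gen_mul_self, ih, one_mul]

lemma noOddTorsion_of_complete (hcomp : ∀ u v : V, u ≠ v → AdjS Adj u v) :
    NoOddTorsion (racg V Adj) := by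
  intro x n hodd hxn
  obtain ⟨m, rfl⟩ := hodd
  have h2 : x ^ 2 = 1 := by rw [pow_two]; exact mul_self_of_complete hcomp x
  calc x = (x ^ 2) ^ m * x := by rw [h2, one_pow, one_mul]
  _ = x ^ (2 * m + 1) := by rw [← pow_mul, ← pow_succ]
  _ = 1 := hxn

end Complete

section Decomp

variable {V : Type*} (Adj : V → V → Prop) (v₀ : V)

/-- everything but `v₀` -/
def A1 : Set V := {v | v ≠ v₀}
/-- the closed star of `v₀` -/
def A2 : Set V := {v | v = v₀ ∨ AdjS Adj v₀ v}
/-- the link of `v₀` -/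
def A0 : Set V := {v | AdjS Adj v₀ v}

variable {Adj v₀}

lemma hA01 (hirr : ∀ v, ¬ Adj v v) : A0 Adj v₀ ⊆ A1 v₀ := by
  intro v hv he
  rw [he] at hv
  obtain h | h := hv <;> exact hirr v₀ h

lemma hA02 : A0 Adj v₀ ⊆ A2 Adj v₀ := fun v hv => Or.inr hv

/-- the two factors -/
noncomputable def Gf : Bool → Type _
  | true => racg ↥(A1 v₀) (radj Adj (A1 v₀))
  | false => racg ↥(A2 Adj v₀) (radj Adj (A2 Adj v₀))

noncomputable instance : ∀ b, Group (Gf (Adj := Adj) (v₀ := v₀) b)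
  | true => inferInstanceAs (Group (racg _ _))
  | false => inferInstanceAs (Group (racg _ _))

/-- the connecting maps -/
noncomputable def φf (hirr : ∀ v, ¬ Adj v v) :
    ∀ b, racg ↥(A0 Adj v₀) (radj Adj (A0 Adj v₀)) →* Gf (Adj := Adj) (v₀ := v₀) b
  | true => rincS (hA01 hirr)
  | false => rincS (hA02 (Adj := Adj) (v₀ := v₀))

lemma φf_injective (hirr : ∀ v, ¬ Adj v v) :
    ∀ b, Function.Injective (φf (Adj := Adj) (v₀ := v₀) hirr b) := by
  intro b
  cases b
  · have h : φf (Adj := Adj) (v₀ := v₀) hirr false = rincS (hA02 (Adj := Adj) (v₀ := v₀)) := rfl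
    rw [h]; exact rincS_injective _
  · have h : φf (Adj := Adj) (v₀ := v₀) hirr true = rincS (hA01 hirr) := rfl
    rw [h]; exact rincS_injective _

/-- inclusion of a full sub-racg into the whole racg -/
noncomputable def rincF {A : Set V} : racg ↥A (radj Adj A) →* racg V Adj :=
  racgLift (fun a => gen a.1) (fun a => gen_mul_self _)
    (fun a b hne hadj => gen_mul_gen_sq (Subtype.coe_injective.ne_iff.mpr hne) hadj)

@[simp] lemma rincF_gen {A : Set V} (a : ↥A) :
    (rincF (Adj := Adj)) (gen a) = gen a.1 :=
  racgLift_gen _ _ _ a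

@[simp] lemma rincF_injective : True := trivial

end Decomp

section Decomp2

variable {V : Type*} {Adj : V → V → Prop} {v₀ : V} (hirr : ∀ v, ¬ Adj v v)

lemma φf_true_eq : φf (Adj := Adj) (v₀ := v₀) hirr true = rincS (hA01 hirr) := rfl
lemma φf_false_eq : φf (Adj := Adj) (v₀ := v₀) hirr false =
    rincS (hA02 (Adj := Adj) (v₀ := v₀)) := rfl

lemma bridge (w : V) (hw : w ∈ A0 Adj v₀) :
    (of (φ := φf (Adj := Adj) (v₀ := v₀) hirr) true (gen ⟨w, hA01 hirr hw⟩)) =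
      of false (gen ⟨w, hA02 hw⟩) := by
  have h1 : φf (Adj := Adj) (v₀ := v₀) hirr true (gen (⟨w, hw⟩ : ↥(A0 Adj v₀))) =
      gen ⟨w, hA01 hirr hw⟩ := by
    rw [φf_true_eq]; exact rincS_gen _ _
  have h2 : φf (Adj := Adj) (v₀ := v₀) hirr false (gen (⟨w, hw⟩ : ↥(A0 Adj v₀))) =
      gen ⟨w, hA02 hw⟩ := by
    rw [φf_false_eq]; exact rincS_gen _ _
  rw [← h1, ← h2, of_apply_eq_base, of_apply_eq_base]

open scoped Classical in
/-- the comparison map from the racg to the pushout -/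
noncomputable def Φdec : racg V Adj →* PushoutI (φf (Adj := Adj) (v₀ := v₀) hirr) :=
  racgLift
    (fun v => if h : v = v₀ then of false (gen ⟨v₀, Or.inl rfl⟩) else of true (gen ⟨v, h⟩))
    (fun v => by
      by_cases h : v = v₀
      · erw [dif_pos h, ← map_mul, gen_mul_self, map_one]
      · erw [dif_neg h, ← map_mul, gen_mul_self, map_one])
    (fun u v hne hadj => by
      by_cases hu : u = v₀ <;> by_cases hv : v = v₀
      · exact absurd (hu.trans hv.symm) hne
      · subst hu
        erw [dif_pos rfl, dif_neg hv, bridge hirr v hadj, ← map_mul, ← map_pow,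
          gen_mul_gen_sq (fun hh => hv (Subtype.mk_eq_mk.mp hh).symm) hadj, map_one]
      · subst hv
        erw [dif_neg hu, dif_pos rfl, bridge hirr u (adjS_symm _ hadj), ← map_mul, ← map_pow,
          gen_mul_gen_sq (fun hh => hu (Subtype.mk_eq_mk.mp hh)) hadj, map_one]
      · erw [dif_neg hu, dif_neg hv, ← map_mul, ← map_pow,
          gen_mul_gen_sq (fun hh => hne (Subtype.mk_eq_mk.mp hh)) hadj, map_one])

open scoped Classical in
@[simp] lemma Φdec_gen (v : V) :
    Φdec hirr (gen v) =
      if h : v = v₀ then of (φ := φf (Adj := Adj) (v₀ := v₀) hirr) false (gen ⟨v₀, Or.inl rfl⟩)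
      else of true (gen ⟨v, h⟩) :=
  racgLift_gen _ _ _ v

/-- the factor maps back to the racg -/
noncomputable def fdec : ∀ b, Gf (Adj := Adj) (v₀ := v₀) b →* racg V Adj
  | true => rincF
  | false => rincF

lemma fdec_true_eq : fdec (Adj := Adj) (v₀ := v₀) true = rincF := rfl
lemma fdec_false_eq : fdec (Adj := Adj) (v₀ := v₀) false = rincF := rfl

/-- the comparison map from the pushout to the racg -/
noncomputable def Ψdec : PushoutI (φf (Adj := Adj) (v₀ := v₀) hirr) →* racg V Adj :=
  PushoutI.lift fdec rincF (by
    intro b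
    cases b
    · refine racg_hom_ext (fun a => ?_)
      show rincF (Adj := Adj) ((rincS (hA02 (Adj := Adj) (v₀ := v₀))) (gen a)) =
        rincF (Adj := Adj) (gen a)
      rw [rincS_gen]
      exact (rincF_gen _).trans (rincF_gen _).symm
    · refine racg_hom_ext (fun a => ?_)
      show rincF (Adj := Adj) ((rincS (hA01 hirr)) (gen a)) = rincF (Adj := Adj) (gen a)
      rw [rincS_gen]
      exact (rincF_gen _).trans (rincF_gen _).symm)

lemma Ψdec_Φdec : (Ψdec hirr).comp (Φdec (Adj := Adj) (v₀ := v₀) hirr) = MonoidHom.id _ := by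
  apply racg_hom_ext
  intro v
  rw [MonoidHom.comp_apply, MonoidHom.id_apply]
  rw [Φdec_gen]
  by_cases h : v = v₀
  · subst h
    rw [dif_pos rfl]
    simp only [Ψdec, PushoutI.lift_of, fdec_false_eq]
    exact rincF_gen _
  · rw [dif_neg h]
    simp only [Ψdec, PushoutI.lift_of, fdec_true_eq]
    exact rincF_gen _

end Decomp2

section MainTorsion

universe u

theorem racg_noOddTorsion_aux :
    ∀ (k : ℕ) (V : Type u) (Adj : V → V → Prop), Finite V → (∀ v, ¬ Adj v v) →
      Nat.card V ≤ k → NoOddTorsion (racg V Adj) := by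
  intro k
  induction k with
  | zero =>
    intro V Adj hfin hirr hcard
    have hempty : IsEmpty V := by
      rcases Nat.card_eq_zero.mp (Nat.le_zero.mp hcard) with h | h
      · exact h
      · exact absurd h (not_infinite_iff_finite.mpr hfin)
    exact noOddTorsion_of_complete (fun u v h => (hempty.false u).elim)
  | succ k ih =>
    intro V Adj hfin hirr hcard
    by_cases hcomp : ∀ u v : V, u ≠ v → AdjS Adj u v
    · exact noOddTorsion_of_complete hcomp
    · push_neg at hcomp
      obtain ⟨v₀, u₀, hne, hnadj⟩ := hcomp
      have hcard1 : Nat.card ↥(A1 (V := V) v₀) ≤ k := by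
        have h1 : (A1 (V := V) v₀).ncard < (Set.univ : Set V).ncard := by
          apply Set.ncard_lt_ncard _ Set.finite_univ
          constructor
          · exact Set.subset_univ _
          · intro hsub
            exact (hsub (Set.mem_univ v₀)) rfl
        rw [Set.ncard_univ] at h1
        rw [Nat.card_coe_set_eq]
        omega
      have hcard2 : Nat.card ↥(A2 Adj v₀) ≤ k := by
        have h1 : (A2 Adj v₀).ncard < (Set.univ : Set V).ncard := by
          apply Set.ncard_lt_ncard _ Set.finite_univ
          constructor
          · exact Set.subset_univ _
          · intro hsub
            rcases hsub (Set.mem_univ u₀) with h | h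
            · exact hne h.symm
            · exact hnadj h
        rw [Set.ncard_univ] at h1
        rw [Nat.card_coe_set_eq]
        omega
      have hG : ∀ b, NoOddTorsion (Gf (Adj := Adj) (v₀ := v₀) b) := by
        intro b
        cases b
        · show NoOddTorsion (racg ↥(A2 Adj v₀) (radj Adj (A2 Adj v₀)))
          exact ih _ _ inferInstance (fun a => hirr a.1) hcard2
        · show NoOddTorsion (racg ↥(A1 (V := V) v₀) (radj Adj (A1 v₀)))
          exact ih _ _ inferInstance (fun a => hirr a.1) hcard1
      have hP := RacgAux.pushout_noOddTorsion (φf (Adj := Adj) (v₀ := v₀) hirr)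
        (φf_injective hirr) hG
      intro x n hodd hxn
      have h1 : Φdec (Adj := Adj) (v₀ := v₀) hirr x = 1 :=
        hP _ n hodd (by rw [← map_pow, hxn, map_one])
      have h2 := congrArg (Ψdec (Adj := Adj) (v₀ := v₀) hirr) h1
      rwa [← MonoidHom.comp_apply, Ψdec_Φdec, MonoidHom.id_apply, map_one] at h2

theorem racg_noOddTorsion (V : Type u) (Adj : V → V → Prop) [Finite V]
    (hirr : ∀ v, ¬ Adj v v) : NoOddTorsion (racg V Adj) :=
  racg_noOddTorsion_aux (Nat.card V) V Adj inferInstance hirr le_rfl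

end MainTorsion

end RacgAux2


namespace RacgAux3
open RacgAux RacgAux2

variable {W : Type*} [Group W]

lemma subtype_coe_ne {S : Set W} {i i' : ↥S} (h : i ≠ i') : (i : W) ≠ (i' : W) :=
  fun hh => h (Subtype.ext hh)

lemma noOddTorsion_of_rightAngled (S : Set W) (hfin : S.Finite)
    (hS : IsCoxeterGeneratingSet S) (hra : IsRightAngled S) : NoOddTorsion W := by
  obtain ⟨M, cs, hsimp⟩ := hS
  haveI : Finite ↥S := hfin.to_subtype
  set Adj : ↥S → ↥S → Prop := fun s t => s ≠ t ∧ orderOf ((s : W) * t) = 2 with hAdj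
  have hirr : ∀ v, ¬ Adj v v := fun v h => h.1 rfl
  have hinvol : ∀ i : ↥S, (i : W) * i = 1 := fun i => by
    have := cs.simple_mul_simple_self i
    rwa [hsimp] at this
  have hord : ∀ i i' : ↥S, orderOf ((i : W) * i') ∣ M i i' := fun i i' => by
    have := cs.simple_mul_simple_pow i i'
    rw [hsimp, hsimp] at this
    exact orderOf_dvd_of_pow_eq_one this
  have hlift : M.IsLiftable (fun i => (gen i : racg ↥S Adj)) := by
    intro i i'
    by_cases h : i = i'
    · subst h; rw [M.diagonal, pow_one]; exact gen_mul_self i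
    · have hdvd := hord i i'
      rcases hra i i.2 i' i'.2 (subtype_coe_ne h) with h2 | h2
      · rw [h2] at hdvd
        obtain ⟨c, hc⟩ := hdvd
        rw [hc, pow_mul, gen_mul_gen_sq h (Or.inl ⟨h, h2⟩), one_pow]
      · rw [h2] at hdvd
        rw [Nat.eq_zero_of_zero_dvd hdvd, pow_zero]
  have hψlift : ∀ (u v : ↥S), u ≠ v → AdjS Adj u v → (((u : W)) * ((v : W))) ^ 2 = 1 := by
    intro u v hne hadj
    rcases hadj with ⟨-, h2⟩ | ⟨-, h2⟩
    · rw [← h2]; exact pow_orderOf_eq_one _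
    · have h3 : ((v : W) * u) ^ 2 = 1 := by rw [← h2]; exact pow_orderOf_eq_one _
      have h4 : ((u : W) * v) ^ 2 = (u : W) * ((v : W) * u) ^ 2 * (u : W)⁻¹ := by
        rw [pow_two, pow_two]
        simp [mul_assoc]
      rw [h4, h3]
      group
  set θ : W →* racg ↥S Adj := cs.lift ⟨fun i => (gen i : racg ↥S Adj), hlift⟩ with hθ
  set ψ : racg ↥S Adj →* W := racgLift (fun i => (i : W)) hinvol hψlift with hψ
  have hid : ψ.comp θ = MonoidHom.id W := by
    apply cs.ext_simple
    intro i
    rw [MonoidHom.comp_apply, MonoidHom.id_apply, hθ, CoxeterSystem.lift_apply_simple, hψ,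
      racgLift_gen]
    exact (hsimp i).symm
  have hθinj : Function.Injective θ := fun x y hxy => by
    have := congrArg ψ hxy
    rwa [← MonoidHom.comp_apply, ← MonoidHom.comp_apply, hid, MonoidHom.id_apply,
      MonoidHom.id_apply] at this
  intro x n hodd hxn
  have h5 := racg_noOddTorsion ↥S Adj hirr (θ x) n hodd (by rw [← map_pow, hxn, map_one])
  exact hθinj (by rw [h5, map_one])

lemma even_entries (hNOT : NoOddTorsion W) (S : Set W) (M : CoxeterMatrix ↥S)
    (cs : CoxeterSystem M W) (hsimp : ∀ s : S, cs.simple s = s) :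
    ∀ i i' : ↥S, i ≠ i' → Even (M i i') := by
  intro i i' h
  rcases Nat.even_or_odd (M i i') with he | ho
  · exact he
  · exfalso
    have hpow : ((i : W) * i') ^ (M i i') = 1 := by
      rw [← hsimp i, ← hsimp i']
      exact cs.simple_mul_simple_pow i i'
    have hx1 : (i : W) * i' = 1 := hNOT _ _ ho hpow
    have hinvol : (i' : W) * i' = 1 := by
      have := cs.simple_mul_simple_self i'
      rwa [hsimp] at this
    have hinv : (i' : W)⁻¹ = (i' : W) := inv_eq_of_mul_eq_one_right hinvol
    have : (i : W) = (i' : W) := by rw [← hinv]; exact eq_inv_of_mul_eq_one_left hx1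
    exact subtype_coe_ne h this

lemma ncard_le_of_even (S S' : Set W) (hSfin : S.Finite) (hS'fin : S'.Finite)
    (M : CoxeterMatrix ↥S) (cs : CoxeterSystem M W) (hsimp : ∀ s : S, cs.simple s = s)
    (heven : ∀ i i' : ↥S, i ≠ i' → Even (M i i'))
    (hcl : Subgroup.closure S' = ⊤) : S.ncard ≤ S'.ncard := by
  classical
  letI : Fintype ↥S := hSfin.fintype
  set f : ↥S → Multiplicative (↥S → ZMod 2) :=
    fun i => Multiplicative.ofAdd (Pi.single i 1) with hf
  have haddself : ∀ v : ↥S → ZMod 2, v + v = 0 :=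
    fun v => funext fun j => CharTwo.add_self_eq_zero _
  have hlift : M.IsLiftable f := by
    intro i i'
    rw [hf]
    by_cases h : i = i'
    · subst h
      rw [M.diagonal, pow_one, ← ofAdd_add, haddself, ofAdd_zero]
    · obtain ⟨c, hc⟩ := heven i i' h
      rw [← ofAdd_add, hc, ← ofAdd_nsmul, add_nsmul, haddself, ofAdd_zero]
  set Φ := cs.lift ⟨f, hlift⟩ with hΦ
  have hΦs : ∀ i : ↥S, Φ (i : W) = f i := fun i => by
    rw [← hsimp i, hΦ]
    exact cs.lift_apply_simple _ i
  have hmem : ∀ i : ↥S, f i ∈ Subgroup.closure (Φ '' S') := by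
    intro i
    have h1 : ((i : W)) ∈ Subgroup.closure S' := hcl ▸ Subgroup.mem_top _
    have h2 : Φ (i : W) ∈ Subgroup.map Φ (Subgroup.closure S') := ⟨_, h1, rfl⟩
    rw [MonoidHom.map_closure] at h2
    rwa [hΦs] at h2
  set T : Finset (↥S → ZMod 2) :=
    hS'fin.toFinset.image (fun w => Multiplicative.toAdd (Φ w)) with hT
  set N : Submodule (ZMod 2) (↥S → ZMod 2) := Submodule.span (ZMod 2) (T : Set _) with hN
  have hTset : (T : Set (↥S → ZMod 2)) = (fun w => Multiplicative.toAdd (Φ w)) '' S' := by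
    rw [hT, Finset.coe_image, Set.Finite.coe_toFinset]
  have hmemN : ∀ i : ↥S, Pi.single i (1 : ZMod 2) ∈ N := by
    intro i
    have key : ∀ x ∈ Subgroup.closure (Φ '' S'), Multiplicative.toAdd x ∈ N := by
      intro x hx
      refine Subgroup.closure_induction ?_ ?_ ?_ ?_ hx
      · rintro y ⟨w, hw, rfl⟩
        apply Submodule.subset_span
        rw [hTset]
        exact ⟨w, hw, rfl⟩
      · simpa using N.zero_mem
      · intro a b _ _ ha hb
        simpa using N.add_mem ha hb
      · intro a _ ha
        simpa using N.neg_mem ha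
    have h3 := key _ (hmem i)
    simpa [hf] using h3
  have hNtop : N = ⊤ := by
    rw [eq_top_iff, ← (Pi.basisFun (ZMod 2) ↥S).span_eq]
    apply Submodule.span_le.mpr
    rintro v ⟨i, rfl⟩
    rw [Pi.basisFun_apply]
    exact hmemN i
  have h1 : Module.finrank (ZMod 2) (↥S → ZMod 2) ≤ T.card := by
    have h2 := finrank_span_finset_le_card (R := ZMod 2) T
    calc Module.finrank (ZMod 2) (↥S → ZMod 2)
        = Module.finrank (ZMod 2) (⊤ : Submodule (ZMod 2) (↥S → ZMod 2)) :=
          (finrank_top _ _).symm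
      _ = Module.finrank (ZMod 2) N := by rw [hNtop]
      _ ≤ T.card := h2
  have h3 : T.card ≤ S'.ncard := by
    rw [Set.ncard_eq_toFinset_card _ hS'fin]
    exact Finset.card_image_le
  have h4 : S.ncard = Module.finrank (ZMod 2) (↥S → ZMod 2) := by
    rw [Module.finrank_pi (ZMod 2), ← Nat.card_eq_fintype_card, Nat.card_coe_set_eq]
  omega

lemma closure_eq_top_of_gens (S : Set W) (M : CoxeterMatrix ↥S)
    (cs : CoxeterSystem M W) (hsimp : ∀ s : S, cs.simple s = s) :
    Subgroup.closure S = ⊤ := by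
  have h := cs.subgroup_closure_range_simple
  have h2 : Set.range cs.simple = S := by
    have h3 : cs.simple = fun i : ↥S => (i : W) := funext hsimp
    rw [h3]
    exact Subtype.range_coe
  rwa [h2] at h

end RacgAux3


/-- If `S` and `S'` are two finite sets of Coxeter generators for `W` and `(W, S)` is
right-angled, then `S` and `S'` have the same cardinality. -/
theorem ncard_eq_ncard_of_coxeterGeneratingSets
    {W : Type*} [Group W] (S S' : Set W) (hSfin : S.Finite) (hS'fin : S'.Finite)
    (hS : IsCoxeterGeneratingSet S) (hS' : IsCoxeterGeneratingSet S')
    (hra : IsRightAngled S) :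
    S.ncard = S'.ncard := by
  obtain ⟨M, cs, hsimp⟩ := hS
  obtain ⟨M', cs', hsimp'⟩ := hS'
  have hNOT : RacgAux.NoOddTorsion W :=
    RacgAux3.noOddTorsion_of_rightAngled S hSfin ⟨M, cs, hsimp⟩ hra
  have heven := RacgAux3.even_entries hNOT S M cs hsimp
  have heven' := RacgAux3.even_entries hNOT S' M' cs' hsimp'
  have hclS := RacgAux3.closure_eq_top_of_gens S M cs hsimp
  have hclS' := RacgAux3.closure_eq_top_of_gens S' M' cs' hsimp'
  exact le_antisymm
    (RacgAux3.ncard_le_of_even S S' hSfin hS'fin M cs hsimp heven hclS')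
    (RacgAux3.ncard_le_of_even S' S hS'fin hSfin M' cs' hsimp' heven' hclS)
end

section
/- Let (W,S) be a right-angled Coxeter system with S finite, let V be the union of all finite standard subgroups of (W,S), and let q : W → W/[W,W] be the abelianization map. Then the restriction of q to V is injective. -/
section Aux

variable {W : Type*} [Group W]

/-- The homomorphism `Multiplicative (ZMod 2) →* W` sending the generator to an
involution `s`. -/
noncomputable def involutionHom (s : W) (hs : s * s = 1) : Multiplicative (ZMod 2) →* W where
  toFun x := s ^ (Multiplicative.toAdd x).val
  map_one' := by simp
  map_mul' a b := by
    have h2 : s ^ 2 = 1 := by rwa [pow_two]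
    have key : ∀ k : ℕ, s ^ (k % 2) = s ^ k := fun k => by
      conv_rhs => rw [← Nat.div_add_mod k 2]
      rw [pow_add, pow_mul, h2, one_pow, one_mul]
    show s ^ (Multiplicative.toAdd (a * b)).val = _
    rw [toAdd_mul, ZMod.val_add, key, pow_add]

@[simp] lemma involutionHom_apply (s : W) (hs : s * s = 1) (x : Multiplicative (ZMod 2)) :
    involutionHom s hs x = s ^ (Multiplicative.toAdd x).val := rfl

open Classical in
/-- The retraction `(S → Z/2) →* W` associated to a commuting subset `A ⊆ S`. -/
noncomputable def retract (S : Set W) [Fintype S] (A : Set W)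
    (hinv : ∀ i : S, (i : W) * (i : W) = 1)
    (hcomm : ∀ s ∈ A, ∀ t ∈ A, Commute s t) :
    (S → Multiplicative (ZMod 2)) →* W :=
  MonoidHom.noncommPiCoprod
    (fun i => if h : (i : W) ∈ A then involutionHom (i : W) (hinv i) else 1)
    (by
      intro i j _ x y
      split_ifs with h1 h2 h2
      · exact (hcomm _ h1 _ h2).pow_pow _ _
      · simpa using Commute.one_right _
      · simpa using Commute.one_left _
      · simpa using Commute.one_left _)

open Classical in
lemma retract_apply (S : Set W) [Fintype S] (A : Set W)
    (hinv : ∀ i : S, (i : W) * (i : W) = 1)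
    (hcomm : ∀ s ∈ A, ∀ t ∈ A, Commute s t) (v : S → Multiplicative (ZMod 2)) :
    retract S A hinv hcomm v =
      Finset.univ.noncommProd
        (fun i : S => (if h : (i : W) ∈ A then involutionHom (i : W) (hinv i) else 1) (v i))
        (fun _ _ _ _ h => by
          dsimp only [Function.onFun]
          split_ifs with h1 h2 h2
          · exact (hcomm _ h1 _ h2).pow_pow _ _
          · simpa using Commute.one_right _
          · simpa using Commute.one_left _
          · simpa using Commute.one_left _) := rfl

open Classical in
lemma retract_mulSingle (S : Set W) [Fintype S] (A : Set W)
    (hinv : ∀ i : S, (i : W) * (i : W) = 1)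
    (hcomm : ∀ s ∈ A, ∀ t ∈ A, Commute s t) (i : S) (hi : (i : W) ∈ A) :
    retract S A hinv hcomm (Pi.mulSingle i (Multiplicative.ofAdd 1)) = (i : W) := by
  rw [retract]
  erw [MonoidHom.noncommPiCoprod_mulSingle]
  rw [dif_pos hi]
  show (i : W) ^ (Multiplicative.toAdd (Multiplicative.ofAdd (1 : ZMod 2))).val = (i : W)
  have : (Multiplicative.toAdd (Multiplicative.ofAdd (1 : ZMod 2))).val = 1 := rfl
  rw [this, pow_one]

open Classical in
lemma retract_congr (S : Set W) [Fintype S] (A A' : Set W)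
    (hinv : ∀ i : S, (i : W) * (i : W) = 1)
    (hcommA : ∀ s ∈ A, ∀ t ∈ A, Commute s t)
    (hcommA' : ∀ s ∈ A', ∀ t ∈ A', Commute s t)
    (v : S → Multiplicative (ZMod 2))
    (hv : ∀ i : S, v i ≠ 1 → (i : W) ∈ A ∧ (i : W) ∈ A') :
    retract S A hinv hcommA v = retract S A' hinv hcommA' v := by
  rw [retract_apply, retract_apply]
  refine Finset.noncommProd_congr rfl (fun i _ => ?_) _
  by_cases h1 : v i = 1
  · rw [h1, map_one, map_one]
  · obtain ⟨hA, hA'⟩ := hv i h1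
    rw [dif_pos hA, dif_pos hA']

end Aux

/-- The abelianization map `q : W → W/[W,W]` is injective on the union `V` of all finite
standard subgroups of a right-angled Coxeter system `(W, S)`. -/
theorem abelianization_injOn_union_finite_standard
    {W : Type*} [Group W] (S : Set W) (hSfin : S.Finite)
    (hS : IsCoxeterGeneratingSet S) (hra : IsRightAngled S) :
    Set.InjOn (Abelianization.of : W →* Abelianization W)
      (⋃ A ∈ {A : Set W | A ⊆ S ∧ (Subgroup.closure A : Set W).Finite},
        (Subgroup.closure A : Set W)) := by
  classical
  obtain ⟨M, cs, hsimple⟩ := hS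
  haveI : Fintype S := hSfin.fintype
  -- every generator is an involution
  have hinv : ∀ i : S, (i : W) * (i : W) = 1 := fun i => by
    have := cs.simple_mul_simple_self i
    rwa [hsimple] at this
  -- the target group `(Z/2)^S`
  have hsq : ∀ x : S → Multiplicative (ZMod 2), x * x = 1 := fun x => by
    funext i
    show x i * x i = 1
    have : ∀ y : Multiplicative (ZMod 2), y * y = 1 := by decide
    exact this _
  -- the lift `f : W →* (Z/2)^S`
  set g : S → (S → Multiplicative (ZMod 2)) :=
    fun i j => if j = i then Multiplicative.ofAdd 1 else 1 with hg
  have hglift : M.IsLiftable g := by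
    intro i i'
    by_cases hii : i = i'
    · subst hii
      rw [M.diagonal, pow_one]
      exact hsq _
    · have hrel := cs.simple_mul_simple_pow i i'
      rw [hsimple, hsimple] at hrel
      have hne : (i : W) ≠ (i' : W) := fun h => hii (Subtype.coe_injective h)
      rcases hra i i.2 i' i'.2 hne with h2 | h0
      · obtain ⟨k, hk⟩ := orderOf_dvd_of_pow_eq_one hrel
        rw [h2] at hk
        rw [hk, pow_mul, pow_two, hsq, one_pow]
      · have hM : M i i' = 0 := by
          by_contra hM0
          have : IsOfFinOrder ((i : W) * (i' : W)) :=
            isOfFinOrder_iff_pow_eq_one.mpr ⟨M i i', Nat.pos_of_ne_zero hM0, hrel⟩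
          rw [orderOf_eq_zero_iff] at h0
          exact h0 this
        rw [hM, pow_zero]
  set f : W →* (S → Multiplicative (ZMod 2)) := cs.lift ⟨g, hglift⟩ with hf
  have hfs : ∀ i : S, f (i : W) = g i := fun i => by
    conv_lhs => rw [← hsimple i]
    exact cs.lift_apply_simple hglift i
  -- commutation within a finite standard subgroup
  have hAcomm : ∀ A : Set W, A ⊆ S → (Subgroup.closure A : Set W).Finite →
      ∀ s ∈ A, ∀ t ∈ A, Commute s t := by
    intro A hAS hAfin s hs t ht
    by_cases hst : s = t
    · subst hst; exact Commute.refl s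
    · rcases hra s (hAS hs) t (hAS ht) hst with h2 | h0
      · have h2' : (s * t) * (s * t) = 1 := by
          have := pow_orderOf_eq_one (s * t)
          rwa [h2, pow_two] at this
        have hss := hinv ⟨s, hAS hs⟩
        have htt := hinv ⟨t, hAS ht⟩
        simp only at hss htt
        rw [commute_iff_eq]
        have h1 : (s * t)⁻¹ = s * t := inv_eq_of_mul_eq_one_right h2'
        calc s * t = (s * t)⁻¹ := h1.symm
          _ = t⁻¹ * s⁻¹ := mul_inv_rev s t
          _ = t * s := by rw [inv_eq_of_mul_eq_one_right htt, inv_eq_of_mul_eq_one_right hss]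
      · exfalso
        haveI : Finite (Subgroup.closure A) := hAfin.to_subtype
        have hmem : s * t ∈ Subgroup.closure A :=
          mul_mem (Subgroup.subset_closure hs) (Subgroup.subset_closure ht)
        have h1 := orderOf_injective (Subgroup.closure A).subtype
          (Subgroup.subtype_injective _) ⟨s * t, hmem⟩
        simp only [Subgroup.coe_subtype] at h1
        have hpos := orderOf_pos (⟨s * t, hmem⟩ : Subgroup.closure A)
        rw [← h1] at hpos
        have : orderOf (s * t) ≠ 0 := by simpa using hpos.ne'
        exact this h0
  -- support of `f w` for `w` in a standard subgroup
  have hsupp : ∀ A : Set W, A ⊆ S → ∀ w ∈ Subgroup.closure A,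
      ∀ i : S, (i : W) ∉ A → f w i = 1 := by
    intro A hAS w hw i hi
    have hle : Subgroup.closure A ≤
        ((Pi.evalMonoidHom (fun _ : S => Multiplicative (ZMod 2)) i).comp f).ker := by
      rw [Subgroup.closure_le]
      intro t ht
      have : f t i = 1 := by
        rw [hfs ⟨t, hAS ht⟩, hg]
        have : i ≠ (⟨t, hAS ht⟩ : S) := fun h => hi (by rw [h]; exact ht)
        simp [this]
      simpa [MonoidHom.mem_ker] using this
    exact hle hw
  -- retraction property
  have hretract : ∀ (A : Set W) (hAS : A ⊆ S) (hAfin : (Subgroup.closure A : Set W).Finite),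
      ∀ w ∈ Subgroup.closure A,
        retract S A hinv (hAcomm A hAS hAfin) (f w) = w := by
    intro A hAS hAfin w hw
    induction hw using Subgroup.closure_induction with
    | mem t ht =>
        have hft : f t = Pi.mulSingle (⟨t, hAS ht⟩ : S) (Multiplicative.ofAdd (1 : ZMod 2)) := by
          rw [hfs ⟨t, hAS ht⟩, hg]
          funext j
          rw [Pi.mulSingle_apply]
        rw [hft, retract_mulSingle S A hinv _ _ ht]
    | one => rw [map_one, map_one]
    | mul x y hx hy ihx ihy => rw [map_mul, map_mul, ihx, ihy]
    | inv x hx ihx => rw [map_inv, map_inv, ihx]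
  -- main argument
  intro x hx y hy hxy
  rw [Set.mem_iUnion₂] at hx hy
  obtain ⟨A, ⟨hAS, hAfin⟩, hxA⟩ := hx
  obtain ⟨A', ⟨hA'S, hA'fin⟩, hyA'⟩ := hy
  have hxA : x ∈ Subgroup.closure A := hxA
  have hyA' : y ∈ Subgroup.closure A' := hyA'
  -- `f x = f y` since `f` factors through the abelianization
  have hfxy : f x = f y := by
    have h1 : ∀ w : W, Abelianization.lift f (Abelianization.of w) = f w := fun w =>
      Abelianization.lift_apply_of f w
    rw [← h1, ← h1, hxy]
  calc x = retract S A hinv (hAcomm A hAS hAfin) (f x) := (hretract A hAS hAfin x hxA).symm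
    _ = retract S A' hinv (hAcomm A' hA'S hA'fin) (f x) := by
        refine retract_congr S A A' hinv _ _ _ (fun i hvi => ?_)
        constructor
        · by_contra h
          exact hvi (hsupp A hAS x hxA i h)
        · by_contra h
          rw [hfxy] at hvi
          exact hvi (hsupp A' hA'S y hyA' i h)
    _ = retract S A' hinv (hAcomm A' hA'S hA'fin) (f y) := by rw [hfxy]
    _ = y := hretract A' hA'S hA'fin y hyA'
end
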